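/- arXiv:1709.02773 — 12 statements merged into one kernel-verified Lean document; each statement's English description precedes it below -/
import Mathlib

section
/- Let K ⊆ ℝ be a subfield. Let A₁, …, Aₙ be trapezoids in ℝ² with horizontal bases such that for every Aᵢ the ratio of each of its two bases to its height lies in K. If a trapezoid B with horizontal bases is tiled by homothetic copies of A₁, …, Aₙ, then the ratio of each base of B to the height of B also lies in K. -/
set_option maxHeartbeats 1000000
set_option synthInstance.maxHeartbeats 400000


noncomputable section

/-- The homothetic copy of a plane figure `S` under `x ↦ r • x + v`. -/
def homothety (r : ℝ) (v : ℝ × ℝ) (S : Set (ℝ × ℝ)) : Set (ℝ × ℝ) :=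
  (fun x : ℝ × ℝ => (r * x.1 + v.1, r * x.2 + v.2)) '' S

/-- `S` is tiled by homothetic copies of figures from the family `F`:
`S` is a union of finitely many homothetic copies of members of `F`
whose interiors are pairwise disjoint. -/
def IsTiling (S : Set (ℝ × ℝ)) (F : Set (Set (ℝ × ℝ))) : Prop :=
  ∃ (n : ℕ) (r : Fin n → ℝ) (v : Fin n → ℝ × ℝ) (t : Fin n → Set (ℝ × ℝ)),
    (∀ i, t i ∈ F) ∧ (∀ i, 0 < r i) ∧
    S = ⋃ i, homothety (r i) (v i) (t i) ∧
    ∀ i j, i ≠ j →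
      interior (homothety (r i) (v i) (t i)) ∩ interior (homothety (r j) (v j) (t j)) = ∅

/-- The trapezoid with horizontal bases given by vertices
`(p, y₀), (q, y₀), (r, y₁), (s, y₁)`. -/
def trapezoid (p q r s y₀ y₁ : ℝ) : Set (ℝ × ℝ) :=
  convexHull ℝ ({(p, y₀), (q, y₀), (r, y₁), (s, y₁)} : Set (ℝ × ℝ))


section KenyonAux
open Set MeasureTheory

open Set

def trapRegion (l₁ r₁ l₂ r₂ c d : ℝ) : Set (ℝ × ℝ) :=
  {z | c ≤ z.2 ∧ z.2 ≤ d ∧ l₁*(d - z.2) + l₂*(z.2 - c) ≤ z.1*(d-c) ∧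
      z.1*(d-c) ≤ r₁*(d - z.2) + r₂*(z.2 - c)}

lemma convex_trapRegion (l₁ r₁ l₂ r₂ c d : ℝ) : Convex ℝ (trapRegion l₁ r₁ l₂ r₂ c d) := by
  have h1 : Convex ℝ {z : ℝ×ℝ | c ≤ z.2} := convex_halfSpace_ge ⟨fun a b => rfl, fun a b => rfl⟩ c
  have h2 : Convex ℝ {z : ℝ×ℝ | z.2 ≤ d} := convex_halfSpace_le ⟨fun a b => rfl, fun a b => rfl⟩ d
  have l3 : IsLinearMap ℝ (fun z : ℝ×ℝ => z.1*(d-c) + (l₁ - l₂)*z.2) := by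
    constructor <;> intros <;> simp [Prod.fst_add, Prod.snd_add] <;> ring
  have l4 : IsLinearMap ℝ (fun z : ℝ×ℝ => z.1*(d-c) + (r₁ - r₂)*z.2) := by
    constructor <;> intros <;> simp <;> ring
  have h3 : Convex ℝ {z : ℝ×ℝ | l₁*d - l₂*c ≤ z.1*(d-c) + (l₁ - l₂)*z.2} := convex_halfSpace_ge l3 _
  have h4 : Convex ℝ {z : ℝ×ℝ | z.1*(d-c) + (r₁ - r₂)*z.2 ≤ r₁*d - r₂*c} := convex_halfSpace_le l4 _
  have : trapRegion l₁ r₁ l₂ r₂ c d =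
      {z : ℝ×ℝ | c ≤ z.2} ∩ {z : ℝ×ℝ | z.2 ≤ d} ∩
      ({z : ℝ×ℝ | l₁*d - l₂*c ≤ z.1*(d-c) + (l₁ - l₂)*z.2} ∩
       {z : ℝ×ℝ | z.1*(d-c) + (r₁ - r₂)*z.2 ≤ r₁*d - r₂*c}) := by
    ext z; simp only [trapRegion, mem_setOf_eq, mem_inter_iff]
    constructor
    · rintro ⟨a,b,e,f⟩; exact ⟨⟨a,b⟩, by linarith, by linarith⟩
    · rintro ⟨⟨a,b⟩,e,f⟩; exact ⟨a,b, by linarith, by linarith⟩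
  rw [this]
  exact ((h1.inter h2).inter (h3.inter h4))


open Set

lemma region_subset_trap {l₁ r₁ l₂ r₂ c d : ℝ} (hcd : c < d) (h1 : l₁ ≤ r₁) (h2 : l₂ ≤ r₂) :
    trapRegion l₁ r₁ l₂ r₂ c d ⊆ trapezoid l₁ r₁ l₂ r₂ c d := by
  rintro ⟨x, y⟩ ⟨hc, hd, hl, hr⟩
  simp only at hc hd hl hr
  set h := d - c with hh
  have hhpos : 0 < h := by simp [hh]; linarith
  set t := (y - c)/h with ht
  have ht0 : 0 ≤ t := div_nonneg (by linarith) hhpos.le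
  have ht1 : t ≤ 1 := by rw [div_le_one hhpos]; linarith
  set a := (l₁*(d - y) + l₂*(y - c))/h with ha
  set b := (r₁*(d - y) + r₂*(y - c))/h with hb
  have hax : a ≤ x := by rw [div_le_iff₀ hhpos]; linarith
  have hxb : x ≤ b := by rw [le_div_iff₀ hhpos]; linarith
  have hL : ((a, y) : ℝ×ℝ) = (1-t) • ((l₁, c) : ℝ×ℝ) + t • ((l₂, d) : ℝ×ℝ) := by
    have : (1-t)*l₁ + t*l₂ = a := by
      rw [ha, ht]; field_simp; ring
    have h2' : (1-t)*c + t*d = y := by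
      rw [ht]; field_simp; ring
    simp [Prod.ext_iff, Prod.smul_def, smul_eq_mul]
    constructor <;> linarith
  have hR : ((b, y) : ℝ×ℝ) = (1-t) • ((r₁, c) : ℝ×ℝ) + t • ((r₂, d) : ℝ×ℝ) := by
    have : (1-t)*r₁ + t*r₂ = b := by rw [hb, ht]; field_simp; ring
    have h2' : (1-t)*c + t*d = y := by rw [ht]; field_simp; ring
    simp [Prod.ext_iff, Prod.smul_def, smul_eq_mul]
    constructor <;> linarith
  have corners : ∀ w ∈ ({(l₁, c), (r₁, c), (l₂, d), (r₂, d)} : Set (ℝ×ℝ)),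
      w ∈ trapezoid l₁ r₁ l₂ r₂ c d := fun w hw => subset_convexHull ℝ _ hw
  have hconv : Convex ℝ (trapezoid l₁ r₁ l₂ r₂ c d) := convex_convexHull ℝ _
  have hLmem : ((a, y) : ℝ×ℝ) ∈ trapezoid l₁ r₁ l₂ r₂ c d := by
    rw [hL]
    exact hconv (corners _ (by simp)) (corners _ (by simp)) (by linarith) ht0 (by ring)
  have hRmem : ((b, y) : ℝ×ℝ) ∈ trapezoid l₁ r₁ l₂ r₂ c d := by
    rw [hR]
    exact hconv (corners _ (by simp)) (corners _ (by simp)) (by linarith) ht0 (by ring)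
  -- now x between a and b
  rcases eq_or_lt_of_le hax with heq | hlt
  · rw [← heq]; exact hLmem
  · set u := (x - a)/(b - a) with hu
    have hba : 0 < b - a := by linarith
    have hu0 : 0 ≤ u := div_nonneg (by linarith) hba.le
    have hu1 : u ≤ 1 := by rw [div_le_one hba]; linarith
    have : ((x, y) : ℝ×ℝ) = (1-u) • ((a, y) : ℝ×ℝ) + u • ((b, y) : ℝ×ℝ) := by
      have : (1-u)*a + u*b = x := by rw [hu]; field_simp; ring
      simp [Prod.ext_iff, smul_eq_mul]
      constructor <;> linarith
    rw [this]
    exact hconv hLmem hRmem (by linarith) hu0 (by ring)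

lemma trap_subset_region {l₁ r₁ l₂ r₂ c d : ℝ} (hcd : c < d) (h1 : l₁ ≤ r₁) (h2 : l₂ ≤ r₂) :
    trapezoid l₁ r₁ l₂ r₂ c d ⊆ trapRegion l₁ r₁ l₂ r₂ c d := by
  apply convexHull_min _ (convex_trapRegion _ _ _ _ _ _)
  rintro z hz
  simp only [mem_insert_iff, mem_singleton_iff] at hz
  rcases hz with rfl|rfl|rfl|rfl <;>
    simp only [trapRegion, mem_setOf_eq] <;>
    refine ⟨by linarith, by linarith, by nlinarith, by nlinarith⟩

lemma trapezoid_eq_region {l₁ r₁ l₂ r₂ c d : ℝ} (hcd : c < d) (h1 : l₁ ≤ r₁) (h2 : l₂ ≤ r₂) :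
    trapezoid l₁ r₁ l₂ r₂ c d = trapRegion l₁ r₁ l₂ r₂ c d :=
  le_antisymm (trap_subset_region hcd h1 h2) (region_subset_trap hcd h1 h2)


open Set

lemma trapezoid_comm (p q r s y₀ y₁ : ℝ) :
    trapezoid p q r s y₀ y₁ = trapezoid r s p q y₁ y₀ := by
  unfold trapezoid
  congr 1
  ext z
  simp only [mem_insert_iff, mem_singleton_iff]
  tauto

lemma homothety_trapezoid (ρ : ℝ) (v : ℝ × ℝ) (p q r s y₀ y₁ : ℝ) :
    homothety ρ v (trapezoid p q r s y₀ y₁) =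
      trapezoid (ρ*p+v.1) (ρ*q+v.1) (ρ*r+v.1) (ρ*s+v.1) (ρ*y₀+v.2) (ρ*y₁+v.2) := by
  set f : (ℝ×ℝ) →ᵃ[ℝ] (ℝ×ℝ) :=
    ⟨fun x => ρ • x + v, ρ • LinearMap.id, by intro p w; simp [smul_add]; abel⟩ with hf
  have hfx : ∀ x : ℝ×ℝ, f x = (ρ * x.1 + v.1, ρ * x.2 + v.2) := by
    intro x; simp [hf, Prod.ext_iff, Prod.smul_def, smul_eq_mul]
  have : homothety ρ v (trapezoid p q r s y₀ y₁) = f '' (trapezoid p q r s y₀ y₁) := by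
    unfold homothety
    apply congrArg (· '' trapezoid p q r s y₀ y₁)
    funext x
    rw [hfx]
  rw [this]
  unfold trapezoid
  rw [AffineMap.image_convexHull]
  congr 1
  rw [image_insert_eq, image_insert_eq, image_insert_eq, image_singleton]
  simp only [hfx]


open Set

lemma trapRegion_slice {l₁ r₁ l₂ r₂ c d : ℝ} (hcd : c < d) (y : ℝ) (hy₁ : c ≤ y) (hy₂ : y ≤ d) :
    {x : ℝ | (x, y) ∈ trapRegion l₁ r₁ l₂ r₂ c d} =
      Icc ((l₁*(d - y) + l₂*(y - c))/(d-c)) ((r₁*(d - y) + r₂*(y - c))/(d-c)) := by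
  have h : (0:ℝ) < d - c := by linarith
  ext x
  simp only [trapRegion, mem_setOf_eq, mem_Icc]
  constructor
  · rintro ⟨-, -, h1, h2⟩
    exact ⟨by rw [div_le_iff₀ h]; linarith, by rw [le_div_iff₀ h]; linarith⟩
  · rintro ⟨h1, h2⟩
    rw [div_le_iff₀ h] at h1
    rw [le_div_iff₀ h] at h2
    exact ⟨hy₁, hy₂, by linarith, by linarith⟩

lemma trapRegion_slice_empty {l₁ r₁ l₂ r₂ c d : ℝ} (y : ℝ) (hy : y < c ∨ d < y) :
    {x : ℝ | (x, y) ∈ trapRegion l₁ r₁ l₂ r₂ c d} = ∅ := by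
  ext x
  simp only [trapRegion, mem_setOf_eq, mem_empty_iff_false, iff_false, not_and]
  intro h1 h2
  rcases hy with h|h <;> [linarith; (exact absurd h2 (by linarith))]

lemma isClosed_trapRegion (l₁ r₁ l₂ r₂ c d : ℝ) : IsClosed (trapRegion l₁ r₁ l₂ r₂ c d) := by
  unfold trapRegion
  apply IsClosed.inter (isClosed_le continuous_const continuous_snd)
  apply IsClosed.inter (isClosed_le continuous_snd continuous_const)
  have c1 : Continuous fun z : ℝ×ℝ => l₁*(d - z.2) + l₂*(z.2 - c) := by continuity
  have c2 : Continuous fun z : ℝ×ℝ => z.1*(d-c) := by continuity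
  have c3 : Continuous fun z : ℝ×ℝ => r₁*(d - z.2) + r₂*(z.2 - c) := by continuity
  exact IsClosed.inter (isClosed_le c1 c2) (isClosed_le c2 c3)

/-- interior is nonempty for a nondegenerate trapezoid -/
lemma trapRegion_interior_nonempty {l₁ r₁ l₂ r₂ c d : ℝ} (hcd : c < d)
    (h1 : l₁ < r₁) (h2 : l₂ < r₂) :
    (interior (trapRegion l₁ r₁ l₂ r₂ c d)).Nonempty := by
  set U : Set (ℝ×ℝ) := {z | c < z.2 ∧ z.2 < d ∧ l₁*(d - z.2) + l₂*(z.2 - c) < z.1*(d-c) ∧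
      z.1*(d-c) < r₁*(d - z.2) + r₂*(z.2 - c)} with hU
  have hUopen : IsOpen U := by
    rw [hU]
    apply IsOpen.inter (isOpen_lt continuous_const continuous_snd)
    apply IsOpen.inter (isOpen_lt continuous_snd continuous_const)
    have c1 : Continuous fun z : ℝ×ℝ => l₁*(d - z.2) + l₂*(z.2 - c) := by continuity
    have c2 : Continuous fun z : ℝ×ℝ => z.1*(d-c) := by continuity
    have c3 : Continuous fun z : ℝ×ℝ => r₁*(d - z.2) + r₂*(z.2 - c) := by continuity
    exact IsOpen.inter (isOpen_lt c1 c2) (isOpen_lt c2 c3)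
  have hsub : U ⊆ trapRegion l₁ r₁ l₂ r₂ c d := by
    rintro z ⟨a,b,e,f⟩; exact ⟨a.le, b.le, e.le, f.le⟩
  set y : ℝ := (c+d)/2
  set x : ℝ := ((l₁+r₁)*(d - y) + (l₂+r₂)*(y - c))/(2*(d-c))
  have hy1 : c < y := by simp [y]; linarith
  have hy2 : y < d := by simp [y]; linarith
  have hx : (x, y) ∈ U := by
    have h : (0:ℝ) < d - c := by linarith
    have hne : d - c ≠ 0 := h.ne'
    have hxval : x*(d-c) = ((l₁+r₁)*(d - y) + (l₂+r₂)*(y - c))/2 := by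
      simp only [x]; field_simp
    refine ⟨hy1, hy2, ?_, ?_⟩ <;> simp only [] <;> rw [hxval] <;>
      nlinarith [sub_pos.2 hy1, sub_pos.2 hy2]
  exact ⟨(x,y), interior_maximal hsub hUopen hx⟩


open Set

/-- separation of two closed convex bodies with disjoint interiors -/
lemma sep_convex {P Q : Set (ℝ×ℝ)} (hP : Convex ℝ P) (hQ : Convex ℝ Q)
    (hPc : IsClosed P) (hQc : IsClosed Q)
    (hPi : (interior P).Nonempty) (hQi : (interior Q).Nonempty)
    (hdisj : interior P ∩ interior Q = ∅) :
    ∃ (f : (ℝ×ℝ) →L[ℝ] ℝ) (u : ℝ), f ≠ 0 ∧ (∀ z ∈ P, f z ≤ u) ∧ (∀ z ∈ Q, u ≤ f z) := by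
  obtain ⟨f, u, h1, h2⟩ := geometric_hahn_banach_open_open (hP.interior) isOpen_interior
    (hQ.interior) isOpen_interior (disjoint_iff_inter_eq_empty.2 hdisj)
  obtain ⟨zp, hzp⟩ := hPi
  obtain ⟨zq, hzq⟩ := hQi
  have hfne : f ≠ 0 := by
    intro h0
    have := h1 zp hzp
    have := h2 zq hzq
    rw [h0] at *
    simp at *
    linarith
  refine ⟨f, u, hfne, ?_, ?_⟩
  · -- f ≤ u on P via limit along segment to interior point
    intro z hz
    have key : ∀ t : ℝ, t ∈ Ioo (0:ℝ) 1 → f ((1-t) • z + t • zp) < u := by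
      intro t ht
      have : (1-t) • z + t • zp ∈ interior P :=
        hP.combo_closure_interior_mem_interior (subset_closure hz) hzp
          (by linarith [ht.2]) ht.1 (by ring)
      exact h1 _ this
    have cont : Continuous fun t : ℝ => f ((1-t) • z + t • zp) := by continuity
    have lim : Filter.Tendsto (fun t : ℝ => f ((1-t) • z + t • zp))
        (nhdsWithin 0 (Ioo (0:ℝ) 1)) (nhds (f z)) := by
      have := (cont.tendsto 0).mono_left (nhdsWithin_le_nhds (s := Ioo (0:ℝ) 1))
      simpa using this
    have hne : (nhdsWithin (0:ℝ) (Ioo (0:ℝ) 1)).NeBot := by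
      apply IsGLB.nhdsWithin_neBot (isGLB_Ioo one_pos)
      exact nonempty_Ioo.2 one_pos
    exact le_of_tendsto lim (Filter.eventually_inf_principal.2 (Filter.Eventually.of_forall
      (fun t ht => (key t ht).le)))
  · intro z hz
    have key : ∀ t : ℝ, t ∈ Ioo (0:ℝ) 1 → u < f ((1-t) • z + t • zq) := by
      intro t ht
      have : (1-t) • z + t • zq ∈ interior Q :=
        hQ.combo_closure_interior_mem_interior (subset_closure hz) hzq
          (by linarith [ht.2]) ht.1 (by ring)
      exact h2 _ this
    have cont : Continuous fun t : ℝ => f ((1-t) • z + t • zq) := by continuity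
    have lim : Filter.Tendsto (fun t : ℝ => f ((1-t) • z + t • zq))
        (nhdsWithin 0 (Ioo (0:ℝ) 1)) (nhds (f z)) := by
      have := (cont.tendsto 0).mono_left (nhdsWithin_le_nhds (s := Ioo (0:ℝ) 1))
      simpa using this
    have hne : (nhdsWithin (0:ℝ) (Ioo (0:ℝ) 1)).NeBot := by
      apply IsGLB.nhdsWithin_neBot (isGLB_Ioo one_pos)
      exact nonempty_Ioo.2 one_pos
    exact ge_of_tendsto lim (Filter.eventually_inf_principal.2 (Filter.Eventually.of_forall
      (fun t ht => (key t ht).le)))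


open Set MeasureTheory

def pieceW (l₁ r₁ l₂ r₂ c d y : ℝ) : ℝ :=
  if c ≤ y ∧ y ≤ d then ((r₁-l₁)*(d - y) + (r₂-l₂)*(y - c))/(d-c) else 0

lemma pieceW_nonneg {l₁ r₁ l₂ r₂ c d : ℝ} (hcd : c < d) (h1 : l₁ ≤ r₁) (h2 : l₂ ≤ r₂) (y : ℝ) :
    0 ≤ pieceW l₁ r₁ l₂ r₂ c d y := by
  unfold pieceW
  split
  · next h => exact div_nonneg (by nlinarith [h.1, h.2]) (by linarith)
  · exact le_refl 0
    
lemma volume_slice {l₁ r₁ l₂ r₂ c d : ℝ} (hcd : c < d) (h1 : l₁ ≤ r₁) (h2 : l₂ ≤ r₂) (y : ℝ) :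
    volume {x : ℝ | (x, y) ∈ trapRegion l₁ r₁ l₂ r₂ c d} =
      ENNReal.ofReal (pieceW l₁ r₁ l₂ r₂ c d y) := by
  unfold pieceW
  split
  · next h =>
    rw [trapRegion_slice hcd y h.1 h.2, Real.volume_Icc]
    congr 1
    rw [div_sub_div_same]
    ring_nf
  · next h =>
    rw [trapRegion_slice_empty]
    · simp
    · rcases not_and_or.1 h with h'|h' <;> [left; right] <;> linarith [not_le.1 h']

lemma widths_add (m : ℕ) (l₁ r₁ l₂ r₂ c d : Fin m → ℝ)
    (hcd : ∀ j, c j < d j) (h1 : ∀ j, l₁ j < r₁ j) (h2 : ∀ j, l₂ j < r₂ j)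
    (L₁ R₁ L₂ R₂ C D : ℝ) (hCD : C < D) (hL1 : L₁ ≤ R₁) (hL2 : L₂ ≤ R₂)
    (hunion : trapRegion L₁ R₁ L₂ R₂ C D
      = ⋃ j, trapRegion (l₁ j) (r₁ j) (l₂ j) (r₂ j) (c j) (d j))
    (hdisj : ∀ i j : Fin m, i ≠ j →
      interior (trapRegion (l₁ i) (r₁ i) (l₂ i) (r₂ i) (c i) (d i)) ∩
      interior (trapRegion (l₁ j) (r₁ j) (l₂ j) (r₂ j) (c j) (d j)) = ∅) :
    ∃ F : Set ℝ, F.Finite ∧ ∀ y, y ∉ F → C ≤ y → y ≤ D →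
      pieceW L₁ R₁ L₂ R₂ C D y = ∑ j, pieceW (l₁ j) (r₁ j) (l₂ j) (r₂ j) (c j) (d j) y := by
  set P : Fin m → Set (ℝ×ℝ) := fun j => trapRegion (l₁ j) (r₁ j) (l₂ j) (r₂ j) (c j) (d j)
    with hP
  have hdecomp : ∀ (g : (ℝ×ℝ) →L[ℝ] ℝ) (x yy : ℝ),
      g (x, yy) = g (1,0) * x + g (0,1) * yy := by
    intro g x yy
    rw [show ((x,yy):ℝ×ℝ) = x • ((1,0):ℝ×ℝ) + yy • ((0,1):ℝ×ℝ) by simp [Prod.ext_iff]]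
    rw [map_add, g.map_smul, g.map_smul]
    simp [smul_eq_mul]; ring
  have hsep : ∀ i j : Fin m, ∃ (f : (ℝ×ℝ) →L[ℝ] ℝ) (u : ℝ), i ≠ j →
      (f ≠ 0 ∧ (∀ z ∈ P i, f z ≤ u) ∧ (∀ z ∈ P j, u ≤ f z)) := by
    intro i j
    by_cases hij : i = j
    · exact ⟨0, 0, fun h => absurd hij h⟩
    · obtain ⟨f, u, h⟩ := sep_convex (convex_trapRegion _ _ _ _ _ _) (convex_trapRegion _ _ _ _ _ _)
        (isClosed_trapRegion _ _ _ _ _ _) (isClosed_trapRegion _ _ _ _ _ _)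
        (trapRegion_interior_nonempty (hcd i) (h1 i) (h2 i))
        (trapRegion_interior_nonempty (hcd j) (h1 j) (h2 j)) (hdisj i j hij)
      exact ⟨f, u, fun _ => h⟩
  choose f u hf using hsep
  refine ⟨⋃ i, ⋃ j, (if (f i j) ((1:ℝ),(0:ℝ)) = 0 then {(u i j) / (f i j) ((0:ℝ),(1:ℝ))} else ∅), ?_, ?_⟩
  · apply Set.finite_iUnion
    intro i
    apply Set.finite_iUnion
    intro j
    split <;> simp
  · intro y hy hyC hyD
    have hygood : ∀ i j : Fin m,
        y ∉ (if (f i j) ((1:ℝ),(0:ℝ)) = 0 then ({(u i j) / (f i j) ((0:ℝ),(1:ℝ))} : Set ℝ) else ∅) := by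
      intro i j hmem
      exact hy (mem_iUnion.2 ⟨i, mem_iUnion.2 ⟨j, hmem⟩⟩)
    set S : Fin m → Set ℝ := fun j => {x | (x,y) ∈ P j} with hS
    have hnull : ∀ i j : Fin m, i ≠ j → volume (S i ∩ S j) = 0 := by
      intro i j hij
      obtain ⟨hfne, hle, hge⟩ := hf i j hij
      have hsub : S i ∩ S j ⊆ {x | (f i j) (x, y) = u i j} := by
        rintro x ⟨hxi, hxj⟩
        exact le_antisymm (hle _ hxi) (hge _ hxj)
      apply measure_mono_null hsub
      by_cases haz : (f i j) ((1:ℝ),(0:ℝ)) = 0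
      · have hbz : (f i j) ((0:ℝ),(1:ℝ)) ≠ 0 := by
          intro hbz
          apply hfne
          apply ContinuousLinearMap.ext
          intro z
          have hz := hdecomp (f i j) z.1 z.2
          rw [Prod.mk.eta] at hz
          rw [hz, haz, hbz]
          simp
        have hyne : (f i j) ((0:ℝ),(1:ℝ)) * y ≠ u i j := by
          intro heq
          apply hygood i j
          rw [if_pos haz, mem_singleton_iff, eq_div_iff hbz, mul_comm]
          exact heq
        have hempty : {x : ℝ | (f i j) (x, y) = u i j} = ∅ := by
          ext x
          simp only [mem_setOf_eq, mem_empty_iff_false, iff_false]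
          rw [hdecomp, haz]
          intro h
          exact hyne (by linarith)
        rw [hempty]; simp
      · have hsing : {x : ℝ | (f i j) (x, y) = u i j}
            = {(u i j - (f i j) ((0:ℝ),(1:ℝ)) * y)/((f i j) ((1:ℝ),(0:ℝ)))} := by
          ext x
          rw [mem_setOf_eq, hdecomp, mem_singleton_iff, eq_div_iff haz]
          constructor <;> intro h <;> linarith
        rw [hsing]
        exact Real.volume_singleton
    have hSm : ∀ j, NullMeasurableSet (S j) volume := by
      intro j
      have : S j = (fun x : ℝ => (x, y)) ⁻¹' (P j) := rfl
      rw [this]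
      exact (((isClosed_trapRegion _ _ _ _ _ _).preimage
        (continuous_id.prodMk continuous_const)).measurableSet).nullMeasurableSet
    have hvol : volume (⋃ j, S j) = ∑' j, volume (S j) :=
      measure_iUnion₀ (fun i j hij => hnull i j hij) hSm
    have hUS : (⋃ j, S j) = {x : ℝ | (x, y) ∈ trapRegion L₁ R₁ L₂ R₂ C D} := by
      ext x
      rw [mem_iUnion, hunion, mem_setOf_eq, mem_iUnion]
      rfl
    rw [hUS] at hvol
    rw [volume_slice hCD hL1 hL2 y] at hvol
    have hR : ∀ j, volume (S j) =
        ENNReal.ofReal (pieceW (l₁ j) (r₁ j) (l₂ j) (r₂ j) (c j) (d j) y) := by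
      intro j
      exact volume_slice (hcd j) (h1 j).le (h2 j).le y
    rw [tsum_fintype] at hvol
    simp_rw [hR] at hvol
    rw [← ENNReal.ofReal_sum_of_nonneg (fun j _ =>
      pieceW_nonneg (hcd j) (h1 j).le (h2 j).le y)] at hvol
    rw [ENNReal.ofReal_eq_ofReal_iff (pieceW_nonneg hCD hL1 hL2 y)
      (Finset.sum_nonneg (fun j _ => pieceW_nonneg (hcd j) (h1 j).le (h2 j).le y))] at hvol
    exact hvol


open Set

/-- two affine functions agreeing on an infinite set agree everywhere -/
lemma affine_eq_of_infinite {a₁ b₁ a₂ b₂ : ℝ} {s : Set ℝ} (hs : s.Infinite)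
    (h : ∀ y ∈ s, a₁*y+b₁ = a₂*y+b₂) : ∀ y, a₁*y+b₁ = a₂*y+b₂ := by
  obtain ⟨y₁, hy₁⟩ := hs.nonempty
  obtain ⟨y₂, hy₂⟩ := (hs.diff (finite_singleton y₁)).nonempty
  have hne : y₂ ≠ y₁ := by
    intro h'
    exact hy₂.2 (by simp [h'])
  have e1 := h y₁ hy₁
  have e2 := h y₂ hy₂.1
  have h3 : (a₁ - a₂) * (y₁ - y₂) = 0 := by linear_combination e1 - e2
  have ha : a₁ = a₂ := by
    rcases mul_eq_zero.1 h3 with h'|h'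
    · linarith
    · exact absurd (by linarith : y₂ = y₁) hne
  have hb : b₁ = b₂ := by
    rw [ha] at e1
    linarith
  intro y
  rw [ha, hb]

/-- if a real is fixed by every K-linear endomorphism fixing `H`, it lies in `K • H`. -/
lemma mem_span_of_forall_fixed (K : Subfield ℝ) {H : ℝ} (hH : H ≠ 0) (w : ℝ)
    (hw : ∀ φ : ℝ →ₗ[K] ℝ, φ H = H → φ w = w) :
    ∃ α : K, w = (α : ℝ) * H := by
  by_contra hcon
  have hwmem : w ∉ Submodule.span K ({H} : Set ℝ) := by
    intro hmem
    obtain ⟨α, hα⟩ := Submodule.mem_span_singleton.1 hmem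
    exact hcon ⟨α, by rw [← hα]; rfl⟩
  set p : Submodule K ℝ := Submodule.span K ({H} : Set ℝ) with hp
  set π := p.mkQ with hπ
  have hπw : π w ≠ 0 := by
    intro h0
    exact hwmem ((Submodule.Quotient.mk_eq_zero p).1 h0)
  obtain ⟨g, hg⟩ : ∃ g : Module.Dual K (ℝ ⧸ p), g (π w) ≠ 0 := by
    by_contra hall
    push_neg at hall
    exact hπw ((Module.forall_dual_apply_eq_zero_iff K (π w)).1 hall)
  set φ : ℝ →ₗ[K] ℝ := LinearMap.id + (LinearMap.toSpanSingleton K ℝ H).comp (g.comp π) with hφ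
  have hφH : φ H = H := by
    have : π H = 0 := (Submodule.Quotient.mk_eq_zero p).2 (Submodule.mem_span_singleton_self H)
    simp [hφ, LinearMap.toSpanSingleton, this]
  have hφw : φ w = w + (g (π w) : K) • H := by
    simp [hφ, LinearMap.toSpanSingleton]
  have := hw φ hφH
  rw [hφw] at this
  have : (g (π w) : K) • H = 0 := by linarith [this]
  rcases smul_eq_zero.1 this with h'|h'
  · exact hg h'
  · exact hH h'

open Classical in
/-- the max principle: rigidity of the breakpoint system -/
lemma maxp (m : ℕ) (c d κ κ' : Fin m → ℝ) (Z : Finset ℝ) (C D : ℝ)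
    (hcd : ∀ j, c j < d j)
    (hκpos : ∀ j, 0 < κ j) (hκ'pos : ∀ j, 0 < κ' j)
    (hcZ : ∀ j, c j ∈ Z) (hdZ : ∀ j, d j ∈ Z)
    (hClb : ∀ t ∈ Z, C ≤ t) (hDub : ∀ t ∈ Z, t ≤ D)
    (e : ℝ → ℝ) (heC : e C = 0) (heD : e D = 0)
    (hend : ∀ t ∈ Z, t ≠ C → t ≠ D → ∃ j, d j = t)
    (heqs : ∀ t ∈ Z, t ≠ C → t ≠ D →
      (∑ j, if d j = t then κ' j * (e t - e (c j)) else 0)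
      = ∑ j, if c j = t then κ j * (e (d j) - e t) else 0) :
    ∀ t ∈ Z, e t ≤ 0 := by
  by_contra hcon
  push_neg at hcon
  obtain ⟨t₀, ht₀Z, ht₀⟩ := hcon
  have hZne : Z.Nonempty := ⟨t₀, ht₀Z⟩
  obtain ⟨tm, htmZ, htm⟩ := Z.exists_max_image e hZne
  set M := e tm with hM
  have hMpos : 0 < M := lt_of_lt_of_le ht₀ (htm t₀ ht₀Z)
  set T := Z.filter (fun t => e t = M) with hT
  have hTne : T.Nonempty := ⟨tm, Finset.mem_filter.2 ⟨htmZ, rfl⟩⟩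
  set ts := T.min' hTne with hts
  have htsT : ts ∈ T := Finset.min'_mem _ _
  have htsZ : ts ∈ Z := (Finset.mem_filter.1 htsT).1
  have htse : e ts = M := (Finset.mem_filter.1 htsT).2
  have htsC : ts ≠ C := by
    intro h
    rw [h, heC] at htse
    linarith
  have htsD : ts ≠ D := by
    intro h
    rw [h, heD] at htse
    linarith
  obtain ⟨j₀, hj₀⟩ := hend ts htsZ htsC htsD
  have heq := heqs ts htsZ htsC htsD
  have hLnonneg : ∀ j : Fin m, 0 ≤ (if d j = ts then κ' j * (e ts - e (c j)) else 0) := by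
    intro j
    split
    · have := htm (c j) (hcZ j)
      have := (hκ'pos j).le
      rw [htse]
      nlinarith
    · exact le_refl 0
  have hRnonpos : ∀ j : Fin m, (if c j = ts then κ j * (e (d j) - e ts) else 0) ≤ 0 := by
    intro j
    split
    · have := htm (d j) (hdZ j)
      have := (hκpos j).le
      rw [htse]
      nlinarith
    · exact le_refl 0
  have hL0 : (∑ j, if d j = ts then κ' j * (e ts - e (c j)) else 0) = 0 := by
    have h1 : (0:ℝ) ≤ ∑ j, if d j = ts then κ' j * (e ts - e (c j)) else 0 :=
      Finset.sum_nonneg (fun j _ => hLnonneg j)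
    have h2 : (∑ j, if c j = ts then κ j * (e (d j) - e ts) else 0) ≤ 0 :=
      Finset.sum_nonpos (fun j _ => hRnonpos j)
    linarith [heq]
  have hterm := (Finset.sum_eq_zero_iff_of_nonneg (fun j _ => hLnonneg j)).1 hL0 j₀ (Finset.mem_univ _)
  rw [if_pos hj₀] at hterm
  have hecj : e (c j₀) = M := by
    have := hκ'pos j₀
    have : e ts - e (c j₀) = 0 := by
      rcases mul_eq_zero.1 hterm with h|h
      · linarith [hκ'pos j₀]
      · exact h
    linarith [htse]
  have hcT : c j₀ ∈ T := Finset.mem_filter.2 ⟨hcZ j₀, hecj⟩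
  have : ts ≤ c j₀ := Finset.min'_le _ _ hcT
  have : c j₀ < d j₀ := hcd j₀
  rw [hj₀] at this
  linarith


open Set

open Classical in
/-- strip equation -/
lemma strip_eq (m : ℕ) (c d κ κ' : Fin m → ℝ) (C D KB KB' : ℝ)
    (F : Set ℝ) (hF : F.Finite)
    (heq : ∀ y, y ∉ F → C ≤ y → y ≤ D →
      KB * (D - y) + KB' * (y - C)
      = ∑ j, if c j ≤ y ∧ y ≤ d j then κ j * (d j - y) + κ' j * (y - c j) else 0)
    (Z : Finset ℝ) (hcZ : ∀ j, c j ∈ Z) (hdZ : ∀ j, d j ∈ Z)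
    (hClb : ∀ t ∈ Z, C ≤ t) (hDub : ∀ t ∈ Z, t ≤ D)
    (t₁ t₂ : ℝ) (ht₁ : t₁ ∈ Z) (ht₂ : t₂ ∈ Z) (hlt : t₁ < t₂)
    (hgap : ∀ s ∈ Z, ¬(t₁ < s ∧ s < t₂)) :
    ∀ y, KB * (D - y) + KB' * (y - C)
      = ∑ j, if c j ≤ t₁ ∧ t₂ ≤ d j then κ j * (d j - y) + κ' j * (y - c j) else 0 := by
  set s : Set ℝ := Ioo t₁ t₂ \ F with hs
  have hsinf : s.Infinite := (Set.Ioo_infinite hlt).diff hF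
  have hptwise : ∀ y ∈ s,
      KB * (D - y) + KB' * (y - C)
      = ∑ j, if c j ≤ t₁ ∧ t₂ ≤ d j then κ j * (d j - y) + κ' j * (y - c j) else 0 := by
    intro y hy
    obtain ⟨hyI, hyF⟩ := hy
    have hCy : C ≤ y := le_trans (hClb t₁ ht₁) hyI.1.le
    have hyD : y ≤ D := le_trans hyI.2.le (hDub t₂ ht₂)
    rw [heq y hyF hCy hyD]
    apply Finset.sum_congr rfl
    intro j _
    have hiff : (c j ≤ y ∧ y ≤ d j) ↔ (c j ≤ t₁ ∧ t₂ ≤ d j) := by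
      constructor
      · rintro ⟨h1, h2⟩
        constructor
        · by_contra hc
          push_neg at hc
          exact hgap (c j) (hcZ j) ⟨hc, lt_of_le_of_lt h1 hyI.2⟩
        · by_contra hc
          push_neg at hc
          exact hgap (d j) (hdZ j) ⟨lt_of_lt_of_le hyI.1 h2, hc⟩
      · rintro ⟨h1, h2⟩
        exact ⟨le_trans h1 hyI.1.le, le_trans hyI.2.le h2⟩
    rw [if_congr hiff rfl rfl]
  -- both sides affine in y
  have hLaff : ∀ y, KB * (D - y) + KB' * (y - C) = (KB' - KB)*y + (KB*D - KB'*C) := by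
    intro y; ring
  have hRaff : ∀ y, (∑ j, if c j ≤ t₁ ∧ t₂ ≤ d j then κ j * (d j - y) + κ' j * (y - c j) else 0)
      = (∑ j, if c j ≤ t₁ ∧ t₂ ≤ d j then κ' j - κ j else 0)*y
        + (∑ j, if c j ≤ t₁ ∧ t₂ ≤ d j then κ j * d j - κ' j * c j else 0) := by
    intro y
    rw [Finset.sum_mul, ← Finset.sum_add_distrib]
    apply Finset.sum_congr rfl
    intro j _
    split
    · ring
    · simp
  have key : ∀ y, (KB' - KB)*y + (KB*D - KB'*C)
      = (∑ j, if c j ≤ t₁ ∧ t₂ ≤ d j then κ' j - κ j else 0)*y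
        + (∑ j, if c j ≤ t₁ ∧ t₂ ≤ d j then κ j * d j - κ' j * c j else 0) := by
    apply affine_eq_of_infinite hsinf
    intro y hy
    rw [← hLaff, ← hRaff]
    exact hptwise y hy
  intro y
  rw [hLaff, hRaff, key]

open Classical in
/-- continuity equation at an interior breakpoint -/
lemma cont_eq (m : ℕ) (c d κ κ' : Fin m → ℝ) (C D KB KB' : ℝ)
    (hcd : ∀ j, c j < d j)
    (F : Set ℝ) (hF : F.Finite)
    (heq : ∀ y, y ∉ F → C ≤ y → y ≤ D →
      KB * (D - y) + KB' * (y - C)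
      = ∑ j, if c j ≤ y ∧ y ≤ d j then κ j * (d j - y) + κ' j * (y - c j) else 0)
    (Z : Finset ℝ) (hCZ : C ∈ Z) (hDZ : D ∈ Z)
    (hcZ : ∀ j, c j ∈ Z) (hdZ : ∀ j, d j ∈ Z)
    (hClb : ∀ t ∈ Z, C ≤ t) (hDub : ∀ t ∈ Z, t ≤ D)
    (t : ℝ) (htZ : t ∈ Z) (htC : t ≠ C) (htD : t ≠ D) :
    (∑ j, if d j = t then κ' j * (t - c j) else 0)
      = ∑ j, if c j = t then κ j * (d j - t) else 0 := by
  have hCt : C < t := lt_of_le_of_ne (hClb t htZ) (Ne.symm htC)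
  have htD' : t < D := lt_of_le_of_ne (hDub t htZ) htD
  -- previous breakpoint
  set Zlt := Z.filter (fun w => w < t) with hZlt
  have hZltne : Zlt.Nonempty := ⟨C, Finset.mem_filter.2 ⟨hCZ, hCt⟩⟩
  set tmm := Zlt.max' hZltne with htmm
  have htmmmem := Zlt.max'_mem hZltne
  have htmmZ : tmm ∈ Z := (Finset.mem_filter.1 htmmmem).1
  have htmmlt : tmm < t := (Finset.mem_filter.1 htmmmem).2
  have hgapm : ∀ x ∈ Z, ¬(tmm < x ∧ x < t) := by
    rintro x hx ⟨h1, h2⟩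
    have hmem : x ∈ Zlt := by rw [hZlt]; exact Finset.mem_filter.2 ⟨hx, h2⟩
    have : x ≤ tmm := Finset.le_max' _ _ hmem
    linarith
  -- next breakpoint
  set Zgt := Z.filter (fun w => t < w) with hZgt
  have hZgtne : Zgt.Nonempty := ⟨D, Finset.mem_filter.2 ⟨hDZ, htD'⟩⟩
  set tpp := Zgt.min' hZgtne with htpp
  have htppmem := Zgt.min'_mem hZgtne
  have htppZ : tpp ∈ Z := (Finset.mem_filter.1 htppmem).1
  have htppgt : t < tpp := (Finset.mem_filter.1 htppmem).2
  have hgapp : ∀ x ∈ Z, ¬(t < x ∧ x < tpp) := by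
    rintro x hx ⟨h1, h2⟩
    have hmem : x ∈ Zgt := by rw [hZgt]; exact Finset.mem_filter.2 ⟨hx, h1⟩
    have : tpp ≤ x := Finset.min'_le _ _ hmem
    linarith
  have Sm := strip_eq m c d κ κ' C D KB KB' F hF heq Z hcZ hdZ hClb hDub
    tmm t htmmZ htZ htmmlt hgapm t
  have Sp := strip_eq m c d κ κ' C D KB KB' F hF heq Z hcZ hdZ hClb hDub
    t tpp htZ htppZ htppgt hgapp t
  have E : (∑ j, if c j ≤ tmm ∧ t ≤ d j then κ j * (d j - t) + κ' j * (t - c j) else 0)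
      = ∑ j, if c j ≤ t ∧ tpp ≤ d j then κ j * (d j - t) + κ' j * (t - c j) else 0 := by
    rw [← Sm, ← Sp]
  -- split the sums
  have hsplitL : ∀ j : Fin m,
      (if c j ≤ tmm ∧ t ≤ d j then κ j * (d j - t) + κ' j * (t - c j) else 0)
      = (if (c j ≤ tmm ∧ t ≤ d j) ∧ (c j ≤ t ∧ tpp ≤ d j) then κ j * (d j - t) + κ' j * (t - c j) else 0)
        + (if d j = t then κ' j * (t - c j) else 0) := by
    intro j
    by_cases hdj : d j = t
    · have hcj : c j ≤ tmm := by
        by_contra hc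
        push_neg at hc
        exact hgapm (c j) (hcZ j) ⟨hc, by rw [← hdj]; exact hcd j⟩
      have hnot : ¬(tpp ≤ d j) := by rw [hdj]; linarith
      rw [if_pos ⟨hcj, hdj.ge⟩, if_neg (by tauto), if_pos hdj, hdj]
      ring
    · by_cases hP : c j ≤ tmm ∧ t ≤ d j
      · have htppdj : tpp ≤ d j := by
          by_contra hc
          push_neg at hc
          have : d j ≤ t := by
            by_contra hc2
            push_neg at hc2
            exact hgapp (d j) (hdZ j) ⟨hc2, hc⟩
          exact hdj (le_antisymm this hP.2)
        rw [if_pos hP, if_pos ⟨hP, ⟨le_trans hP.1 htmmlt.le, htppdj⟩⟩, if_neg hdj]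
        ring
      · rw [if_neg hP, if_neg (by tauto), if_neg hdj]
        ring
  have hsplitR : ∀ j : Fin m,
      (if c j ≤ t ∧ tpp ≤ d j then κ j * (d j - t) + κ' j * (t - c j) else 0)
      = (if (c j ≤ tmm ∧ t ≤ d j) ∧ (c j ≤ t ∧ tpp ≤ d j) then κ j * (d j - t) + κ' j * (t - c j) else 0)
        + (if c j = t then κ j * (d j - t) else 0) := by
    intro j
    by_cases hcj : c j = t
    · have hdjt : tpp ≤ d j := by
        by_contra hc
        push_neg at hc
        have : d j ≤ t := by
          by_contra hc2
          push_neg at hc2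
          exact hgapp (d j) (hdZ j) ⟨hc2, hc⟩
        have := hcd j
        rw [hcj] at this
        linarith
      have hnot : ¬(c j ≤ tmm) := by rw [hcj]; linarith
      rw [if_pos ⟨hcj.le, hdjt⟩, if_neg (by tauto), if_pos hcj, hcj]
      ring
    · by_cases hP : c j ≤ t ∧ tpp ≤ d j
      · have hcj' : c j ≤ tmm := by
          by_contra hc
          push_neg at hc
          have : t ≤ c j := by
            by_contra hc2
            push_neg at hc2
            exact hgapm (c j) (hcZ j) ⟨hc, hc2⟩
          exact hcj (le_antisymm hP.1 this)
        rw [if_pos hP, if_pos ⟨⟨hcj', le_trans htppgt.le hP.2⟩, hP⟩, if_neg hcj]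
        ring
      · rw [if_neg hP, if_neg (by tauto), if_neg hcj]
        ring
  have EL : (∑ j, if c j ≤ tmm ∧ t ≤ d j then κ j * (d j - t) + κ' j * (t - c j) else 0)
      = (∑ j, if (c j ≤ tmm ∧ t ≤ d j) ∧ (c j ≤ t ∧ tpp ≤ d j) then κ j * (d j - t) + κ' j * (t - c j) else 0)
        + (∑ j, if d j = t then κ' j * (t - c j) else 0) := by
    rw [← Finset.sum_add_distrib]
    exact Finset.sum_congr rfl (fun j _ => hsplitL j)
  have ER : (∑ j, if c j ≤ t ∧ tpp ≤ d j then κ j * (d j - t) + κ' j * (t - c j) else 0)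
      = (∑ j, if (c j ≤ tmm ∧ t ≤ d j) ∧ (c j ≤ t ∧ tpp ≤ d j) then κ j * (d j - t) + κ' j * (t - c j) else 0)
        + (∑ j, if c j = t then κ j * (d j - t) else 0) := by
    rw [← Finset.sum_add_distrib]
    exact Finset.sum_congr rfl (fun j _ => hsplitR j)
  rw [EL, ER] at E
  linarith


open Set

open Classical in
lemma core (K : Subfield ℝ) (m : ℕ) (c d κ κ' : Fin m → ℝ)
    (hcd : ∀ j, c j < d j)
    (hκpos : ∀ j, 0 < κ j) (hκ'pos : ∀ j, 0 < κ' j)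
    (hκK : ∀ j, κ j ∈ K) (hκ'K : ∀ j, κ' j ∈ K)
    (C D KB KB' : ℝ) (hCD : C < D)
    (hband : ∀ j, C ≤ c j ∧ d j ≤ D)
    (F : Set ℝ) (hF : F.Finite)
    (heq : ∀ y, y ∉ F → C ≤ y → y ≤ D →
      KB * (D - y) + KB' * (y - C)
      = ∑ j, if c j ≤ y ∧ y ≤ d j then κ j * (d j - y) + κ' j * (y - c j) else 0) :
    KB ∈ K ∧ KB' ∈ K := by
  set Z : Finset ℝ := insert C (insert D ((Finset.univ.image c) ∪ (Finset.univ.image d)))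
    with hZ
  have hCZ : C ∈ Z := by simp [hZ]
  have hDZ : D ∈ Z := by simp [hZ]
  have hcZ : ∀ j, c j ∈ Z := by intro j; simp [hZ]
  have hdZ : ∀ j, d j ∈ Z := by intro j; simp [hZ]
  have hClb : ∀ t ∈ Z, C ≤ t := by
    intro t ht
    simp [hZ] at ht
    rcases ht with h|h|⟨j,hj⟩|⟨j,hj⟩
    · rw [h]
    · rw [h]; exact hCD.le
    · rw [← hj]; exact (hband j).1
    · rw [← hj]; exact le_trans (hband j).1 (hcd j).le
  have hDub : ∀ t ∈ Z, t ≤ D := by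
    intro t ht
    simp [hZ] at ht
    rcases ht with h|h|⟨j,hj⟩|⟨j,hj⟩
    · rw [h]; exact hCD.le
    · rw [h]
    · rw [← hj]; exact le_trans (hcd j).le (hband j).2
    · rw [← hj]; exact (hband j).2
  -- existence of an "ending" piece at each interior breakpoint
  have hend : ∀ t ∈ Z, t ≠ C → t ≠ D → ∃ j, d j = t := by
    intro t ht htC htD
    by_contra hno
    push_neg at hno
    have hcont := cont_eq m c d κ κ' C D KB KB' hcd F hF heq Z hCZ hDZ hcZ hdZ hClb hDub
      t ht htC htD
    have hL0 : (∑ j, if d j = t then κ' j * (t - c j) else 0) = 0 :=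
      Finset.sum_eq_zero (fun j _ => if_neg (hno j))
    obtain ⟨j₀, hj₀⟩ : ∃ j, c j = t := by
      simp [hZ] at ht
      rcases ht with rfl|rfl|⟨j,hj⟩|⟨j,hj⟩
      · exact absurd rfl htC
      · exact absurd rfl htD
      · exact ⟨j, hj⟩
      · exact absurd hj (hno j)
    have hpos : ∀ j : Fin m, 0 ≤ (if c j = t then κ j * (d j - t) else 0) := by
      intro j
      split
      · next h =>
        have h1 := hcd j
        have h2 := (hκpos j).le
        nlinarith [h]
      · exact le_refl 0
    have hsum : κ j₀ * (d j₀ - t) ≤ ∑ j, if c j = t then κ j * (d j - t) else 0 := by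
      have h := Finset.single_le_sum (f := fun j => if c j = t then κ j * (d j - t) else 0)
        (fun j _ => hpos j) (Finset.mem_univ j₀)
      simpa [hj₀] using h
    have hstrict : 0 < κ j₀ * (d j₀ - t) := by
      have := hcd j₀
      rw [hj₀] at this
      exact mul_pos (hκpos j₀) (by linarith)
    rw [← hcont, hL0] at hsum
    linarith
  -- every breakpoint (relative to C) lies in K • (D - C)
  have hDC : D - C ≠ 0 := by linarith
  have hfix : ∀ t ∈ Z, ∃ α : K, t - C = (α : ℝ) * (D - C) := by
    intro t ht
    apply mem_span_of_forall_fixed K hDC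
    intro φ hφ
    -- the deviation function
    set e : ℝ → ℝ := fun x => φ (x - C) - (x - C) with he
    have heC : e C = 0 := by
      show φ (C - C) - (C - C) = 0
      simp
    have heD : e D = 0 := by
      show φ (D - C) - (D - C) = 0
      rw [hφ]; ring
    have hKmul : ∀ (a : ℝ), a ∈ K → ∀ x : ℝ, φ (a * x) = a * φ x := by
      intro a ha x
      have h1 : a * x = (⟨a, ha⟩ : K) • x := rfl
      rw [h1, _root_.map_smul]
      rfl
    have heqs : ∀ s ∈ Z, s ≠ C → s ≠ D →
        (∑ j, if d j = s then κ' j * (e s - e (c j)) else 0)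
        = ∑ j, if c j = s then κ j * (e (d j) - e s) else 0 := by
      intro s hs hsC hsD
      have hcont := cont_eq m c d κ κ' C D KB KB' hcd F hF heq Z hCZ hDZ hcZ hdZ hClb hDub
        s hs hsC hsD
      -- apply φ to hcont
      have hφcont : (∑ j, if d j = s then κ' j * ((s - c j) + (e s - e (c j))) else 0)
          = ∑ j, if c j = s then κ j * ((d j - s) + (e (d j) - e s)) else 0 := by
        have h1 : ∀ j : Fin m, φ (if d j = s then κ' j * (s - c j) else 0)
            = if d j = s then κ' j * ((s - c j) + (e s - e (c j))) else 0 := by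
          intro j
          split
          · rw [hKmul (κ' j) (hκ'K j)]
            congr 1
            have : s - c j = (s - C) - (c j - C) := by ring
            rw [this, map_sub]
            simp [he]
            ring
          · exact map_zero φ
        have h2 : ∀ j : Fin m, φ (if c j = s then κ j * (d j - s) else 0)
            = if c j = s then κ j * ((d j - s) + (e (d j) - e s)) else 0 := by
          intro j
          split
          · rw [hKmul (κ j) (hκK j)]
            congr 1
            have : d j - s = (d j - C) - (s - C) := by ring
            rw [this, map_sub]
            simp [he]
            ring
          · exact map_zero φ
        calc (∑ j, if d j = s then κ' j * ((s - c j) + (e s - e (c j))) else 0)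
            = ∑ j, φ (if d j = s then κ' j * (s - c j) else 0) := by
              exact (Finset.sum_congr rfl (fun j _ => (h1 j).symm))
          _ = φ (∑ j, if d j = s then κ' j * (s - c j) else 0) := (map_sum φ _ _).symm
          _ = φ (∑ j, if c j = s then κ j * (d j - s) else 0) := by rw [hcont]
          _ = ∑ j, φ (if c j = s then κ j * (d j - s) else 0) := map_sum φ _ _
          _ = ∑ j, if c j = s then κ j * ((d j - s) + (e (d j) - e s)) else 0 :=
              Finset.sum_congr rfl (fun j _ => h2 j)
      -- subtract hcont
      have hsplit1 : ∀ j : Fin m, (if d j = s then κ' j * ((s - c j) + (e s - e (c j))) else 0)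
          = (if d j = s then κ' j * (s - c j) else 0)
            + (if d j = s then κ' j * (e s - e (c j)) else 0) := by
        intro j; split
        · ring
        · ring
      have hsplit2 : ∀ j : Fin m, (if c j = s then κ j * ((d j - s) + (e (d j) - e s)) else 0)
          = (if c j = s then κ j * (d j - s) else 0)
            + (if c j = s then κ j * (e (d j) - e s) else 0) := by
        intro j; split
        · ring
        · ring
      simp_rw [hsplit1, hsplit2, Finset.sum_add_distrib] at hφcont
      rw [hcont] at hφcont
      linarith
    have hle := maxp m c d κ κ' Z C D hcd hκpos hκ'pos hcZ hdZ hClb hDub e heC heD hend heqs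
    have hge := maxp m c d κ κ' Z C D hcd hκpos hκ'pos hcZ hdZ hClb hDub (fun x => -(e x))
      (by simp [heC]) (by simp [heD]) hend (by
        intro s hs hsC hsD
        have h := heqs s hs hsC hsD
        have h1 : ∀ j : Fin m, (if d j = s then κ' j * ((-e s) - (-e (c j))) else 0)
            = -(if d j = s then κ' j * (e s - e (c j)) else 0) := by
          intro j; split <;> ring
        have h2 : ∀ j : Fin m, (if c j = s then κ j * ((-e (d j)) - (-e s)) else 0)
            = -(if c j = s then κ j * (e (d j) - e s) else 0) := by
          intro j; split <;> ring
        simp_rw [h1, h2, Finset.sum_neg_distrib]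
        linarith)
    have h1 := hle t ht
    have h2 := hge t ht
    have : e t = 0 := by linarith
    simp only [he] at this
    linarith
  -- conclude: KB ∈ K from the bottom strip, KB' ∈ K from the top strip
  constructor
  · -- bottom strip
    set Zgt := Z.filter (fun w => C < w) with hZgt
    have hZgtne : Zgt.Nonempty := ⟨D, Finset.mem_filter.2 ⟨hDZ, hCD⟩⟩
    set t₁ := Zgt.min' hZgtne with ht₁
    have ht₁mem := Zgt.min'_mem hZgtne
    have ht₁Z : t₁ ∈ Z := (Finset.mem_filter.1 ht₁mem).1
    have ht₁gt : C < t₁ := (Finset.mem_filter.1 ht₁mem).2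
    have hgap : ∀ x ∈ Z, ¬(C < x ∧ x < t₁) := by
      rintro x hx ⟨h1, h2⟩
      have hmem : x ∈ Zgt := by rw [hZgt]; exact Finset.mem_filter.2 ⟨hx, h1⟩
      have : t₁ ≤ x := Finset.min'_le _ _ hmem
      linarith
    have hs := strip_eq m c d κ κ' C D KB KB' F hF heq Z hcZ hdZ hClb hDub
      C t₁ hCZ ht₁Z ht₁gt hgap C
    have hsC : KB * (D - C) = ∑ j, if c j ≤ C ∧ t₁ ≤ d j then κ j * (d j - C) else 0 := by
      rw [show KB * (D - C) = KB * (D - C) + KB' * (C - C) by ring, hs]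
      apply Finset.sum_congr rfl
      intro j _
      split
      · next h =>
        have : c j = C := le_antisymm h.1 (hband j).1
        rw [this]
        ring
      · rfl
    -- each d j - C is a K-multiple of D - C
    have hα : ∀ j : Fin m, ∃ α : K, d j - C = (α : ℝ) * (D - C) := fun j => hfix (d j) (hdZ j)
    choose α hα using hα
    have hsum : KB * (D - C) = (∑ j, if c j ≤ C ∧ t₁ ≤ d j then κ j * (α j : ℝ) else 0) * (D - C) := by
      rw [hsC, Finset.sum_mul]
      apply Finset.sum_congr rfl
      intro j _
      split
      · rw [hα j]; ring
      · ring
    have hKBeq : KB = ∑ j, if c j ≤ C ∧ t₁ ≤ d j then κ j * (α j : ℝ) else 0 :=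
      mul_right_cancel₀ hDC (by rw [hsum])
    rw [hKBeq]
    apply Subfield.sum_mem
    intro j _
    split
    · exact mul_mem (hκK j) (α j).2
    · exact zero_mem K
  · -- top strip
    set Zlt := Z.filter (fun w => w < D) with hZlt
    have hZltne : Zlt.Nonempty := ⟨C, Finset.mem_filter.2 ⟨hCZ, hCD⟩⟩
    set t₂ := Zlt.max' hZltne with ht₂
    have ht₂mem := Zlt.max'_mem hZltne
    have ht₂Z : t₂ ∈ Z := (Finset.mem_filter.1 ht₂mem).1
    have ht₂lt : t₂ < D := (Finset.mem_filter.1 ht₂mem).2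
    have hgap : ∀ x ∈ Z, ¬(t₂ < x ∧ x < D) := by
      rintro x hx ⟨h1, h2⟩
      have hmem : x ∈ Zlt := by rw [hZlt]; exact Finset.mem_filter.2 ⟨hx, h2⟩
      have : x ≤ t₂ := Finset.le_max' _ _ hmem
      linarith
    have hs := strip_eq m c d κ κ' C D KB KB' F hF heq Z hcZ hdZ hClb hDub
      t₂ D ht₂Z hDZ ht₂lt hgap D
    have hsD : KB' * (D - C) = ∑ j, if c j ≤ t₂ ∧ D ≤ d j then κ' j * (D - c j) else 0 := by
      rw [show KB' * (D - C) = KB * (D - D) + KB' * (D - C) by ring, hs]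
      apply Finset.sum_congr rfl
      intro j _
      split
      · next h =>
        have : d j = D := le_antisymm (hband j).2 h.2
        rw [this]
        ring
      · rfl
    have hα : ∀ j : Fin m, ∃ α : K, c j - C = (α : ℝ) * (D - C) := fun j => hfix (c j) (hcZ j)
    choose α hα using hα
    have hsum : KB' * (D - C)
        = (∑ j, if c j ≤ t₂ ∧ D ≤ d j then κ' j * ((1:ℝ) - (α j : ℝ)) else 0) * (D - C) := by
      rw [hsD, Finset.sum_mul]
      apply Finset.sum_congr rfl
      intro j _
      split
      · have hDc : D - c j = (1 - (α j : ℝ)) * (D - C) := by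
          have h := hα j
          linarith
        rw [hDc]; ring
      · ring
    have hKBeq : KB' = ∑ j, if c j ≤ t₂ ∧ D ≤ d j then κ' j * ((1:ℝ) - (α j : ℝ)) else 0 :=
      mul_right_cancel₀ hDC (by rw [hsum])
    rw [hKBeq]
    apply Subfield.sum_mem
    intro j _
    split
    · exact mul_mem (hκ'K j) (sub_mem (one_mem K) (α j).2)
    · exact zero_mem K


open Set

lemma main_aux (K : Subfield ℝ) (n : ℕ)
    (p q r s y₀ y₁ : Fin n → ℝ)
    (hpq : ∀ i, p i < q i) (hrs : ∀ i, r i < s i) (hy : ∀ i, y₀ i ≠ y₁ i)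
    (hK1 : ∀ i, (q i - p i) / |y₁ i - y₀ i| ∈ K)
    (hK2 : ∀ i, (s i - r i) / |y₁ i - y₀ i| ∈ K)
    (P Q R S Y₀ Y₁ : ℝ) (hPQ : P < Q) (hRS : R < S) (hY : Y₀ < Y₁)
    (htile : IsTiling (trapezoid P Q R S Y₀ Y₁)
      (Set.range fun i => trapezoid (p i) (q i) (r i) (s i) (y₀ i) (y₁ i))) :
    (Q - P) / (Y₁ - Y₀) ∈ K ∧ (S - R) / (Y₁ - Y₀) ∈ K := by
  obtain ⟨m, rr, vv, tt, htF, hrpos, hun, hint⟩ := htile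
  -- each tile is a trapezoid from the family
  have hidx : ∀ i : Fin m, ∃ k : Fin n, tt i
      = trapezoid (p k) (q k) (r k) (s k) (y₀ k) (y₁ k) := by
    intro i
    obtain ⟨k, hk⟩ := htF i
    exact ⟨k, hk.symm⟩
  choose idx hidxeq using hidx
  -- oriented data of the pieces
  set c : Fin m → ℝ := fun i => if y₀ (idx i) < y₁ (idx i)
    then rr i * y₀ (idx i) + (vv i).2 else rr i * y₁ (idx i) + (vv i).2 with hc
  set d : Fin m → ℝ := fun i => if y₀ (idx i) < y₁ (idx i)
    then rr i * y₁ (idx i) + (vv i).2 else rr i * y₀ (idx i) + (vv i).2 with hd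
  set l1 : Fin m → ℝ := fun i => if y₀ (idx i) < y₁ (idx i)
    then rr i * p (idx i) + (vv i).1 else rr i * r (idx i) + (vv i).1 with hl1
  set r1 : Fin m → ℝ := fun i => if y₀ (idx i) < y₁ (idx i)
    then rr i * q (idx i) + (vv i).1 else rr i * s (idx i) + (vv i).1 with hr1
  set l2 : Fin m → ℝ := fun i => if y₀ (idx i) < y₁ (idx i)
    then rr i * r (idx i) + (vv i).1 else rr i * p (idx i) + (vv i).1 with hl2
  set r2 : Fin m → ℝ := fun i => if y₀ (idx i) < y₁ (idx i)
    then rr i * s (idx i) + (vv i).1 else rr i * q (idx i) + (vv i).1 with hr2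
  have hcd : ∀ i, c i < d i := by
    intro i
    by_cases h : y₀ (idx i) < y₁ (idx i)
    · simp only [hc, hd, if_pos h]
      have := hrpos i
      nlinarith
    · have h' : y₁ (idx i) < y₀ (idx i) := lt_of_le_of_ne (not_lt.1 h) (Ne.symm (hy (idx i)))
      simp only [hc, hd, if_neg h]
      have := hrpos i
      nlinarith
  have hlr1 : ∀ i, l1 i < r1 i := by
    intro i
    by_cases h : y₀ (idx i) < y₁ (idx i) <;>
      [ (simp only [hl1, hr1, if_pos h]; have := hrpos i; have := hpq (idx i); nlinarith);
        (simp only [hl1, hr1, if_neg h]; have := hrpos i; have := hrs (idx i); nlinarith) ]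
  have hlr2 : ∀ i, l2 i < r2 i := by
    intro i
    by_cases h : y₀ (idx i) < y₁ (idx i) <;>
      [ (simp only [hl2, hr2, if_pos h]; have := hrpos i; have := hrs (idx i); nlinarith);
        (simp only [hl2, hr2, if_neg h]; have := hrpos i; have := hpq (idx i); nlinarith) ]
  have hpiece : ∀ i, homothety (rr i) (vv i) (tt i)
      = trapRegion (l1 i) (r1 i) (l2 i) (r2 i) (c i) (d i) := by
    intro i
    rw [hidxeq i, homothety_trapezoid]
    by_cases h : y₀ (idx i) < y₁ (idx i)
    · simp only [hc, hd, hl1, hr1, hl2, hr2, if_pos h]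
      exact trapezoid_eq_region (by have := hrpos i; nlinarith)
        (by have := hrpos i; have := hpq (idx i); nlinarith)
        (by have := hrpos i; have := hrs (idx i); nlinarith)
    · have h' : y₁ (idx i) < y₀ (idx i) := lt_of_le_of_ne (not_lt.1 h) (Ne.symm (hy (idx i)))
      simp only [hc, hd, hl1, hr1, hl2, hr2, if_neg h]
      rw [trapezoid_comm]
      exact trapezoid_eq_region (by have := hrpos i; nlinarith)
        (by have := hrpos i; have := hrs (idx i); nlinarith)
        (by have := hrpos i; have := hpq (idx i); nlinarith)
  -- B as a region
  have hB : trapezoid P Q R S Y₀ Y₁ = trapRegion P Q R S Y₀ Y₁ :=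
    trapezoid_eq_region hY hPQ.le hRS.le
  have hunion : trapRegion P Q R S Y₀ Y₁
      = ⋃ i, trapRegion (l1 i) (r1 i) (l2 i) (r2 i) (c i) (d i) := by
    rw [← hB, hun]
    exact iUnion_congr hpiece
  have hdisj : ∀ i j : Fin m, i ≠ j →
      interior (trapRegion (l1 i) (r1 i) (l2 i) (r2 i) (c i) (d i)) ∩
      interior (trapRegion (l1 j) (r1 j) (l2 j) (r2 j) (c j) (d j)) = ∅ := by
    intro i j hij
    rw [← hpiece i, ← hpiece j]
    exact hint i j hij
  obtain ⟨F, hF, heqW⟩ := widths_add m l1 r1 l2 r2 c d hcd hlr1 hlr2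
    P Q R S Y₀ Y₁ hY hPQ.le hRS.le hunion hdisj
  -- convert to the κ-form
  set κ : Fin m → ℝ := fun i => (r1 i - l1 i)/(d i - c i) with hκ
  set κ' : Fin m → ℝ := fun i => (r2 i - l2 i)/(d i - c i) with hκ'
  have hκpos : ∀ i, 0 < κ i := fun i => div_pos (by linarith [hlr1 i]) (by linarith [hcd i])
  have hκ'pos : ∀ i, 0 < κ' i := fun i => div_pos (by linarith [hlr2 i]) (by linarith [hcd i])
  have hκK : ∀ i, κ i ∈ K := by
    intro i
    by_cases h : y₀ (idx i) < y₁ (idx i)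
    · have : κ i = (q (idx i) - p (idx i)) / |y₁ (idx i) - y₀ (idx i)| := by
        rw [hκ]
        simp only [hl1, hr1, hc, hd, if_pos h]
        rw [abs_of_pos (by linarith)]
        rw [show rr i * q (idx i) + (vv i).1 - (rr i * p (idx i) + (vv i).1)
          = rr i * (q (idx i) - p (idx i)) by ring,
          show rr i * y₁ (idx i) + (vv i).2 - (rr i * y₀ (idx i) + (vv i).2)
          = rr i * (y₁ (idx i) - y₀ (idx i)) by ring]
        rw [mul_div_mul_left _ _ (ne_of_gt (hrpos i))]
      rw [this]
      exact hK1 (idx i)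
    · have h' : y₁ (idx i) < y₀ (idx i) := lt_of_le_of_ne (not_lt.1 h) (Ne.symm (hy (idx i)))
      have : κ i = (s (idx i) - r (idx i)) / |y₁ (idx i) - y₀ (idx i)| := by
        rw [hκ]
        simp only [hl1, hr1, hc, hd, if_neg h]
        rw [abs_of_neg (by linarith), neg_sub]
        rw [show rr i * s (idx i) + (vv i).1 - (rr i * r (idx i) + (vv i).1)
          = rr i * (s (idx i) - r (idx i)) by ring,
          show rr i * y₀ (idx i) + (vv i).2 - (rr i * y₁ (idx i) + (vv i).2)
          = rr i * (y₀ (idx i) - y₁ (idx i)) by ring]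
        rw [mul_div_mul_left _ _ (ne_of_gt (hrpos i))]
      rw [this]
      exact hK2 (idx i)
  have hκ'K : ∀ i, κ' i ∈ K := by
    intro i
    by_cases h : y₀ (idx i) < y₁ (idx i)
    · have : κ' i = (s (idx i) - r (idx i)) / |y₁ (idx i) - y₀ (idx i)| := by
        rw [hκ']
        simp only [hl2, hr2, hc, hd, if_pos h]
        rw [abs_of_pos (by linarith)]
        rw [show rr i * s (idx i) + (vv i).1 - (rr i * r (idx i) + (vv i).1)
          = rr i * (s (idx i) - r (idx i)) by ring,
          show rr i * y₁ (idx i) + (vv i).2 - (rr i * y₀ (idx i) + (vv i).2)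
          = rr i * (y₁ (idx i) - y₀ (idx i)) by ring]
        rw [mul_div_mul_left _ _ (ne_of_gt (hrpos i))]
      rw [this]
      exact hK2 (idx i)
    · have h' : y₁ (idx i) < y₀ (idx i) := lt_of_le_of_ne (not_lt.1 h) (Ne.symm (hy (idx i)))
      have : κ' i = (q (idx i) - p (idx i)) / |y₁ (idx i) - y₀ (idx i)| := by
        rw [hκ']
        simp only [hl2, hr2, hc, hd, if_neg h]
        rw [abs_of_neg (by linarith), neg_sub]
        rw [show rr i * q (idx i) + (vv i).1 - (rr i * p (idx i) + (vv i).1)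
          = rr i * (q (idx i) - p (idx i)) by ring,
          show rr i * y₀ (idx i) + (vv i).2 - (rr i * y₁ (idx i) + (vv i).2)
          = rr i * (y₀ (idx i) - y₁ (idx i)) by ring]
        rw [mul_div_mul_left _ _ (ne_of_gt (hrpos i))]
      rw [this]
      exact hK1 (idx i)
  -- band inclusion
  have hband : ∀ i, Y₀ ≤ c i ∧ d i ≤ Y₁ := by
    intro i
    have hsub : trapRegion (l1 i) (r1 i) (l2 i) (r2 i) (c i) (d i)
        ⊆ trapRegion P Q R S Y₀ Y₁ := by
      rw [hunion]
      exact subset_iUnion (fun i => trapRegion (l1 i) (r1 i) (l2 i) (r2 i) (c i) (d i)) i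
    constructor
    · have hmem : ((l1 i, c i) : ℝ×ℝ) ∈ trapRegion (l1 i) (r1 i) (l2 i) (r2 i) (c i) (d i) := by
        refine ⟨le_refl _, (hcd i).le, ?_, ?_⟩ <;> simp only
        · apply le_of_eq; ring
        · have := hlr1 i; have := hcd i; nlinarith
      exact (hsub hmem).1
    · have hmem : ((l2 i, d i) : ℝ×ℝ) ∈ trapRegion (l1 i) (r1 i) (l2 i) (r2 i) (c i) (d i) := by
        refine ⟨(hcd i).le, le_refl _, ?_, ?_⟩ <;> simp only
        · apply le_of_eq; ring
        · have := hlr2 i; have := hcd i; nlinarith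
      exact (hsub hmem).2.1
  -- the width equation in κ form
  set KB : ℝ := (Q - P)/(Y₁ - Y₀) with hKB
  set KB' : ℝ := (S - R)/(Y₁ - Y₀) with hKB'
  have heqκ : ∀ y, y ∉ F → Y₀ ≤ y → y ≤ Y₁ →
      KB * (Y₁ - y) + KB' * (y - Y₀)
      = ∑ i, if c i ≤ y ∧ y ≤ d i then κ i * (d i - y) + κ' i * (y - c i) else 0 := by
    intro y hyF hy1 hy2
    have h := heqW y hyF hy1 hy2
    have hL : pieceW P Q R S Y₀ Y₁ y = KB * (Y₁ - y) + KB' * (y - Y₀) := by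
      unfold pieceW
      rw [if_pos ⟨hy1, hy2⟩, hKB, hKB']
      ring
    have hRr : ∀ i, pieceW (l1 i) (r1 i) (l2 i) (r2 i) (c i) (d i) y
        = if c i ≤ y ∧ y ≤ d i then κ i * (d i - y) + κ' i * (y - c i) else 0 := by
      intro i
      unfold pieceW
      split
      · rw [hκ, hκ']; ring
      · rfl
    rw [← hL, h]
    exact Finset.sum_congr rfl (fun i _ => hRr i)
  have hfinal := core K m c d κ κ' hcd hκpos hκ'pos hκK hκ'K Y₀ Y₁ KB KB' hY hband F hF heqκ
  exact hfinal

end KenyonAux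

/-- **Kenyon's theorem over a subfield.** If every base-to-height ratio of the trapezoids
`A₁, …, Aₙ` lies in a subfield `K ⊆ ℝ`, and a trapezoid `B` with horizontal bases is tiled by
homothetic copies of `A₁, …, Aₙ`, then the base-to-height ratios of `B` lie in `K` as well. -/
theorem statement0 (K : Subfield ℝ) (n : ℕ)
    (p q r s y₀ y₁ : Fin n → ℝ)
    (hpq : ∀ i, p i < q i) (hrs : ∀ i, r i < s i) (hy : ∀ i, y₀ i ≠ y₁ i)
    (hK1 : ∀ i, (q i - p i) / |y₁ i - y₀ i| ∈ K)
    (hK2 : ∀ i, (s i - r i) / |y₁ i - y₀ i| ∈ K)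
    (P Q R S Y₀ Y₁ : ℝ) (hPQ : P < Q) (hRS : R < S) (hY : Y₀ ≠ Y₁)
    (htile : IsTiling (trapezoid P Q R S Y₀ Y₁)
      (Set.range fun i => trapezoid (p i) (q i) (r i) (s i) (y₀ i) (y₁ i))) :
    (Q - P) / |Y₁ - Y₀| ∈ K ∧ (S - R) / |Y₁ - Y₀| ∈ K := by
  rcases lt_or_gt_of_ne hY with h | h
  · have := main_aux K n p q r s y₀ y₁ hpq hrs hy hK1 hK2 P Q R S Y₀ Y₁ hPQ hRS h htile
    rw [abs_of_pos (by linarith : (0:ℝ) < Y₁ - Y₀)]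
    exact this
  · rw [trapezoid_comm] at htile
    have := main_aux K n p q r s y₀ y₁ hpq hrs hy hK1 hK2 R S P Q Y₁ Y₀ hRS hPQ h htile
    rw [abs_of_neg (by linarith : Y₁ - Y₀ < 0), neg_sub]
    exact ⟨this.2, this.1⟩
end
end

section
/- Let d be a positive rational with √d irrational and let a ∈ ℚ[√d] with 1 < ā < a. Then there exist infinitely many distinct b ∈ ℚ[√d] such that ln G(b) / ln G(b̄) = ln G(a) / ln G(ā) and the standard trapezoid t(b) admits a trivial tiling by homothetic copies of the standard trapezoid t(a), where G(x) = (x−1)/(x+1). -/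
noncomputable section

/-- The standard trapezoid `t(a)`: unit height, horizontal bases `a+1` and `a-1`,
base angles `45°`, midline `a`. -/
def stdTrap (a : ℝ) : Set (ℝ × ℝ) :=
  convexHull ℝ ({(0, 0), (a + 1, 0), (a, 1), (1, 1)} : Set (ℝ × ℝ))

/-- The standard parallelogram `p(a)`: unit height, horizontal bases of length `a`. -/
def stdPar (a : ℝ) : Set (ℝ × ℝ) :=
  convexHull ℝ ({(0, 0), (a, 0), (a + 1, 1), (1, 1)} : Set (ℝ × ℝ))
/-- `S` admits a trivial tiling by homothetic copies of members of `F`: either it is a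
single homothetic copy of a member of `F`, or some line segment divides it into two
figures, each admitting a trivial tiling. -/
inductive TrivialTiling (F : Set (Set (ℝ × ℝ))) : Set (ℝ × ℝ) → Prop
  | single (r : ℝ) (v : ℝ × ℝ) (t : Set (ℝ × ℝ)) :
      0 < r → t ∈ F → TrivialTiling F (homothety r v t)
  | split (S S₁ S₂ : Set (ℝ × ℝ)) (x y : ℝ × ℝ) :
      TrivialTiling F S₁ → TrivialTiling F S₂ →
      S = S₁ ∪ S₂ → interior S₁ ∩ interior S₂ = ∅ →
      S₁ ∩ S₂ ⊆ segment ℝ x y →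
      TrivialTiling F S
/-- `G(x) = (x-1)/(x+1)`. -/
def Gfun (x : ℝ) : ℝ := (x - 1) / (x + 1)


/-!
Put `t = G(a)` and `t̄ = G(ā)`, both in `(0, 1)`. Since `G(x) = (x - 1)/(x + 1)` has inverse
`t ↦ (1 + t)/(1 - t)`, the distinct numbers `bₙ = (1 + tⁿ)/(1 - tⁿ)` satisfy `G(bₙ) = tⁿ`. As `bₙ`
and `b̄ₙ` are the images of one element of the field `ℚ(√d)` under its two real embeddings,
`G(b̄ₙ) = t̄ⁿ`, and the two logarithmic ratios agree.

For the tiling, cut `t(b)` by the horizontal line at height `h = (b + 1)/(a + 1)`: below it lies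
`h • t(a)`, above it a copy of `(1 - h) • t(b')` with `G(b) = G(a) G(b')`. Hence `t(bₙ₊₁)` is cut
into `h • t(a)` and a copy of `t(bₙ)`, and induction gives a trivial tiling of every `t(bₙ)`.
-/

section Embeddings

variable {d : ℚ}

lemma Irrational.fact_sq_ne (h : Irrational √(d : ℝ)) : Fact (∀ r : ℚ, r ^ 2 ≠ d + 0 * r) := by
  refine ⟨fun r hr => h ⟨|r|, ?_⟩⟩
  rw [zero_mul, add_zero] at hr
  rw [← hr]
  push_cast
  rw [Real.sqrt_sq_eq_abs]

def sqrtEmbedding (hd : 0 ≤ d) : QuadraticAlgebra ℚ d 0 →+* ℝ :=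
  (QuadraticAlgebra.lift ⟨√(d : ℝ), by
    rw [Real.mul_self_sqrt (by exact_mod_cast hd)]; simp [Algebra.smul_def]⟩).toRingHom

def conjSqrtEmbedding (hd : 0 ≤ d) : QuadraticAlgebra ℚ d 0 →+* ℝ :=
  (sqrtEmbedding hd).comp (starRingEnd _)

lemma sqrtEmbedding_apply (hd : 0 ≤ d) (z : QuadraticAlgebra ℚ d 0) :
    sqrtEmbedding hd z = z.re + z.im * √(d : ℝ) := by
  simp [sqrtEmbedding, Algebra.smul_def]

lemma conjSqrtEmbedding_apply (hd : 0 ≤ d) (z : QuadraticAlgebra ℚ d 0) :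
    conjSqrtEmbedding hd z = z.re - z.im * √(d : ℝ) := by
  simp [conjSqrtEmbedding, sqrtEmbedding_apply, starRingEnd_apply, sub_eq_add_neg]

end Embeddings

def GfunInv (t : ℝ) : ℝ := (1 + t) / (1 - t)

lemma Gfun_GfunInv {t : ℝ} (ht : t ≠ 1) : Gfun (GfunInv t) = t := by
  have : 1 - t ≠ 0 := sub_ne_zero.2 ht.symm
  rw [Gfun, GfunInv]
  field_simp
  ring

lemma GfunInv_Gfun {x : ℝ} (hx : x + 1 ≠ 0) : GfunInv (Gfun x) = x := by
  rw [Gfun, GfunInv]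
  field_simp
  ring

lemma one_lt_GfunInv {t : ℝ} (h₀ : 0 < t) (h₁ : t < 1) : 1 < GfunInv t := by
  rw [GfunInv, lt_div_iff₀ (by linarith)]
  linarith

lemma Gfun_pos {x : ℝ} (hx : 1 < x) : 0 < Gfun x :=
  div_pos (by linarith) (by linarith)

lemma Gfun_lt_one {x : ℝ} (hx : 1 < x) : Gfun x < 1 := by
  rw [Gfun, div_lt_one (by linarith)]
  linarith

lemma map_GfunInv_pow {K : Type*} [Field K] (φ : K →+* ℝ) (α : K) (hα : φ α + 1 ≠ 0) (n : ℕ) :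
    φ ((1 + ((α - 1) / (α + 1)) ^ n) / (1 - ((α - 1) / (α + 1)) ^ n)) =
      GfunInv (Gfun (φ α) ^ n) := by
  have : φ (α + 1) ≠ 0 := by rwa [map_add, map_one]
  simp [GfunInv, Gfun, map_div₀]

lemma stdTrap_eq {a : ℝ} (ha : 1 < a) :
    stdTrap a = {p : ℝ × ℝ | 0 ≤ p.2 ∧ p.2 ≤ 1 ∧ p.2 ≤ p.1 ∧ p.1 ≤ a + 1 - p.2} := by
  apply le_antisymm
  · apply convexHull_min
    · intro p hp
      simp only [Set.mem_insert_iff, Set.mem_singleton_iff] at hp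
      rcases hp with rfl | rfl | rfl | rfl <;> norm_num <;> linarith
    · rintro x ⟨hx0, hx1, hx2, hx3⟩ y ⟨hy0, hy1, hy2, hy3⟩ s t hs ht hst
      have e1 : (s • x + t • y).1 = s * x.1 + t * y.1 := rfl
      have e2 : (s • x + t • y).2 = s * x.2 + t * y.2 := rfl
      refine ⟨?_, ?_, ?_, ?_⟩ <;> simp only [e1, e2] <;>
        nlinarith [mul_le_mul_of_nonneg_left hx3 hs, mul_le_mul_of_nonneg_left hy3 ht,
          mul_le_mul_of_nonneg_left hx2 hs, mul_le_mul_of_nonneg_left hy2 ht,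
          mul_le_mul_of_nonneg_left hx1 hs, mul_le_mul_of_nonneg_left hy1 ht,
          mul_nonneg hs hx0, mul_nonneg ht hy0]
  · rintro ⟨x, y⟩ ⟨h0, h1, h2, h3⟩
    simp only at h0 h1 h2 h3
    have hconv := convex_convexHull ℝ ({((0 : ℝ), (0 : ℝ)), (a + 1, 0), (a, 1), (1, 1)} :
      Set (ℝ × ℝ))
    have hD : 0 < a + 1 - 2 * y := by linarith
    -- `(x, y)` divides the horizontal chord at height `y` in the ratio `s : 1 - s`.
    set s := (x - y) / (a + 1 - 2 * y) with hs
    have hs0 : 0 ≤ s := div_nonneg (by linarith) hD.le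
    have hs1 : s ≤ 1 := by rw [hs, div_le_one hD]; linarith
    have hsD : s * (a + 1 - 2 * y) = x - y := div_mul_cancel₀ _ hD.ne'
    have mem : ∀ p ∈ ({((0 : ℝ), (0 : ℝ)), (a + 1, 0), (a, 1), (1, 1)} : Set (ℝ × ℝ)),
        p ∈ stdTrap a := fun p hp => subset_convexHull ℝ _ hp
    have bottom : (s * (a + 1), (0 : ℝ)) ∈ stdTrap a :=
      hconv.segment_subset (mem (0, 0) (by simp)) (mem (a + 1, 0) (by simp))
        ⟨1 - s, s, by linarith, hs0, by ring, by ext <;> simp⟩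
    have top : (1 + s * (a - 1), (1 : ℝ)) ∈ stdTrap a :=
      hconv.segment_subset (mem (1, 1) (by simp)) (mem (a, 1) (by simp))
        ⟨1 - s, s, by linarith, hs0, by ring, by ext <;> simp; ring⟩
    refine hconv.segment_subset bottom top ⟨1 - y, y, by linarith, h0, by ring, ?_⟩
    ext
    · simp only [Prod.fst_add, Prod.smul_mk, smul_eq_mul]
      linear_combination hsD
    · simp

lemma homothety_stdTrap {r a : ℝ} (v : ℝ × ℝ) (hr : 0 < r) (ha : 1 < a) :
    homothety r v (stdTrap a) = {p : ℝ × ℝ | v.2 ≤ p.2 ∧ p.2 ≤ v.2 + r ∧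
      v.1 + (p.2 - v.2) ≤ p.1 ∧ p.1 ≤ v.1 + r * (a + 1) - (p.2 - v.2)} := by
  rw [stdTrap_eq ha]
  ext p
  simp only [homothety, Set.mem_image]
  constructor
  · rintro ⟨q, ⟨h0, h1, h2, h3⟩, rfl⟩
    exact ⟨by nlinarith, by nlinarith, by nlinarith, by nlinarith⟩
  · rintro ⟨h0, h1, h2, h3⟩
    refine ⟨((p.1 - v.1) / r, (p.2 - v.2) / r), ⟨?_, ?_, ?_, ?_⟩, ?_⟩
    · exact div_nonneg (by linarith) hr.le
    · rw [div_le_one hr]; linarith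
    · rw [div_le_div_iff_of_pos_right hr]; linarith
    · rw [le_sub_iff_add_le, ← add_div, div_le_iff₀ hr]; linarith
    · ext <;> field_simp <;> ring

lemma interior_inter_eq_empty_of_horizontal_separation {X Y : Set (ℝ × ℝ)} {c : ℝ}
    (hX : X ⊆ {p | p.2 ≤ c}) (hY : Y ⊆ {p | c ≤ p.2}) : interior X ∩ interior Y = ∅ := by
  rw [← interior_inter, ← Set.subset_empty_iff]
  calc interior (X ∩ Y) ⊆ interior (Prod.snd ⁻¹' {c}) :=
        interior_mono fun p hp => le_antisymm (hX hp.1) (hY hp.2)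
    _ = ∅ := by
        rw [← isOpenMap_snd.preimage_interior_eq_interior_preimage continuous_snd]
        simp

lemma mk_mem_segment_of_mem_Icc {x lo hi : ℝ} (c : ℝ) (hx : x ∈ Set.Icc lo hi) :
    (x, c) ∈ segment ℝ (lo, c) (hi, c) := by
  rw [← Prod.image_mk_segment_left, segment_eq_Icc (hx.1.trans hx.2)]
  exact Set.mem_image_of_mem _ hx

/-- `hbot` and `htop` say that the lower bases of `s • t(a)` and of `(r - s) • t(b')` are the
sections of `r • t(b)` at relative heights `0` and `s`. -/
lemma TrivialTiling.homothety_stdTrap_of_cut {F : Set (Set (ℝ × ℝ))} {a b b' r s : ℝ}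
    {v : ℝ × ℝ} (ha : 1 < a) (hb' : 1 < b') (hs : 0 < s) (hsr : s < r)
    (hbot : s * (a + 1) = r * (b + 1)) (htop : (r - s) * (b' + 1) + 2 * s = r * (b + 1))
    (hlow : TrivialTiling F (homothety s v (stdTrap a)))
    (hup : TrivialTiling F (homothety (r - s) (v.1 + s, v.2 + s) (stdTrap b'))) :
    TrivialTiling F (homothety r v (stdTrap b)) := by
  have hb : 1 < b := by nlinarith
  refine TrivialTiling.split _ _ _ (v.1 + s, v.2 + s) (v.1 + r * (b + 1) - s, v.2 + s) hlow hup
    ?_ ?_ ?_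
  · rw [homothety_stdTrap v (hs.trans hsr) hb, homothety_stdTrap v hs ha,
      homothety_stdTrap _ (sub_pos.2 hsr) hb']
    ext p
    simp only [Set.mem_union]
    constructor
    · rintro ⟨h1, h2, h3, h4⟩
      by_cases hp : p.2 ≤ v.2 + s
      · exact Or.inl ⟨h1, hp, h3, by linarith⟩
      · exact Or.inr ⟨by linarith, by linarith, by linarith, by linarith⟩
    · rintro (⟨h1, h2, h3, h4⟩ | ⟨h1, h2, h3, h4⟩)
      · exact ⟨h1, by linarith, h3, by linarith⟩
      · exact ⟨by linarith, by linarith, by linarith, by linarith⟩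
  · rw [homothety_stdTrap v hs ha, homothety_stdTrap _ (sub_pos.2 hsr) hb']
    exact interior_inter_eq_empty_of_horizontal_separation (c := v.2 + s)
      (fun p hp => hp.2.1) (fun p hp => hp.1)
  · rw [homothety_stdTrap v hs ha, homothety_stdTrap _ (sub_pos.2 hsr) hb']
    rintro p ⟨⟨-, h2, -, h4⟩, ⟨h1, -, h3, -⟩⟩
    have hp : p = (p.1, v.2 + s) := Prod.ext rfl (le_antisymm h2 h1)
    rw [hp]
    exact mk_mem_segment_of_mem_Icc _ ⟨by linarith, by linarith⟩

lemma trivialTiling_homothety_stdTrap_GfunInv_pow {a r : ℝ} (ha : 1 < a) (n : ℕ) (v : ℝ × ℝ)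
    (hr : 0 < r) :
    TrivialTiling {stdTrap a} (homothety r v (stdTrap (GfunInv (Gfun a ^ (n + 1))))) := by
  have ht₀ := Gfun_pos ha
  have ht₁ := Gfun_lt_one ha
  set t := Gfun a
  have hat : a = GfunInv t := (GfunInv_Gfun (by linarith)).symm
  induction n generalizing r v with
  | zero =>
    rw [zero_add, pow_one, ← hat]
    exact .single r v _ hr rfl
  | succ n ih =>
    have hpow : t ^ (n + 2) < t := pow_lt_self_of_lt_one₀ ht₀ ht₁ (by omega)
    have hpow₁ : t ^ (n + 1) < 1 := pow_lt_one₀ ht₀.le ht₁ (by omega)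
    have hD : 0 < 1 - t ^ (n + 2) := by linarith
    -- the cut height is `r (b + 1)/(a + 1) = r (1 - t)/(1 - tⁿ⁺²)`
    refine TrivialTiling.homothety_stdTrap_of_cut (s := r * (1 - t) / (1 - t ^ (n + 2)))
      ha (one_lt_GfunInv (pow_pos ht₀ _) hpow₁) (by positivity)
      (by rw [div_lt_iff₀ hD]; nlinarith) ?_ ?_ (.single _ _ _ (by positivity) rfl)
      (ih _ (by rw [sub_pos, div_lt_iff₀ hD]; nlinarith))
    · have : 1 - t ≠ 0 := by linarith
      rw [hat, GfunInv, GfunInv]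
      field_simp
      ring
    · have : 1 - t ^ (n + 1) ≠ 0 := by linarith
      rw [GfunInv, GfunInv]
      field_simp
      ring

/-- **Sharpness of the logarithmic condition.** For `a ∈ ℚ[√d]` with `1 < ā < a` there are
infinitely many distinct `b ∈ ℚ[√d]` with `ln G(b)/ln G(b̄) = ln G(a)/ln G(ā)` such that
`t(b)` admits a trivial tiling by homothetic copies of `t(a)`. -/
theorem statement4 (d : ℚ) (hd : 0 < d) (hirr : Irrational (Real.sqrt d))
    (pa qa : ℚ) (a abar : ℝ)
    (hae : a = pa + qa * Real.sqrt d) (habar : abar = pa - qa * Real.sqrt d)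
    (ha1 : 1 < abar) (ha2 : abar < a) :
    {b : ℝ | ∃ pb qb : ℚ, b = pb + qb * Real.sqrt d ∧
      Real.log (Gfun b) / Real.log (Gfun ((pb : ℝ) - qb * Real.sqrt d)) =
        Real.log (Gfun a) / Real.log (Gfun abar) ∧
      TrivialTiling {stdTrap a} (stdTrap b)}.Infinite := by
  have := hirr.fact_sq_ne
  have ha : 1 < a := ha1.trans ha2
  set α : QuadraticAlgebra ℚ d 0 := ⟨pa, qa⟩
  have hσα : sqrtEmbedding hd.le α = a := by rw [sqrtEmbedding_apply, hae]
  have hτα : conjSqrtEmbedding hd.le α = abar := by rw [conjSqrtEmbedding_apply, habar]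
  set g := (α - 1) / (α + 1)
  set β : ℕ → QuadraticAlgebra ℚ d 0 := fun n => (1 + g ^ (n + 1)) / (1 - g ^ (n + 1))
  have hσβ n : sqrtEmbedding hd.le (β n) = GfunInv (Gfun a ^ (n + 1)) := by
    rw [map_GfunInv_pow _ _ (by linarith), hσα]
  have hτβ n : conjSqrtEmbedding hd.le (β n) = GfunInv (Gfun abar ^ (n + 1)) := by
    rw [map_GfunInv_pow _ _ (by linarith), hτα]
  have hGβ {x} (hx : 1 < x) n : Gfun (GfunInv (Gfun x ^ (n + 1))) = Gfun x ^ (n + 1) :=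
    Gfun_GfunInv (pow_lt_one₀ (Gfun_pos hx).le (Gfun_lt_one hx) (by omega)).ne
  refine Set.infinite_of_injective_forall_mem (f := fun n => sqrtEmbedding hd.le (β n))
    (fun m n hmn => ?_) (fun n => ⟨(β n).re, (β n).im, ?_, ?_, ?_⟩)
  · have := congrArg Gfun hmn
    simp only [hσβ, hGβ ha] at this
    exact Nat.succ_injective ((pow_right_strictAnti₀ (Gfun_pos ha) (Gfun_lt_one ha)).injective this)
  · exact sqrtEmbedding_apply hd.le (β n)
  · rw [← conjSqrtEmbedding_apply hd.le, hσβ, hτβ, hGβ ha, hGβ ha1, Real.log_pow, Real.log_pow,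
      mul_div_mul_left _ _ (by positivity)]
  · simpa [hσβ, homothety] using
      trivialTiling_homothety_stdTrap_GfunInv_pow ha n (0, 0) one_pos
end
end

section
/- Let d be a positive rational with √d irrational. For every q ∈ ℚ, every real N > 2 and every ε > 0 there exists x ∈ ℚ[√d] with x > N, |x̄ − q/√d| < ε, and h(x) = q (i.e., writing G(x) = p' + q'√d with p', q' ∈ ℚ, one has q' ≠ 0 and p'/q' = q). -/
noncomputable section

set_option maxHeartbeats 1000000

lemma aux (d : ℚ) (hd : 0 < d) (hirr : Irrational (Real.sqrt d)) (q t : ℚ) (N ε : ℝ)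
    (hN : 2 < N)
    (hx : N < 1 + 2*((q:ℝ)-t)/((t:ℝ) - Real.sqrt d))
    (hc : |1 + 2*((q:ℝ)-t)/((t:ℝ) + Real.sqrt d) - q / Real.sqrt d| < ε)
    (hne : t ≠ q) :
    ∃ px qx : ℚ,
      N < (px : ℝ) + qx * Real.sqrt d ∧
      |((px : ℝ) - qx * Real.sqrt d) - q / Real.sqrt d| < ε ∧
      ∃ p' q' : ℚ, Gfun ((px : ℝ) + qx * Real.sqrt d) = (p' : ℝ) + q' * Real.sqrt d ∧
        q' ≠ 0 ∧ p' / q' = q := by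
  set s := Real.sqrt d with hs
  have hd' : (0:ℝ) < (d:ℝ) := by exact_mod_cast hd
  have hs0 : 0 < s := Real.sqrt_pos.mpr hd'
  have hss : s * s = (d:ℝ) := Real.mul_self_sqrt hd'.le
  have hts : (t:ℝ) - s ≠ 0 := by
    intro h
    exact hirr ⟨t, by linarith⟩
  have htp : (t:ℝ) + s ≠ 0 := by
    intro h
    exact hirr ⟨-t, by push_cast; linarith⟩
  have ht2 : t^2 - d ≠ 0 := by
    intro h
    have h' : ((t:ℝ) - s) * ((t:ℝ) + s) = 0 := by
      have : (t:ℝ)^2 - (d:ℝ) = 0 := by exact_mod_cast h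
      nlinarith [hss]
    rcases mul_eq_zero.mp h' with h'' | h'' <;> [exact hts h''; exact htp h'']
  set qx : ℚ := 2*(q-t)/(t^2-d) with hqx
  set px : ℚ := 1 + t*qx with hpx
  have hqx0 : qx ≠ 0 := by
    apply div_ne_zero _ ht2
    intro h
    apply hne
    have : q - t = 0 := by linarith
    linarith
  have e1 : ((t:ℝ)^2 - (d:ℝ)) = ((t:ℝ)-s)*((t:ℝ)+s) := by nlinarith [hss]
  have hX : (px:ℝ) + qx*s = 1 + 2*((q:ℝ)-t)/((t:ℝ)-s) := by
    rw [hpx, hqx]; push_cast; rw [e1]; field_simp; ring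
  have hY : (px:ℝ) - qx*s = 1 + 2*((q:ℝ)-t)/((t:ℝ)+s) := by
    rw [hpx, hqx]; push_cast; rw [e1]; field_simp; ring
  set x : ℝ := (px:ℝ) + qx*s with hxdef
  set y : ℝ := (px:ℝ) - qx*s with hydef
  have hxN : N < x := by rw [hX]; exact hx
  have hx1 : (0:ℝ) < x + 1 := by linarith
  have hy1 : y + 1 ≠ 0 := by
    rw [hY]
    intro h
    have h2 : 2*((q:ℝ)-t) = -2*((t:ℝ)+s) := by
      have := (div_eq_iff htp).mp (by linarith : 2*((q:ℝ)-t)/((t:ℝ)+s) = -2)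
      linarith
    exact hirr ⟨-q, by push_cast; linarith⟩
  set D : ℚ := (px+1)^2 - qx^2*d with hD
  have hDxy : (D:ℝ) = (x+1)*(y+1) := by
    rw [hD, hxdef, hydef]; push_cast; nlinarith [hss]
  have hD0 : D ≠ 0 := by
    intro h
    have : (D:ℝ) = 0 := by exact_mod_cast h
    rw [hDxy] at this
    rcases mul_eq_zero.mp this with h' | h' <;> [linarith; exact hy1 h']
  set q' : ℚ := 2*qx/D with hq'
  set p' : ℚ := (px^2 - 1 - qx^2*d)/D with hp'
  have hq'0 : q' ≠ 0 := div_ne_zero (mul_ne_zero two_ne_zero hqx0) hD0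
  have hnum : (x-1)*(y+1) = ((px:ℝ)^2-1-(qx:ℝ)^2*d) + 2*qx*s := by
    rw [hxdef, hydef]; push_cast; nlinarith [hss]
  have hG : Gfun x = (p':ℝ) + q'*s := by
    have hDr : (D:ℝ) ≠ 0 := by exact_mod_cast hD0
    have h1 : (p':ℝ) + q'*s = (((px:ℝ)^2-1-(qx:ℝ)^2*d) + 2*qx*s)/(D:ℝ) := by
      rw [hp', hq']; push_cast; ring
    rw [h1, ← hnum, hDxy, Gfun]
    rw [mul_div_mul_right _ _ hy1]
  have hpq : p' / q' = q := by
    have h1 : px^2 - 1 - qx^2*d = q*(2*qx) := by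
      rw [hpx, hqx]; field_simp; ring
    rw [hp', hq', h1]
    have h2 : (2:ℚ)*qx ≠ 0 := mul_ne_zero two_ne_zero hqx0
    field_simp
  refine ⟨px, qx, hxN, by rw [hydef] at hY; rw [hY]; exact hc, p', q', hG, hq'0, hpq⟩

lemma aux2 (s ε q t : ℝ) (hs0 : 0 < s) (hε : 0 < ε) (hts : s < t + s)
    (hb : |t - s| * (|q + s| + 1) < ε * (s*s)) :
    |1 + 2*(q-t)/(t+s) - q/s| < ε := by
  have htsp : 0 < t + s := lt_trans hs0 hts
  have htp : t + s ≠ 0 := ne_of_gt htsp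
  have hsne : s ≠ 0 := ne_of_gt hs0
  have hid : 1 + 2*(q-t)/(t+s) - q/s = ((s-t)*(s+q))/(s*(t+s)) := by
    field_simp; ring
  rw [hid, abs_div, abs_mul]
  have hdenpos : 0 < s*(t+s) := mul_pos hs0 htsp
  rw [abs_of_pos hdenpos, div_lt_iff₀ hdenpos]
  have h1 : |s-t| = |t-s| := abs_sub_comm s t
  have h2 : |s+q| = |q+s| := by rw [add_comm]
  rw [h1, h2]
  have h3 : |t-s| * |q+s| ≤ |t-s| * ( |q+s| + 1 ) := by
    nlinarith [abs_nonneg (t-s)]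
  have h4 : ε*(s*s) ≤ ε*(s*(t+s)) := mul_le_mul_of_nonneg_left (by nlinarith) hε.le
  linarith


/-- **Lemma on large `x` with fixed `h(x)`.** For every `q ∈ ℚ`, `N > 2` and `ε > 0` there
is `x = px + qx√d ∈ ℚ[√d]` with `x > N`, `|x̄ - q/√d| < ε` and `h(x) = q`, i.e. writing
`G(x) = p' + q'√d` with `p', q' ∈ ℚ` one has `q' ≠ 0` and `p'/q' = q`. -/
theorem statement6 (d : ℚ) (hd : 0 < d) (hirr : Irrational (Real.sqrt d))
    (q : ℚ) (N : ℝ) (hN : 2 < N) (ε : ℝ) (hε : 0 < ε) :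
    ∃ px qx : ℚ,
      N < (px : ℝ) + qx * Real.sqrt d ∧
      |((px : ℝ) - qx * Real.sqrt d) - q / Real.sqrt d| < ε ∧
      ∃ p' q' : ℚ, Gfun ((px : ℝ) + qx * Real.sqrt d) = (p' : ℝ) + q' * Real.sqrt d ∧
        q' ≠ 0 ∧ p' / q' = q := by
  set s := Real.sqrt d with hs
  have hd' : (0:ℝ) < (d:ℝ) := by exact_mod_cast hd
  have hs0 : 0 < s := Real.sqrt_pos.mpr hd'
  have hNpos : 0 < N := by linarith
  have habs : 0 < |(q:ℝ) + s| + 1 := by positivity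
  rcases lt_trichotomy ((q:ℚ):ℝ) s with hlt | heq | hgt
  · -- q < s : pick t ∈ (s - δ, s)
    set δ := min ((s - (q:ℝ))/N) (min ((s - (q:ℝ))/2) (min (ε*s*s/(|(q:ℝ)+s|+1)) (s/2)))
      with hδdef
    have hδ0 : 0 < δ := lt_min (div_pos (by linarith) hNpos)
      (lt_min (div_pos (by linarith) two_pos)
        (lt_min (by positivity) (by positivity)))
    obtain ⟨t, ht1, ht2⟩ := exists_rat_btwn (show s - δ < s by linarith)
    have d1 : δ ≤ (s - (q:ℝ))/N := min_le_left _ _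
    have d2 : δ ≤ (s - (q:ℝ))/2 := le_trans (min_le_right _ _) (min_le_left _ _)
    have d3 : δ ≤ ε*s*s/(|(q:ℝ)+s|+1) :=
      le_trans (min_le_right _ _) (le_trans (min_le_right _ _) (min_le_left _ _))
    have d4 : δ ≤ s/2 :=
      le_trans (min_le_right _ _) (le_trans (min_le_right _ _) (min_le_right _ _))
    have htq : (q:ℝ) < t := by linarith
    have hne : t ≠ q := by
      intro h; rw [h] at htq; exact lt_irrefl _ htq
    have e1 : δ * N ≤ s - (q:ℝ) := (le_div_iff₀ hNpos).mp d1
    have hkey : N*(s - (t:ℝ)) < 2*((t:ℝ) - q) := by nlinarith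
    have hx : N < 1 + 2*((q:ℝ)-t)/((t:ℝ) - s) := by
      have hpos : (0:ℝ) < s - t := by linarith
      have hrw : 2*((q:ℝ)-t)/((t:ℝ)-s) = 2*((t:ℝ)-q)/(s - t) := by
        rw [← neg_div_neg_eq]; congr 1 <;> ring
      rw [hrw]
      have : N < 2*((t:ℝ)-q)/(s-t) := (lt_div_iff₀ hpos).mpr (by linarith)
      linarith
    have hc : |1 + 2*((q:ℝ)-t)/((t:ℝ) + s) - (q:ℝ)/s| < ε := by
      apply aux2 s ε q t hs0 hε (by linarith)
      have e3 : δ*(|(q:ℝ)+s|+1) ≤ ε*s*s := by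
        have := (le_div_iff₀ habs).mp d3
        linarith
      have e4 : |(t:ℝ) - s| = s - t := by rw [abs_of_neg (by linarith)]; ring
      rw [e4]
      nlinarith
    exact aux d hd hirr q t N ε hN hx hc hne
  · exact absurd ⟨q, heq⟩ hirr
  · -- s < q : pick t ∈ (s, s + δ)
    set δ := min (((q:ℝ) - s)/N) (min (((q:ℝ) - s)/2) (ε*s*s/(|(q:ℝ)+s|+1))) with hδdef
    have hδ0 : 0 < δ := lt_min (div_pos (by linarith) hNpos)
      (lt_min (div_pos (by linarith) two_pos) (by positivity))
    obtain ⟨t, ht1, ht2⟩ := exists_rat_btwn (show s < s + δ by linarith)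
    have d1 : δ ≤ ((q:ℝ) - s)/N := min_le_left _ _
    have d2 : δ ≤ ((q:ℝ) - s)/2 := le_trans (min_le_right _ _) (min_le_left _ _)
    have d3 : δ ≤ ε*s*s/(|(q:ℝ)+s|+1) := le_trans (min_le_right _ _) (min_le_right _ _)
    have htq : (t:ℝ) < q := by linarith
    have hne : t ≠ q := by
      intro h; rw [h] at htq; exact lt_irrefl _ htq
    have e1 : δ * N ≤ (q:ℝ) - s := (le_div_iff₀ hNpos).mp d1
    have hkey : N*((t:ℝ) - s) < 2*((q:ℝ) - t) := by nlinarith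
    have hx : N < 1 + 2*((q:ℝ)-t)/((t:ℝ) - s) := by
      have hpos : (0:ℝ) < (t:ℝ) - s := by linarith
      have : N < 2*((q:ℝ)-t)/((t:ℝ)-s) := (lt_div_iff₀ hpos).mpr (by linarith)
      linarith
    have hc : |1 + 2*((q:ℝ)-t)/((t:ℝ) + s) - (q:ℝ)/s| < ε := by
      apply aux2 s ε q t hs0 hε (by linarith)
      have e3 : δ*(|(q:ℝ)+s|+1) ≤ ε*s*s := by
        have := (le_div_iff₀ habs).mp d3
        linarith
      have e4 : |(t:ℝ) - s| = (t:ℝ) - s := abs_of_pos (by linarith)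
      rw [e4]
      nlinarith
    exact aux d hd hirr q t N ε hN hx hc hne
end
end

section
/- Let d be a positive rational with √d irrational, and let a, b ∈ ℚ[√d] with a > 0, b > 0, ā > 0 and b̄ < 0. Then for every q ∈ ℚ and every M > 0 there exists x ∈ ℚ[√d] such that: h(x) = q; x > M; and x = m·a + n·b for some positive rationals m, n. -/
noncomputable section

/-- Membership in `ℚ[√d] = {p + q√d : p, q ∈ ℚ}` as a subset of `ℝ`. -/
def memQd (d : ℚ) (x : ℝ) : Prop := ∃ p q : ℚ, x = p + q * Real.sqrt d

/-!
For rational `t`, put `ρ = (t - √d) / (q - √d)` and `x = 2 / ρ - 1`. Then `x ∈ ℚ[√d]`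
and `G(x) = 1 - ρ = (q - t) / (q - √d)` is a rational multiple of `q + √d`, so `h(x) = q`.
As `t → √d` from the side of `q`, `ρ → 0⁺`: `x → +∞` while its conjugate
`x̄ = 2 (q + √d) / (t + √d) - 1` stays bounded. By Cramer's rule in the embedding
`x ↦ (x, x̄)`, the coordinates of `x` in the basis `a, b` are positive as soon as
`a x̄ < ā x` and `b̄ x < b x̄`, which holds for `x` large since `ā > 0 > b̄`.
-/

open Filter Topology Set

theorem Gfun_two_mul_inv_sub_one {r : ℝ} (hr : r ≠ 0) : Gfun (2 * r⁻¹ - 1) = 1 - r := by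
  unfold Gfun
  field_simp
  ring

theorem exists_pos_rat_combination {s : ℝ} {pa qa pb qb P Q : ℚ}
    (hab : (pa + qa * s) * (pb - qb * s) < (pa - qa * s) * (pb + qb * s))
    (hm : (pb - qb * s) * (P + Q * s) < (pb + qb * s) * (P - Q * s))
    (hn : (pa + qa * s) * (P - Q * s) < (pa - qa * s) * (P + Q * s)) :
    ∃ m n : ℚ, 0 < m ∧ 0 < n ∧
      (P + Q * s : ℝ) = m * (pa + qa * s) + n * (pb + qb * s) := by
  have hdet : pa * qb - qa * pb ≠ 0 := by
    intro h
    have : ((pa - qa * s) * (pb + qb * s) - (pa + qa * s) * (pb - qb * s) : ℝ)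
        = 2 * s * (pa * qb - qa * pb : ℚ) := by push_cast; ring
    rw [h] at this
    push_cast at this
    linarith
  set m := (P * qb - Q * pb) / (pa * qb - qa * pb)
  set n := (pa * Q - qa * P) / (pa * qb - qa * pb)
  have hP : m * pa + n * pb = P := by
    rw [div_mul_eq_mul_div, div_mul_eq_mul_div, ← add_div, div_eq_iff hdet]; ring
  have hQ : m * qa + n * qb = Q := by
    rw [div_mul_eq_mul_div, div_mul_eq_mul_div, ← add_div, div_eq_iff hdet]; ring
  have hPR : (m * pa + n * pb : ℝ) = P := by exact_mod_cast hP
  have hQR : (m * qa + n * qb : ℝ) = Q := by exact_mod_cast hQ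
  have hmR : (m : ℝ) * ((pa - qa * s) * (pb + qb * s) - (pa + qa * s) * (pb - qb * s))
      = (pb + qb * s) * (P - Q * s) - (pb - qb * s) * (P + Q * s) := by
    linear_combination 2 * s * qb * hPR - 2 * s * pb * hQR
  have hnR : (n : ℝ) * ((pa - qa * s) * (pb + qb * s) - (pa + qa * s) * (pb - qb * s))
      = (pa - qa * s) * (P + Q * s) - (pa + qa * s) * (P - Q * s) := by
    linear_combination 2 * s * pa * hQR - 2 * s * qa * hPR
  refine ⟨m, n, ?_, ?_, ?_⟩
  · exact_mod_cast pos_of_mul_pos_left (hmR ▸ sub_pos.2 hm) (sub_pos.2 hab).le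
  · exact_mod_cast pos_of_mul_pos_left (hnR ▸ sub_pos.2 hn) (sub_pos.2 hab).le
  · linear_combination -hPR - s * hQR

theorem eventually_mul_lt_mul_of_tendsto {α : Type*} {l : Filter α} {X Y : α → ℝ} {L c : ℝ}
    (hX : Tendsto X l atTop) (hY : Tendsto Y l (𝓝 L)) (hc : 0 < c) (A : ℝ) :
    ∀ᶠ i in l, A * Y i < c * X i := by
  have : Tendsto (fun i => c * X i + -(A * Y i)) l atTop :=
    (hX.const_mul_atTop hc).atTop_add (hY.const_mul A).neg
  filter_upwards [this.eventually_gt_atTop 0] with i hi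
  linarith

theorem frequently_rat_eq_add_mul_sub {s q : ℝ} (hqs : q ≠ s) :
    ∃ᶠ ρ in 𝓝[>] (0 : ℝ), ∃ t : ℚ, (t : ℝ) = s + ρ * (q - s) := by
  have hqs' : q - s ≠ 0 := sub_ne_zero.2 hqs
  rw [(nhdsGT_basis 0).frequently_iff]
  intro ε hε
  have hU : IsOpen ((fun t => (t - s) / (q - s)) ⁻¹' Ioo 0 ε) :=
    isOpen_Ioo.preimage (by fun_prop)
  obtain ⟨t, ht⟩ := Rat.denseRange_cast.exists_mem_open hU
    ⟨s + ε / 2 * (q - s), by simp [hqs', hε]⟩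
  exact ⟨_, ht, t, by field_simp; ring⟩

theorem sub_ne_zero_and_add_ne_zero_of_sq_ne {s : ℝ} {d r : ℚ} (hs : s ^ 2 = d)
    (hr : r ^ 2 ≠ d) : (r : ℝ) - s ≠ 0 ∧ (r : ℝ) + s ≠ 0 := by
  have h : ((r : ℝ) - s) * (r + s) = ((r ^ 2 - d : ℚ) : ℝ) := by push_cast; rw [← hs]; ring
  exact mul_ne_zero_iff.1 (h ▸ Rat.cast_ne_zero.2 (sub_ne_zero.2 hr))

theorem exists_rat_coords_and_conj {d q t : ℚ} {s ρ : ℝ} (hs : s ^ 2 = d) (htd : t ^ 2 ≠ d)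
    (ht : (t : ℝ) = s + ρ * (q - s)) :
    ∃ P Q : ℚ, 2 * ρ⁻¹ - 1 = P + Q * s ∧
      2 * (q + s) / (2 * s + ρ * (q - s)) - 1 = P - Q * s := by
  have htdR : (t : ℝ) ^ 2 - d ≠ 0 := sub_ne_zero.2 (by exact_mod_cast htd)
  obtain ⟨hts, hts'⟩ := sub_ne_zero_and_add_ne_zero_of_sq_ne hs htd
  have hqs : (q : ℝ) - s ≠ 0 := by
    rintro h
    rw [h, mul_zero, add_zero] at ht
    exact hts (sub_eq_zero.2 ht)
  have hρ' : ρ = (t - s) / (q - s) := by field_simp; linarith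
  have h2 : 2 * s + ρ * (q - s) = t + s := by linarith
  refine ⟨2 * (q * t - d) / (t ^ 2 - d) - 1, 2 * (q - t) / (t ^ 2 - d), ?_, ?_⟩
  · rw [hρ']; push_cast; field_simp; linear_combination (2 * (q : ℝ) - 2 * t) * hs
  · rw [h2]; push_cast; field_simp; linear_combination (2 * (q : ℝ) - 2 * t) * hs

theorem exists_Gfun_two_mul_inv_sub_one_eq {d q t : ℚ} {s ρ : ℝ} (hs : s ^ 2 = d)
    (hqd : q ^ 2 ≠ d) (hρ0 : ρ ≠ 0) (hρ1 : ρ ≠ 1) (ht : (t : ℝ) = s + ρ * (q - s)) :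
    ∃ p' q' : ℚ, Gfun (2 * ρ⁻¹ - 1) = p' + q' * s ∧ q' ≠ 0 ∧ p' / q' = q := by
  have hqdR : (q : ℝ) ^ 2 - d ≠ 0 := sub_ne_zero.2 (by exact_mod_cast hqd)
  have hqs : (q : ℝ) - s ≠ 0 := (sub_ne_zero_and_add_ne_zero_of_sq_ne hs hqd).1
  have htq : q - t ≠ 0 := by
    intro h
    have : ((q - t : ℚ) : ℝ) = (1 - ρ) * (q - s) := by push_cast; rw [ht]; ring
    rw [h, Rat.cast_zero, eq_comm, mul_eq_zero, sub_eq_zero] at this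
    exact this.elim (fun h1 => hρ1 h1.symm) hqs
  refine ⟨(q - t) * q / (q ^ 2 - d), (q - t) / (q ^ 2 - d),
    ?_, div_ne_zero htq (sub_ne_zero.2 hqd), ?_⟩
  · rw [Gfun_two_mul_inv_sub_one hρ0]
    have hρ : ρ = (t - s) / (q - s) := by field_simp; linarith
    rw [hρ]; push_cast; field_simp; linear_combination ((q : ℝ) - t) * hs
  · field_simp [sub_ne_zero.2 hqd]

theorem statement7_general (d : ℚ) (hd : 0 < d) (hirr : Irrational (Real.sqrt d))
    (pa qa pb qb : ℚ) (a b : ℝ)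
    (hae : a = pa + qa * Real.sqrt d) (hbe : b = pb + qb * Real.sqrt d)
    (ha : 0 < a) (hb : 0 < b)
    (habar : 0 < (pa : ℝ) - qa * Real.sqrt d)
    (hbbar : (pb : ℝ) - qb * Real.sqrt d < 0)
    (q : ℚ) (M : ℝ) :
    ∃ x : ℝ, memQd d x ∧
      (∃ p' q' : ℚ, Gfun x = (p' : ℝ) + q' * Real.sqrt d ∧ q' ≠ 0 ∧ p' / q' = q) ∧
      M < x ∧
      ∃ m n : ℚ, 0 < m ∧ 0 < n ∧ x = m * a + n * b := by
  set s := Real.sqrt d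
  have hs : s ^ 2 = d := Real.sq_sqrt (by exact_mod_cast hd.le)
  have hs0 : 0 < s := Real.sqrt_pos.2 (by exact_mod_cast hd)
  have hsq : ∀ r : ℚ, r ^ 2 ≠ d := fun r hr => hirr ⟨|r|, by
    rw [Rat.cast_abs, ← Real.sqrt_sq_eq_abs, ← Rat.cast_pow, hr]⟩
  have hqs : (q : ℝ) ≠ s := fun h => hirr ⟨q, h⟩
  set X : ℝ → ℝ := fun ρ => 2 * ρ⁻¹ - 1
  -- the conjugate of `X ρ` whenever `s + ρ * (q - s)` is rational
  set Y : ℝ → ℝ := fun ρ => 2 * (q + s) / (2 * s + ρ * (q - s)) - 1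
  have hX : Tendsto X (𝓝[>] 0) atTop := by
    simpa [X, sub_eq_add_neg] using
      (tendsto_inv_nhdsGT_zero.const_mul_atTop two_pos).atTop_add tendsto_const_nhds
  have hY : Tendsto Y (𝓝[>] 0) (𝓝 (Y 0)) :=
    ((by fun_prop (disch := simp [hs0.ne']) : ContinuousAt Y 0).tendsto).mono_left
      nhdsWithin_le_nhds
  have hρ : ∀ᶠ ρ in 𝓝[>] (0 : ℝ), ρ ∈ Ioo 0 1 := (nhdsGT_basis 0).mem_of_mem one_pos
  obtain ⟨ρ, ⟨⟨hρ0, hρ1⟩, hxM, hxb, hxa⟩, t, ht⟩ :=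
    (hρ.and <| (hX.eventually_gt_atTop M).and <|
      (eventually_mul_lt_mul_of_tendsto hX hY (neg_pos.2 hbbar) (-b)).and <|
      eventually_mul_lt_mul_of_tendsto hX hY habar a).and_frequently
      (frequently_rat_eq_add_mul_sub hqs) |>.exists
  obtain ⟨P, Q, hx, hy⟩ : ∃ P Q : ℚ, X ρ = P + Q * s ∧ Y ρ = P - Q * s :=
    exists_rat_coords_and_conj hs (hsq t) ht
  rw [hx, hy] at hxa hxb
  subst hae hbe
  obtain ⟨m, n, hm, hn, hmn⟩ := exists_pos_rat_combination
    ((mul_neg_of_pos_of_neg ha hbbar).trans (mul_pos habar hb)) (by linarith) hxa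
  exact ⟨X ρ, ⟨P, Q, hx⟩, exists_Gfun_two_mul_inv_sub_one_eq hs (hsq q) hρ0.ne' hρ1.ne ht,
    hxM, m, n, hm, hn, hx.trans hmn⟩

/-- For `a, b ∈ ℚ[√d]` with `a, b > 0`, `ā > 0`, `b̄ < 0`, and every `q ∈ ℚ`, `M > 0`,
there exists `x ∈ ℚ[√d]` with `h(x) = q`, `x > M`, and `x = m·a + n·b` for some positive
rationals `m, n`. -/
theorem statement7 (d : ℚ) (hd : 0 < d) (hirr : Irrational (Real.sqrt d))
    (pa qa pb qb : ℚ) (a b : ℝ)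
    (hae : a = pa + qa * Real.sqrt d) (hbe : b = pb + qb * Real.sqrt d)
    (ha : 0 < a) (hb : 0 < b)
    (habar : 0 < (pa : ℝ) - qa * Real.sqrt d)
    (hbbar : (pb : ℝ) - qb * Real.sqrt d < 0)
    (q : ℚ) (M : ℝ) (hM : 0 < M) :
    ∃ x : ℝ, memQd d x ∧
      (∃ p' q' : ℚ, Gfun x = (p' : ℝ) + q' * Real.sqrt d ∧ q' ≠ 0 ∧ p' / q' = q) ∧
      M < x ∧
      ∃ m n : ℚ, 0 < m ∧ 0 < n ∧ x = m * a + n * b :=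
  statement7_general d hd hirr pa qa pb qb a b hae hbe ha hb habar hbbar q M

end
end

section
/- Let α be a set of reals > 1. If a ∈ P(α) and m is a positive rational, then a·m ∈ P(α). -/
noncomputable section

/-- `T(α)`: the set of `b > 1` such that `t(b)` is tiled by homothetic copies of the
trapezoids `t(a)`, `a ∈ α`. -/
def Tset (α : Set ℝ) : Set ℝ :=
  {b | 1 < b ∧ IsTiling (stdTrap b) (stdTrap '' α)}

/-- `P(α)`: the set of `b > 0` such that `p(b)` is tiled by homothetic copies of the
trapezoids `t(a)`, `a ∈ α`. -/
def Pset (α : Set ℝ) : Set ℝ :=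
  {b | 0 < b ∧ IsTiling (stdPar b) (stdTrap '' α)}

/-! Write `m = P / q`. The shear `(u, y) ↦ (u + y, y)` maps the rectangle `[0, c] × [0, 1]`
onto `p(c)`, so cutting `[0, P a / q] × [0, 1]` into a `P × q` grid of copies of `[0, a] × [0, 1]`
scaled by `1 / q` cuts `p(P a / q)` into homothetic copies of `p(a)` with disjoint interiors.
Tiling each copy by the image of the given tiling of `p(a)` tiles `p(a m)`. -/

open Set Function

lemma homothety_eq_image (r : ℝ) (v : ℝ × ℝ) (S : Set (ℝ × ℝ)) :
    homothety r v S = (fun x => r • x + v) '' S := rfl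

lemma homothety_homothety (r s : ℝ) (v w : ℝ × ℝ) (S : Set (ℝ × ℝ)) :
    homothety r v (homothety s w S) = homothety (r * s) (r • w + v) S := by
  simp only [homothety_eq_image, image_image, smul_add, smul_smul, add_assoc]

lemma homothety_iUnion {ι : Sort*} (r : ℝ) (v : ℝ × ℝ) (S : ι → Set (ℝ × ℝ)) :
    homothety r v (⋃ i, S i) = ⋃ i, homothety r v (S i) :=
  image_iUnion

lemma interior_homothety {r : ℝ} (hr : r ≠ 0) (v : ℝ × ℝ) (S : Set (ℝ × ℝ)) :
    interior (homothety r v S) = homothety r v (interior S) :=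
  (((Homeomorph.smulOfNeZero r hr).trans (Homeomorph.addRight v)).image_interior S).symm

lemma disjoint_homothety_iff {r : ℝ} (hr : r ≠ 0) (v : ℝ × ℝ) {A B : Set (ℝ × ℝ)} :
    Disjoint (homothety r v A) (homothety r v B) ↔ Disjoint A B :=
  disjoint_image_iff ((add_left_injective v).comp (smul_right_injective _ hr))

lemma homothety_Icc_prod_Icc {r : ℝ} (hr : 0 < r) (v : ℝ × ℝ) (a b c d : ℝ) :
    homothety r v (Icc a b ×ˢ Icc c d) =
      Icc (r * a + v.1) (r * b + v.1) ×ˢ Icc (r * c + v.2) (r * d + v.2) := by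
  change Prod.map (r * · + v.1) (r * · + v.2) '' _ = _
  rw [prodMap_image_prod, image_affine_Icc' hr, image_affine_Icc' hr]

section Tiling

variable {F : Set (Set (ℝ × ℝ))}

lemma isTiling_of_finite {ι : Type*} [Finite ι] {S : Set (ℝ × ℝ)}
    (r : ι → ℝ) (v : ι → ℝ × ℝ) (t : ι → Set (ℝ × ℝ)) (ht : ∀ i, t i ∈ F) (hr : ∀ i, 0 < r i)
    (hS : S = ⋃ i, homothety (r i) (v i) (t i))
    (hdisj : Pairwise (Disjoint on fun i => interior (homothety (r i) (v i) (t i)))) :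
    IsTiling S F := by
  obtain ⟨n, ⟨e⟩⟩ := Finite.exists_equiv_fin ι
  refine ⟨n, r ∘ e.symm, v ∘ e.symm, t ∘ e.symm, fun i => ht _, fun i => hr _, ?_,
    fun i j hij => disjoint_iff_inter_eq_empty.mp (hdisj (e.symm.injective.ne hij))⟩
  rw [hS, ← e.symm.surjective.iUnion_comp]
  rfl

lemma IsTiling.homothety {S : Set (ℝ × ℝ)} (h : IsTiling S F) {r : ℝ} (hr : 0 < r)
    (v : ℝ × ℝ) : IsTiling (homothety r v S) F := by
  obtain ⟨n, s, w, t, ht, hs, rfl, hdisj⟩ := h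
  refine isTiling_of_finite (fun i => r * s i) (fun i => r • w i + v) t ht
    (fun i => mul_pos hr (hs i)) ?_ fun i j hij => ?_
  · simp only [homothety_iUnion, homothety_homothety]
  · simp only [onFun, ← homothety_homothety, interior_homothety hr.ne',
      disjoint_homothety_iff hr.ne']
    exact disjoint_iff_inter_eq_empty.mpr (hdisj i j hij)

lemma IsTiling.iUnion {ι : Type*} [Finite ι] {S : ι → Set (ℝ × ℝ)}
    (h : ∀ i, IsTiling (S i) F) (hdisj : Pairwise (Disjoint on fun i => interior (S i))) :
    IsTiling (⋃ i, S i) F := by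
  choose n r v t ht hr hS hint using h
  refine isTiling_of_finite (ι := Σ i, Fin (n i)) (fun k => r k.1 k.2) (fun k => v k.1 k.2)
    (fun k => t k.1 k.2) (fun k => ht _ _) (fun k => hr _ _) ?_ ?_
  · simp only [hS, iUnion_sigma]
  · rintro ⟨i, x⟩ ⟨j, y⟩ hne
    by_cases hij : i = j
    · subst hij
      exact disjoint_iff_inter_eq_empty.mpr (hint i x y fun hxy => hne (hxy ▸ rfl))
    · refine (hdisj hij).mono (interior_mono ?_) (interior_mono ?_) <;>
        simp only [hS] <;> exact subset_iUnion_of_subset _ subset_rfl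

end Tiling

lemma Icc_zero_natCast_mul_eq_iUnion {w : ℝ} (hw : 0 < w) {n : ℕ} (hn : 0 < n) :
    Icc 0 (n * w) = ⋃ k : Fin n, Icc (k * w) ((k + 1) * w) := by
  refine Subset.antisymm (fun x hx => ?_)
    (iUnion_subset fun k => Icc_subset_Icc (by positivity) ?_)
  · obtain ⟨hx0, hxn⟩ := hx
    have hxw : 0 ≤ x / w := div_nonneg hx0 hw.le
    refine mem_iUnion.mpr ⟨⟨min ⌊x / w⌋₊ (n - 1), by omega⟩, ?_, ?_⟩
    · calc ((min ⌊x / w⌋₊ (n - 1) : ℕ) : ℝ) * w ≤ ⌊x / w⌋₊ * w := by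
            gcongr; exact min_le_left _ _
        _ ≤ x / w * w := by gcongr; exact Nat.floor_le hxw
        _ = x := div_mul_cancel₀ x hw.ne'
    · rcases min_choice ⌊x / w⌋₊ (n - 1) with h | h <;> simp only [h]
      · rw [← div_le_iff₀ hw]
        exact (Nat.lt_floor_add_one _).le
      · rwa [Nat.cast_sub hn, Nat.cast_one, sub_add_cancel]
  · gcongr
    exact_mod_cast k.isLt

lemma pairwise_disjoint_Ioo_natCast_mul (w : ℝ) :
    Pairwise (Disjoint on fun k : ℕ => Ioo (k * w) ((k + 1) * w)) := fun i j hij => by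
  simpa [zsmul_eq_mul] using
    pairwise_disjoint_Ioo_add_zsmul (0 : ℝ) w (Nat.cast_injective.ne hij : (i : ℤ) ≠ j)

lemma homothety_Icc_prod_Icc_natCast {r : ℝ} (hr : 0 < r) (A B : ℝ) (k l : ℕ) :
    homothety r (k * (r * A), l * (r * B)) (Icc 0 A ×ˢ Icc 0 B) =
      Icc (k * (r * A)) ((k + 1) * (r * A)) ×ˢ Icc (l * (r * B)) ((l + 1) * (r * B)) := by
  rw [homothety_Icc_prod_Icc hr]
  ring_nf

lemma Icc_prod_Icc_eq_iUnion_homothety {r A B : ℝ} (hr : 0 < r) (hA : 0 < A) (hB : 0 < B)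
    {m n : ℕ} (hm : 0 < m) (hn : 0 < n) :
    Icc 0 (m * (r * A)) ×ˢ Icc 0 (n * (r * B)) =
      ⋃ k : Fin m × Fin n, homothety r (k.1 * (r * A), k.2 * (r * B)) (Icc 0 A ×ˢ Icc 0 B) := by
  simp only [homothety_Icc_prod_Icc_natCast hr]
  rw [Icc_zero_natCast_mul_eq_iUnion (by positivity) hm,
    Icc_zero_natCast_mul_eq_iUnion (by positivity) hn, ← iUnion_prod]

lemma pairwise_disjoint_interior_homothety_Icc_prod_Icc {r : ℝ} (hr : 0 < r) (A B : ℝ)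
    (m n : ℕ) : Pairwise (Disjoint on fun k : Fin m × Fin n =>
      interior (homothety r (k.1 * (r * A), k.2 * (r * B)) (Icc 0 A ×ˢ Icc 0 B))) := by
  intro k l hkl
  simp only [onFun, homothety_Icc_prod_Icc_natCast hr, interior_prod_eq, interior_Icc,
    disjoint_prod]
  rcases not_and_or.mp (Prod.ext_iff.not.mp hkl) with h | h
  · exact .inl (pairwise_disjoint_Ioo_natCast_mul _ (Fin.val_injective.ne h))
  · exact .inr (pairwise_disjoint_Ioo_natCast_mul _ (Fin.val_injective.ne h))

def shear : (ℝ × ℝ) ≃L[ℝ] (ℝ × ℝ) :=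
  LinearEquiv.toContinuousLinearEquiv
    { toFun := fun p => (p.1 + p.2, p.2)
      invFun := fun p => (p.1 - p.2, p.2)
      map_add' := fun p q => Prod.ext (add_add_add_comm _ _ _ _) rfl
      map_smul' := fun c p => Prod.ext (mul_add c p.1 p.2).symm rfl
      left_inv := fun p => by simp
      right_inv := fun p => by simp }

@[simp]
lemma shear_apply (p : ℝ × ℝ) : shear p = (p.1 + p.2, p.2) := rfl

lemma stdPar_eq_image_shear {c : ℝ} (hc : 0 ≤ c) :
    stdPar c = shear '' (Icc 0 c ×ˢ Icc 0 1) := by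
  have corners : ({(0, 0), (c, 0), (c + 1, 1), (1, 1)} : Set (ℝ × ℝ)) =
      shear '' ({0, c} ×ˢ {0, 1}) := by
    ext ⟨x, y⟩
    simp only [mem_insert_iff, mem_singleton_iff, Prod.mk.injEq, mem_image, mem_prod,
      Prod.exists, shear_apply]
    aesop
  rw [stdPar, corners, ← segment_eq_Icc hc, ← segment_eq_Icc zero_le_one, ← convexHull_pair,
    ← convexHull_pair, ← convexHull_prod]
  exact (shear.toLinearEquiv.toLinearMap.image_convexHull _).symm

lemma image_shear_homothety (r : ℝ) (v : ℝ × ℝ) (S : Set (ℝ × ℝ)) :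
    shear '' homothety r v S = homothety r (shear v) (shear '' S) := by
  simp only [homothety_eq_image, image_image, map_add, map_smul]

lemma interior_image_shear (S : Set (ℝ × ℝ)) : interior (shear '' S) = shear '' interior S :=
  (shear.toHomeomorph.image_interior S).symm

lemma IsTiling.stdPar_natCast_mul_div {F : Set (Set (ℝ × ℝ))} {a : ℝ} (ha : 0 < a)
    (h : IsTiling (stdPar a) F) {m n : ℕ} (hm : 0 < m) (hn : 0 < n) :
    IsTiling (stdPar (m * a / n)) F := by
  have hr : (0 : ℝ) < (n : ℝ)⁻¹ := by positivity
  have grid := Icc_prod_Icc_eq_iUnion_homothety hr ha zero_lt_one hm hn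
  rw [show (n : ℝ) * ((n : ℝ)⁻¹ * 1) = 1 by field_simp] at grid
  rw [show (m : ℝ) * a / n = m * ((n : ℝ)⁻¹ * a) by ring,
    stdPar_eq_image_shear (by positivity), grid, image_iUnion]
  refine IsTiling.iUnion (fun k => ?_) fun k l hkl => ?_
  · rw [image_shear_homothety, ← stdPar_eq_image_shear ha.le]
    exact h.homothety hr _
  · simp only [onFun, interior_image_shear, disjoint_image_iff shear.injective]
    exact pairwise_disjoint_interior_homothety_Icc_prod_Icc hr a 1 m n hkl

theorem statement10_general (α : Set ℝ)
    (a : ℝ) (ha : a ∈ Pset α) (m : ℚ) (hm : 0 < m) :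
    a * m ∈ Pset α := by
  obtain ⟨ha0, htile⟩ := ha
  have hnum : 0 < m.num := Rat.num_pos.mpr hm
  obtain ⟨P, hP⟩ : ∃ P : ℕ, (P : ℤ) = m.num := ⟨_, Int.toNat_of_nonneg hnum.le⟩
  have hP0 : 0 < P := by omega
  have hm_eq : a * m = P * a / m.den := by
    rw [Rat.cast_def, ← hP, Int.cast_natCast]; ring
  refine ⟨mul_pos ha0 (Rat.cast_pos.mpr hm), ?_⟩
  rw [hm_eq]
  exact htile.stdPar_natCast_mul_div ha0 hP0 m.pos

/-- **Property 6).** `P(α)` is closed under multiplication by positive rationals. -/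
theorem statement10 (α : Set ℝ) (hα : ∀ x ∈ α, 1 < x)
    (a : ℝ) (ha : a ∈ Pset α) (m : ℚ) (hm : 0 < m) :
    a * m ∈ Pset α :=
  statement10_general α a ha m hm
end
end

section
/- Let α be a set of reals > 1. If a ∈ T(α) and ε > 0, then there exists c ∈ T(α) with 1 < c < 1 + ε. -/
/-!
Some `b ∈ α` exists because `t(a)` is tiled. Stack `n` homothetic copies of `t(b)`, with scales
in the geometric ratio `q = (b - 1) / (b + 1)`, so that the upper base of each copy is the lower
base of the next. Rescaled to unit height the stack is `t(c)` with `c = (1 + qⁿ) / (1 - qⁿ)`,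
and `c → 1` as `n → ∞`.
-/

noncomputable section

open Set Filter Topology

lemma IsTiling.nonempty_family {S : Set (ℝ × ℝ)} {F : Set (Set (ℝ × ℝ))} (h : IsTiling S F)
    (hS : S.Nonempty) : F.Nonempty := by
  obtain ⟨n, r, v, t, ht, -, rfl, -⟩ := h
  obtain ⟨i, -⟩ := mem_iUnion.1 hS.some_mem
  exact ⟨t i, ht i⟩

def trapBand (w lo hi : ℝ) : Set (ℝ × ℝ) :=
  {p | p.2 ∈ Icc lo hi ∧ p.1 ∈ Icc p.2 (w - p.2)}

lemma convex_trapBand (w lo hi : ℝ) : Convex ℝ (trapBand w lo hi) := by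
  rintro p ⟨⟨hp₁, hp₂⟩, hp₃, hp₄⟩ q ⟨⟨hq₁, hq₂⟩, hq₃, hq₄⟩ s t hs ht hst
  simp only [trapBand, mem_ofPred_eq, mem_Icc, Prod.fst_add, Prod.snd_add, Prod.smul_fst,
    Prod.smul_snd, smul_eq_mul]
  obtain rfl : t = 1 - s := by linarith
  refine ⟨⟨?_, ?_⟩, ?_, ?_⟩ <;>
    nlinarith [mul_le_mul_of_nonneg_left hp₁ hs, mul_le_mul_of_nonneg_left hq₁ ht,
      mul_le_mul_of_nonneg_left hp₂ hs, mul_le_mul_of_nonneg_left hq₂ ht,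
      mul_le_mul_of_nonneg_left hp₃ hs, mul_le_mul_of_nonneg_left hq₃ ht,
      mul_le_mul_of_nonneg_left hp₄ hs, mul_le_mul_of_nonneg_left hq₄ ht]

lemma stdTrap_eq_trapBand {b : ℝ} (hb : 1 < b) : stdTrap b = trapBand (b + 1) 0 1 := by
  refine (convexHull_min ?_ (convex_trapBand _ _ _)).antisymm ?_
  · simp only [insert_subset_iff, singleton_subset_iff, trapBand, mem_ofPred_eq, mem_Icc]
    norm_num
    constructor <;> linarith
  · rintro ⟨x, y⟩ ⟨⟨hy₀, hy₁⟩, hx₀, hx₁⟩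
    have hL : (y, y) ∈ segment ℝ ((0 : ℝ), (0 : ℝ)) (1, 1) := by
      rw [segment_eq_image_lineMap]
      exact ⟨y, ⟨hy₀, hy₁⟩, by simp [AffineMap.lineMap_apply]⟩
    have hR : (b + 1 - y, y) ∈ segment ℝ (b + 1, (0 : ℝ)) (b, 1) := by
      rw [segment_eq_image_lineMap]
      refine ⟨y, ⟨hy₀, hy₁⟩, ?_⟩
      simp [AffineMap.lineMap_apply]
      ring
    have hM : (x, y) ∈ segment ℝ (y, y) (b + 1 - y, y) := by
      rw [← Prod.image_mk_segment_left, segment_eq_Icc (by linarith)]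
      exact mem_image_of_mem _ ⟨hx₀, hx₁⟩
    exact (convex_convexHull ℝ _).segment_subset
      (segment_subset_convexHull (by simp) (by simp) hL)
      (segment_subset_convexHull (by simp) (by simp) hR) hM

lemma homothety_diag_trapBand {r : ℝ} (hr : 0 < r) (h w lo hi : ℝ) :
    homothety r (h, h) (trapBand w lo hi) = trapBand (r * w + 2 * h) (r * lo + h) (r * hi + h) := by
  ext ⟨x, y⟩
  simp only [homothety, trapBand, mem_image, mem_ofPred_eq, mem_Icc, Prod.exists, Prod.mk.injEq]
  constructor
  · rintro ⟨x, y, ⟨⟨h₁, h₂⟩, h₃, h₄⟩, rfl, rfl⟩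
    refine ⟨⟨?_, ?_⟩, ?_, ?_⟩ <;> nlinarith
  · have hinv (z : ℝ) : ∃ z', z = r * z' + h := ⟨(z - h) / r, by field_simp; ring⟩
    obtain ⟨⟨x, rfl⟩, ⟨y, rfl⟩⟩ := And.intro (hinv x) (hinv y)
    rintro ⟨⟨h₁, h₂⟩, h₃, h₄⟩
    refine ⟨x, y, ⟨⟨?_, ?_⟩, ?_, ?_⟩, rfl, rfl⟩ <;> nlinarith

lemma Monotone.Icc_eq_iUnion_Icc_succ {H : ℕ → ℝ} (hH : Monotone H) {n : ℕ} (hn : n ≠ 0) :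
    Icc (H 0) (H n) = ⋃ k : Fin n, Icc (H k) (H (k + 1)) := by
  refine subset_antisymm (fun y hy => ?_)
    (iUnion_subset fun k => Icc_subset_Icc (hH k.val.zero_le) (hH k.isLt))
  rcases eq_or_lt_of_le hy.1 with rfl | hy₀
  · exact mem_iUnion.2 ⟨⟨0, Nat.pos_of_ne_zero hn⟩, left_mem_Icc.2 (hH zero_le_one)⟩
  · have hy' : y ∈ ⋃ i ∈ Ico 0 n, Ioc (H i) (H (Order.succ i)) := by
      rw [hH.biUnion_Ico_Ioc_map_succ]
      exact ⟨hy₀, hy.2⟩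
    obtain ⟨i, hi, hyi⟩ := mem_iUnion₂.1 hy'
    exact mem_iUnion.2 ⟨⟨i, hi.2⟩, Ioc_subset_Icc_self hyi⟩

lemma trapBand_eq_iUnion {H : ℕ → ℝ} (hH : Monotone H) {n : ℕ} (hn : n ≠ 0) (w : ℝ) :
    trapBand w (H 0) (H n) = ⋃ k : Fin n, trapBand w (H k) (H (k + 1)) := by
  ext p
  simp only [trapBand, mem_iUnion, mem_ofPred_eq, hH.Icc_eq_iUnion_Icc_succ hn, exists_and_right]

lemma interior_trapBand_subset (w lo hi : ℝ) :
    interior (trapBand w lo hi) ⊆ Prod.snd ⁻¹' Ioo lo hi :=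
  calc interior (trapBand w lo hi) ⊆ interior (Prod.snd ⁻¹' Icc lo hi) :=
        interior_mono fun _ hp => hp.1
    _ = Prod.snd ⁻¹' Ioo lo hi := by
        rw [← isOpenMap_snd.preimage_interior_eq_interior_preimage continuous_snd, interior_Icc]

lemma isTiling_trapBand_stack {b w : ℝ} (hb : 1 < b) {F : Set (Set (ℝ × ℝ))} (hF : stdTrap b ∈ F)
    {H : ℕ → ℝ} (hH : StrictMono H) (hw : ∀ k, (H (k + 1) - H k) * (b + 1) + 2 * H k = w)
    {n : ℕ} (hn : n ≠ 0) :
    IsTiling (trapBand w (H 0) (H n)) F := by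
  have hr (k : ℕ) : 0 < H (k + 1) - H k := sub_pos.2 (hH k.lt_succ_self)
  have htile (k : ℕ) :
      homothety (H (k + 1) - H k) (H k, H k) (stdTrap b) = trapBand w (H k) (H (k + 1)) := by
    rw [stdTrap_eq_trapBand hb, homothety_diag_trapBand (hr k), hw]
    congr 1 <;> ring
  refine ⟨n, fun k => H (k + 1) - H k, fun k => (H k, H k), fun _ => stdTrap b, fun _ => hF,
    fun k => hr k, ?_, fun i j hij => ?_⟩
  · simp only [htile]
    exact trapBand_eq_iUnion hH.monotone hn w
  · have hdisj := hH.monotone.pairwise_disjoint_on_Ioo_succ (Fin.val_injective.ne hij)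
    simp only [Function.onFun, Order.succ_eq_add_one] at hdisj
    simp only [htile, ← disjoint_iff_inter_eq_empty]
    exact (hdisj.preimage Prod.snd).mono (interior_trapBand_subset _ _ _)
      (interior_trapBand_subset _ _ _)

/-- A copy of `t(b)` scaled by `r * trapRatio b` fits exactly on top of one scaled by `r`: its
lower base `r q (b + 1)` is the upper base `r (b - 1)` of the lower copy. -/
def trapRatio (b : ℝ) : ℝ := (b - 1) / (b + 1)

lemma trapRatio_pos {b : ℝ} (hb : 1 < b) : 0 < trapRatio b :=
  div_pos (by linarith) (by linarith)

lemma trapRatio_lt_one {b : ℝ} (hb : 1 < b) : trapRatio b < 1 :=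
  (div_lt_one (by linarith)).2 (by linarith)

lemma one_sub_trapRatio_mul {b : ℝ} (hb : 1 < b) : (1 - trapRatio b) * (b + 1) = 2 := by
  rw [trapRatio]
  field_simp
  ring

lemma one_add_pow_div_one_sub_pow_mem_Tset {α : Set ℝ} {b : ℝ} (hbα : b ∈ α) (hb : 1 < b) {n : ℕ} (hn : n ≠ 0) :
    (1 + trapRatio b ^ n) / (1 - trapRatio b ^ n) ∈ Tset α := by
  set q := trapRatio b
  have hq₀ : 0 < q := trapRatio_pos hb
  have hq₁ : q < 1 := trapRatio_lt_one hb
  have hD : 0 < 1 - q ^ n := sub_pos.2 (pow_lt_one₀ hq₀.le hq₁ hn)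
  set H : ℕ → ℝ := fun k => (1 - q ^ k) / (1 - q ^ n)
  have hH : StrictMono H := fun j k hjk =>
    div_lt_div_of_pos_right (by linarith [pow_lt_pow_right_of_lt_one₀ hq₀ hq₁ hjk]) hD
  have hw (k : ℕ) : (H (k + 1) - H k) * (b + 1) + 2 * H k = (1 + q ^ n) / (1 - q ^ n) + 1 := by
    simp only [H]
    field_simp
    linear_combination q ^ k * one_sub_trapRatio_mul hb
  have hc : 1 < (1 + q ^ n) / (1 - q ^ n) := (one_lt_div hD).2 (by linarith [pow_pos hq₀ n])
  refine ⟨hc, ?_⟩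
  have hH₀ : H 0 = 0 := by simp [H]
  have hHn : H n = 1 := div_self hD.ne'
  have h := isTiling_trapBand_stack hb (mem_image_of_mem _ hbα) hH hw hn
  rwa [hH₀, hHn, ← stdTrap_eq_trapBand hc] at h

lemma tendsto_one_add_pow_div_one_sub_pow {q : ℝ} (hq₀ : 0 ≤ q) (hq₁ : q < 1) :
    Tendsto (fun n : ℕ => (1 + q ^ n) / (1 - q ^ n)) atTop (𝓝 1) := by
  have h := tendsto_pow_atTop_nhds_zero_of_lt_one hq₀ hq₁
  have h' : Tendsto (fun n : ℕ => (1 + q ^ n) / (1 - q ^ n)) atTop (𝓝 ((1 + 0) / (1 - 0))) :=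
    (tendsto_const_nhds.add h).div (tendsto_const_nhds.sub h) (by norm_num)
  simpa using h'

/-- **Property 7).** If `a ∈ T(α)` and `ε > 0` then there is `c ∈ T(α)` with `1 < c < 1 + ε`. -/
theorem statement11 (α : Set ℝ) (hα : ∀ x ∈ α, 1 < x)
    (a : ℝ) (ha : a ∈ Tset α) (ε : ℝ) (hε : 0 < ε) :
    ∃ c ∈ Tset α, 1 < c ∧ c < 1 + ε := by
  obtain ⟨b, hbα⟩ : α.Nonempty :=
    image_nonempty.1 (ha.2.nonempty_family ⟨(0, 0), subset_convexHull ℝ _ (by simp)⟩)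
  have hb := hα b hbα
  obtain ⟨n, hnε, hn⟩ :=
    (((tendsto_one_add_pow_div_one_sub_pow (trapRatio_pos hb).le (trapRatio_lt_one hb)).eventually
      (gt_mem_nhds (by linarith : (1 : ℝ) < 1 + ε))).and (eventually_ne_atTop 0)).exists
  have hc := one_add_pow_div_one_sub_pow_mem_Tset hbα hb hn
  exact ⟨_, hc, hc.1, hnε⟩
end
end

section
/- Let K ⊆ ℝ be a subfield and let w be a potential on an electrical network all of whose edge weights lie in K. Then w(x) ∈ K for every vertex x of the network. -/
open scoped Classical

noncomputable section

/-- An electrical network: a finite directed multigraph with positive edge weights and two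
distinguished vertices `N`, `P`, such that from every other vertex there is a directed path
to `N` and a directed path to `P`. -/
structure ElecNetwork (V E : Type) [Fintype V] [Fintype E] where
  src : E → V
  tgt : E → V
  weight : E → ℝ
  weight_pos : ∀ e, 0 < weight e
  N : V
  P : V
  conn_N : ∀ x : V, x ≠ N → x ≠ P →
    Relation.ReflTransGen (fun u v => ∃ e, src e = u ∧ tgt e = v) x N
  conn_P : ∀ x : V, x ≠ N → x ≠ P →
    Relation.ReflTransGen (fun u v => ∃ e, src e = u ∧ tgt e = v) x P

/-- A potential on an electrical network: `w(N) = 1`, `w(P) = 0`, and for every other vertex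
`x` the weighted sum `Σ weight(e)·(w(x) − w(tgt e))` over edges `e` with source `x` and
target `≠ x` vanishes. -/
def IsPotential {V E : Type} [Fintype V] [Fintype E] (G : ElecNetwork V E) (w : V → ℝ) :
    Prop :=
  w G.N = 1 ∧ w G.P = 0 ∧
  ∀ x : V, x ≠ G.N → x ≠ G.P →
    (∑ e : E, if G.src e = x ∧ G.tgt e ≠ x then G.weight e * (w x - w (G.tgt e)) else 0) = 0

/-! View `ℝ` as a `K`-vector space and pick a `K`-linear retraction `φ : ℝ → K`. Since `φ 1 = 1`
and `φ` commutes with multiplication by the weights, `φ ∘ w` is again a potential. By the maximum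
principle (a function harmonic off `{N, P}` attains its maximum at `N` or `P`, because every other
vertex has a path to `N` along which the maximum propagates), potentials are unique, so
`w = φ ∘ w` takes values in `K`. -/

namespace ElecNetwork

variable {V E : Type} [Fintype V] [Fintype E] (G : ElecNetwork V E)

def outflow (d : V → ℝ) (x : V) : ℝ :=
  ∑ e : E, if G.src e = x ∧ G.tgt e ≠ x then G.weight e * (d x - d (G.tgt e)) else 0

def IsHarmonic (d : V → ℝ) : Prop :=
  ∀ x : V, x ≠ G.N → x ≠ G.P → G.outflow d x = 0

variable {G}

lemma outflow_sub (u v : V → ℝ) (x : V) :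
    G.outflow (u - v) x = G.outflow u x - G.outflow v x := by
  simp only [outflow, ← Finset.sum_sub_distrib, Pi.sub_apply]
  refine Finset.sum_congr rfl fun e _ => ?_
  split_ifs <;> ring

lemma IsHarmonic.sub {u v : V → ℝ} (hu : G.IsHarmonic u) (hv : G.IsHarmonic v) :
    G.IsHarmonic (u - v) := fun x hN hP => by
  rw [outflow_sub, hu x hN hP, hv x hN hP, sub_zero]

lemma outflow_comp_linearMap {K : Subfield ℝ} (hK : ∀ e : E, G.weight e ∈ K)
    (φ : ℝ →ₗ[K] ℝ) (d : V → ℝ) (x : V) :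
    G.outflow (φ ∘ d) x = φ (G.outflow d x) := by
  simp only [outflow, map_sum, Function.comp_apply]
  refine Finset.sum_congr rfl fun e _ => ?_
  split_ifs
  · rw [← map_sub]
    exact (φ.map_smul (⟨G.weight e, hK e⟩ : K) _).symm
  · rw [map_zero]

lemma apply_tgt_eq_of_forall_le {d : V → ℝ} {a : V} (ha : G.outflow d a = 0)
    (hmax : ∀ y, d y ≤ d a) {e : E} (he : G.src e = a) : d (G.tgt e) = d a := by
  have hterm_nonneg : ∀ e' ∈ (Finset.univ : Finset E), 0 ≤
      (if G.src e' = a ∧ G.tgt e' ≠ a then G.weight e' * (d a - d (G.tgt e')) else 0) := by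
    intro e' _
    split_ifs
    · exact mul_nonneg (G.weight_pos e').le (sub_nonneg.mpr (hmax _))
    · exact le_rfl
  by_cases hloop : G.tgt e = a
  · rw [hloop]
  have hterm := (Finset.sum_eq_zero_iff_of_nonneg hterm_nonneg).mp ha e (Finset.mem_univ e)
  rw [if_pos ⟨he, hloop⟩, mul_eq_zero] at hterm
  rcases hterm with hw | hd
  · exact absurd hw (G.weight_pos e).ne'
  · linarith

lemma exists_boundary_eq_max {d : V → ℝ} (hd : G.IsHarmonic d) {M : ℝ} (hmax : ∀ y, d y ≤ M)
    {x : V} (hx : d x = M) : ∃ z, (z = G.N ∨ z = G.P) ∧ d z = M := by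
  by_cases hxN : x = G.N
  · exact ⟨x, .inl hxN, hx⟩
  by_cases hxP : x = G.P
  · exact ⟨x, .inr hxP, hx⟩
  induction G.conn_N x hxN hxP using Relation.ReflTransGen.head_induction_on with
  | refl => exact ⟨G.N, .inl rfl, hx⟩
  | @head a c edge _ ih =>
    obtain ⟨e, hsrc, htgt⟩ := edge
    have hc : d c = M := by
      rw [← htgt, apply_tgt_eq_of_forall_le (hd a hxN hxP) (hx ▸ hmax) hsrc, hx]
    by_cases hcN : c = G.N
    · exact ⟨c, .inl hcN, hc⟩
    by_cases hcP : c = G.P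
    · exact ⟨c, .inr hcP, hc⟩
    exact ih hc hcN hcP

lemma IsHarmonic.le_zero {d : V → ℝ} (hd : G.IsHarmonic d) (hN : d G.N = 0) (hP : d G.P = 0)
    (x : V) : d x ≤ 0 := by
  obtain ⟨xmax, -, hxmax⟩ := Finset.exists_max_image Finset.univ d ⟨G.N, Finset.mem_univ _⟩
  obtain ⟨z, hz, hdz⟩ :=
    exists_boundary_eq_max hd (fun y => hxmax y (Finset.mem_univ y)) rfl
  have hmax_zero : d xmax = 0 := by
    rcases hz with rfl | rfl
    exacts [hdz.symm.trans hN, hdz.symm.trans hP]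
  exact hmax_zero ▸ hxmax x (Finset.mem_univ x)

end ElecNetwork

section

open ElecNetwork

variable {V E : Type} [Fintype V] [Fintype E] {G : ElecNetwork V E}

lemma IsPotential.isHarmonic {w : V → ℝ} (hw : IsPotential G w) : G.IsHarmonic w :=
  hw.2.2

lemma IsPotential.le {u v : V → ℝ} (hu : IsPotential G u) (hv : IsPotential G v) : u ≤ v :=
  fun x => sub_nonpos.mp <| (hu.isHarmonic.sub hv.isHarmonic).le_zero
    (by rw [Pi.sub_apply, hu.1, hv.1, sub_self])
    (by rw [Pi.sub_apply, hu.2.1, hv.2.1, sub_self]) x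

lemma IsPotential.unique {u v : V → ℝ} (hu : IsPotential G u) (hv : IsPotential G v) : u = v :=
  le_antisymm (hu.le hv) (hv.le hu)

lemma IsPotential.comp_linearMap {K : Subfield ℝ} (hK : ∀ e : E, G.weight e ∈ K) {w : V → ℝ}
    (hw : IsPotential G w) (φ : ℝ →ₗ[K] ℝ) (hφ : φ 1 = 1) : IsPotential G (φ ∘ w) :=
  ⟨by rw [Function.comp_apply, hw.1, hφ], by rw [Function.comp_apply, hw.2.1, map_zero],
    fun x hN hP =>
      (outflow_comp_linearMap hK φ w x).trans (by rw [hw.isHarmonic x hN hP, map_zero])⟩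

end

/-- **Rationality of the potential.** If all edge weights of an electrical network lie in a
subfield `K ⊆ ℝ`, then every value of a potential on the network lies in `K`. -/
theorem statement13 {V E : Type} [Fintype V] [Fintype E] (G : ElecNetwork V E)
    (K : Subfield ℝ) (hK : ∀ e : E, G.weight e ∈ K)
    (w : V → ℝ) (hw : IsPotential G w) :
    ∀ x : V, w x ∈ K := by
  obtain ⟨g, hg⟩ := (Algebra.linearMap K ℝ).exists_leftInverse_of_injective
    (LinearMap.ker_eq_bot.mpr (FaithfulSMul.algebraMap_injective K ℝ))
  set φ : ℝ →ₗ[K] ℝ := Algebra.linearMap K ℝ ∘ₗ g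
  have hφ : φ 1 = 1 := congrArg Subtype.val (LinearMap.congr_fun hg 1)
  intro x
  rw [← (hw.comp_linearMap hK φ hφ).unique hw]
  exact (g (w x)).2
end
end

section
/- For all real numbers z > t > 1, one has ln G(t) / ln G(z) > z/t, where G(x) = (x−1)/(x+1). -/
/-! With `u = 1/x` one has `-x · ln G(x) = (ln(1+u) - ln(1-u)) / u = ∑ 2u^(2k)/(2k+1)`, a power
series with positive coefficients in `u²`. Hence `x · ln G(x)` is strictly increasing on `(1, ∞)`,
i.e. `z · ln G(z) > t · ln G(t)`, and dividing by `t · ln G(z) < 0` gives the inequality. -/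

noncomputable section

open Real

lemma hasSum_log_one_add_sub_log_one_sub_div {u : ℝ} (hu : |u| < 1) (hu0 : u ≠ 0) :
    HasSum (fun k : ℕ => 2 / (2 * k + 1) * u ^ (2 * k))
      ((log (1 + u) - log (1 - u)) / u) := by
  refine ((hasSum_log_sub_log_of_abs_lt_one hu).div_const u).congr_fun fun k => ?_
  rw [pow_succ, mul_div_assoc, mul_div_cancel_right₀ _ hu0, mul_one_div]

lemma strictMonoOn_log_one_add_sub_log_one_sub_div :
    StrictMonoOn (fun u : ℝ => (log (1 + u) - log (1 - u)) / u) (Set.Ioo 0 1) := by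
  rintro v ⟨hv0, hv1⟩ u ⟨hu0, hu1⟩ hvu
  refine hasSum_lt (i := 1) (fun k => ?_) ?_
    (hasSum_log_one_add_sub_log_one_sub_div (abs_lt.2 ⟨by linarith, hv1⟩) hv0.ne')
    (hasSum_log_one_add_sub_log_one_sub_div (abs_lt.2 ⟨by linarith, hu1⟩) hu0.ne')
  · gcongr
  · norm_num
    gcongr

lemma log_Gfun_eq {x : ℝ} (hx : 1 < x) :
    log (Gfun x) = -(log (1 + x⁻¹) - log (1 - x⁻¹)) := by
  have hG : Gfun x = (1 - x⁻¹) / (1 + x⁻¹) := by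
    unfold Gfun
    field_simp
  have hinv : x⁻¹ < 1 := inv_lt_one_of_one_lt₀ hx
  have hinv0 : 0 < x⁻¹ := by positivity
  rw [hG, log_div (by linarith) (by linarith)]
  ring

/-- For all reals `z > t > 1`, `ln G(t) / ln G(z) > z/t`, where `G(x) = (x-1)/(x+1)`. -/
theorem statement14 (t z : ℝ) (ht : 1 < t) (hz : t < z) :
    z / t < Real.log (Gfun t) / Real.log (Gfun z) := by
  have hz1 : 1 < z := ht.trans hz
  have ht0 : 0 < t := by linarith
  have hmono := strictMonoOn_log_one_add_sub_log_one_sub_div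
    ⟨inv_pos.2 (by linarith), inv_lt_one_of_one_lt₀ hz1⟩
    ⟨inv_pos.2 ht0, inv_lt_one_of_one_lt₀ ht⟩ (inv_strictAnti₀ ht0 hz)
  simp only [div_inv_eq_mul] at hmono
  have hLz : log (1 - z⁻¹) < log (1 + z⁻¹) :=
    log_lt_log (by linarith [inv_lt_one_of_one_lt₀ hz1]) (by linarith [inv_pos.2 (ht0.trans hz)])
  rw [log_Gfun_eq ht, log_Gfun_eq hz1, neg_div_neg_eq, div_lt_div_iff₀ ht0 (by linarith)]
  linarith
end
end

section
/- The function f(x) = x · ln((x−1)/(x+1)) is strictly increasing on the interval (1, +∞): for all reals z > t > 1, t·ln((t−1)/(t+1)) < z·ln((z−1)/(z+1)). -/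
/-! The derivative of `x * log ((x - 1) / (x + 1))` is `log ((x - 1) / (x + 1)) + 2x / (x² - 1)`.
With `v = (x + 1) / (x - 1) > 1` this equals `sinh (log v) - log v`, which is positive because
`sinh y > y` for `y > 0`. -/

open Real Set

lemma log_lt_sub_inv_div_two {v : ℝ} (hv : 1 < v) : log v < (v - v⁻¹) / 2 := by
  rw [← sinh_log (by positivity)]
  exact self_lt_sinh_iff.2 (log_pos hv)

lemma hasDerivAt_mul_log_sub_one_div_add_one {x : ℝ} (hx : 1 < x) :
    HasDerivAt (fun y => y * log ((y - 1) / (y + 1)))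
      (log ((x - 1) / (x + 1)) + 2 * x / ((x - 1) * (x + 1))) x := by
  have hm : x - 1 ≠ 0 := by linarith
  have hp : x + 1 ≠ 0 := by linarith
  have hquot : HasDerivAt (fun y => (y - 1) / (y + 1)) (2 / (x + 1) ^ 2) x := by
    refine (((hasDerivAt_id' x).sub_const 1).fun_div
      ((hasDerivAt_id' x).add_const 1) hp).congr_deriv ?_
    ring
  refine ((hasDerivAt_id' x).fun_mul (hquot.log (div_ne_zero hm hp))).congr_deriv ?_
  field_simp

lemma log_sub_one_div_add_one_add_pos {x : ℝ} (hx : 1 < x) :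
    0 < log ((x - 1) / (x + 1)) + 2 * x / ((x - 1) * (x + 1)) := by
  have hm : 0 < x - 1 := by linarith
  have hv : 1 < (x + 1) / (x - 1) := by rw [one_lt_div hm]; linarith
  have hsinh :
      ((x + 1) / (x - 1) - ((x + 1) / (x - 1))⁻¹) / 2 = 2 * x / ((x - 1) * (x + 1)) := by
    field_simp
    ring
  rw [← inv_div, log_inv, ← hsinh]
  linarith [log_lt_sub_inv_div_two hv]

theorem strictMonoOn_mul_log_sub_one_div_add_one :
    StrictMonoOn (fun x : ℝ => x * log ((x - 1) / (x + 1))) (Ioi 1) := by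
  have hderiv := fun x (hx : x ∈ Ioi (1 : ℝ)) => hasDerivAt_mul_log_sub_one_div_add_one hx
  refine strictMonoOn_of_deriv_pos (convex_Ioi 1)
    (fun x hx => (hderiv x hx).continuousAt.continuousWithinAt) (fun x hx => ?_)
  rw [interior_Ioi] at hx
  rw [(hderiv x hx).deriv]
  exact log_sub_one_div_add_one_add_pos hx

/-- The function `f(x) = x·ln((x-1)/(x+1))` is strictly increasing on `(1, +∞)`. -/
theorem statement15 (t z : ℝ) (ht : 1 < t) (hz : t < z) :
    t * Real.log ((t - 1) / (t + 1)) < z * Real.log ((z - 1) / (z + 1)) :=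
  strictMonoOn_mul_log_sub_one_div_add_one ht (ht.trans hz) hz
end

section
/- For c ∈ (0,1) define F_c(x) = (1 + ((x−1)/(x+1))^c) / (1 − ((x−1)/(x+1))^c) for x > 1. Then for every x > 1 the derivative of F_c at x satisfies F_c'(x) > 1/c. -/
open Real in
open Real

lemma key_aux (c a : ℝ) (hc : 0 < c) (hc1 : c < 1) (ha : 1 < a) :
    a ^ c - a ^ (-c) < c * (a - a⁻¹) := by
  set g : ℝ → ℝ := fun t => c * (t - t⁻¹) - t ^ c + t ^ (-c) with hg
  have hder : ∀ t : ℝ, 0 < t →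
      HasDerivAt g (c * (1 - -(t ^ 2)⁻¹) - c * t ^ (c - 1) + -c * t ^ (-c - 1)) t := by
    intro t ht
    have h1 : HasDerivAt (fun s : ℝ => s - s⁻¹) (1 - -(t ^ 2)⁻¹) t :=
      (hasDerivAt_id t).sub (hasDerivAt_inv ht.ne')
    have h2 : HasDerivAt (fun s : ℝ => s ^ c) (c * t ^ (c - 1)) t :=
      Real.hasDerivAt_rpow_const (Or.inl ht.ne')
    have h3 : HasDerivAt (fun s : ℝ => s ^ (-c)) (-c * t ^ (-c - 1)) t :=
      Real.hasDerivAt_rpow_const (Or.inl ht.ne')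
    exact ((h1.const_mul c).sub h2).add h3
  have hmono : StrictMonoOn g (Set.Ici (1 : ℝ)) := by
    apply strictMonoOn_of_deriv_pos (convex_Ici 1)
    · intro t ht
      have ht0 : (0 : ℝ) < t := lt_of_lt_of_le one_pos ht
      exact (hder t ht0).continuousAt.continuousWithinAt
    · intro t ht
      rw [interior_Ici] at ht
      have ht1 : (1 : ℝ) < t := ht
      have ht0 : (0 : ℝ) < t := lt_trans one_pos ht1
      rw [(hder t ht0).deriv]
      have hT : (0 : ℝ) < t ^ 2 := by positivity
      set b : ℝ := t ^ (1 - c) with hb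
      have hb1 : (1 : ℝ) < b := Real.one_lt_rpow_iff_of_pos ht0 |>.2 (Or.inl ⟨ht1, by linarith⟩)
      have hb0 : (0 : ℝ) < b := lt_trans one_pos hb1
      have hbT : b < t ^ 2 := by
        have : t ^ ((1 : ℝ) - c) < t ^ ((2 : ℕ) : ℝ) :=
          Real.rpow_lt_rpow_of_exponent_lt ht1 (by push_cast; linarith)
        rwa [Real.rpow_natCast] at this
      have e1 : t ^ (c - 1) = b⁻¹ := by
        rw [hb, ← Real.rpow_neg ht0.le]; ring_nf
      have e2 : t ^ (-c - 1) = b / t ^ 2 := by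
        rw [hb, div_eq_mul_inv, ← Real.rpow_natCast t 2, ← Real.rpow_neg ht0.le,
          ← Real.rpow_add ht0]
        push_cast
        ring_nf
      rw [e1, e2]
      have hpos : (0 : ℝ) < ((b - 1) * (t ^ 2 - b)) / (b * t ^ 2) :=
        div_pos (mul_pos (by linarith) (by linarith)) (by positivity)
      have heq : ((b - 1) * (t ^ 2 - b)) / (b * t ^ 2)
          = 1 - -(t ^ 2)⁻¹ - b⁻¹ - b / t ^ 2 := by
        field_simp
        ring
      nlinarith [mul_pos hc (heq ▸ hpos)]
  have h01 : (1 : ℝ) ∈ Set.Ici (1 : ℝ) := Set.self_mem_Ici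
  have hA : a ∈ Set.Ici (1 : ℝ) := ha.le
  have := hmono h01 hA ha
  have hg1 : g 1 = 0 := by
    simp [hg, Real.one_rpow]
  rw [hg1] at this
  simp only [hg] at this
  linarith

open Real in
open Real

lemma key2_aux (c u : ℝ) (hc : 0 < c) (hc1 : c < 1) (hu0 : 0 < u) (hu1 : u < 1)
    (key : ∀ a : ℝ, 1 < a → a ^ c - a ^ (-c) < c * (a - a⁻¹)) :
    1 - u ^ c < c * u ^ ((c - 1) / 2) * (1 - u) := by
  set a : ℝ := u ^ (-(1 / 2) : ℝ) with hA
  have ha1 : 1 < a := Real.one_lt_rpow_iff_of_pos hu0 |>.2 (Or.inr ⟨hu1, by norm_num⟩)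
  have hk := key a ha1
  have eac : a ^ c = u ^ (-(c / 2)) := by
    rw [hA, ← Real.rpow_mul hu0.le]; congr 1; ring
  have eacn : a ^ (-c) = u ^ (c / 2) := by
    rw [hA, ← Real.rpow_mul hu0.le]; congr 1; ring
  have eainv : a⁻¹ = u ^ ((1 : ℝ) / 2) := by
    rw [hA, ← Real.rpow_neg hu0.le]; congr 1; ring
  rw [eac, eacn, eainv] at hk
  have hs : (0 : ℝ) < u ^ (c / 2) := Real.rpow_pos_of_pos hu0 _
  have e1 : u ^ (c / 2) * u ^ (-(c / 2)) = 1 := by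
    rw [← Real.rpow_add hu0]; norm_num
  have e2 : u ^ (c / 2) * u ^ (c / 2) = u ^ c := by
    rw [← Real.rpow_add hu0]; congr 1; ring
  have e3 : u ^ (c / 2) * a = u ^ ((c - 1) / 2) := by
    rw [hA, ← Real.rpow_add hu0]; congr 1; ring
  have e4 : u ^ (c / 2) * u ^ ((1 : ℝ) / 2) = u ^ ((c - 1) / 2) * u := by
    rw [← Real.rpow_add hu0, ← Real.rpow_add_one hu0.ne' ((c - 1) / 2)]; congr 1; ring
  calc 1 - u ^ c = u ^ (c / 2) * u ^ (-(c / 2)) - u ^ (c / 2) * u ^ (c / 2) := by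
        rw [e1, e2]
    _ = u ^ (c / 2) * (u ^ (-(c / 2)) - u ^ (c / 2)) := by ring
    _ < u ^ (c / 2) * (c * (a - u ^ ((1 : ℝ) / 2))) := by
        exact mul_lt_mul_of_pos_left hk hs
    _ = c * (u ^ (c / 2) * a) - c * (u ^ (c / 2) * u ^ ((1 : ℝ) / 2)) := by ring
    _ = c * u ^ ((c - 1) / 2) * (1 - u) := by rw [e3, e4]; ring

/-- For `c ∈ (0,1)` and `F_c(x) = (1 + ((x-1)/(x+1))^c) / (1 - ((x-1)/(x+1))^c)`,
the derivative of `F_c` at every `x > 1` exceeds `1/c`. -/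
theorem statement16 (c : ℝ) (hc : c ∈ Set.Ioo (0 : ℝ) 1) (x : ℝ) (hx : 1 < x) :
    1 / c <
      deriv (fun t : ℝ => (1 + ((t - 1) / (t + 1)) ^ c) / (1 - ((t - 1) / (t + 1)) ^ c)) x := by
  obtain ⟨hc0, hc1⟩ := hc
  have hx1 : (0 : ℝ) < x + 1 := by linarith
  set u : ℝ := (x - 1) / (x + 1) with hu
  have hu0 : 0 < u := div_pos (by linarith) hx1
  have hu1 : u < 1 := (div_lt_one hx1).2 (by linarith)
  have hucl : u ^ c < 1 := Real.rpow_lt_one hu0.le hu1 hc0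
  have hne : 1 - u ^ c ≠ 0 := by linarith [hucl]
  -- derivative of inner function
  have hh : HasDerivAt (fun t : ℝ => (t - 1) / (t + 1))
      ((1 * (x + 1) - (x - 1) * 1) / (x + 1) ^ 2) x :=
    ((hasDerivAt_id x).sub_const 1).div ((hasDerivAt_id x).add_const 1) hx1.ne'
  have hh' : HasDerivAt (fun t : ℝ => (t - 1) / (t + 1)) (2 / (x + 1) ^ 2) x := by
    convert hh using 1; ring
  have hg : HasDerivAt (fun t : ℝ => ((t - 1) / (t + 1)) ^ c)
      (c * u ^ (c - 1) * (2 / (x + 1) ^ 2)) x := by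
    have := (Real.hasDerivAt_rpow_const (p := c) (Or.inl hu0.ne')).comp x hh'
    exact this
  have hF : HasDerivAt
      (fun t : ℝ => (1 + ((t - 1) / (t + 1)) ^ c) / (1 - ((t - 1) / (t + 1)) ^ c))
      (((c * u ^ (c - 1) * (2 / (x + 1) ^ 2)) * (1 - u ^ c)
        - (1 + u ^ c) * (-(c * u ^ (c - 1) * (2 / (x + 1) ^ 2)))) / (1 - u ^ c) ^ 2) x :=
    (hg.const_add 1).div (hg.const_sub 1) hne
  rw [hF.deriv]
  -- the inequality
  have hk : (0 : ℝ) < u ^ (c - 1) := Real.rpow_pos_of_pos hu0 _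
  have hA0 : (0 : ℝ) < 1 - u ^ c := by linarith
  have hs0 : (0 : ℝ) < u ^ ((c - 1) / 2) := Real.rpow_pos_of_pos hu0 _
  have hss : u ^ ((c - 1) / 2) * u ^ ((c - 1) / 2) = u ^ (c - 1) := by
    rw [← Real.rpow_add hu0]; congr 1; ring
  have h1u : 1 - u = 2 / (x + 1) := by
    rw [hu]; field_simp; norm_num
  have hkey : 1 - u ^ c < c * u ^ ((c - 1) / 2) * (1 - u) :=
    key2_aux c u hc0 hc1 hu0 hu1 (fun a ha => key_aux c a hc0 hc1 ha)
  rw [h1u] at hkey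
  -- square the key inequality
  have hsq : (1 - u ^ c) * (1 - u ^ c)
      < (c * u ^ ((c - 1) / 2) * (2 / (x + 1))) * (c * u ^ ((c - 1) / 2) * (2 / (x + 1))) :=
    mul_self_lt_mul_self hA0.le hkey
  rw [div_lt_div_iff₀ hc0 (by positivity)]
  have hgoal : (c * u ^ ((c - 1) / 2) * (2 / (x + 1))) * (c * u ^ ((c - 1) / 2) * (2 / (x + 1)))
      = c * c * u ^ (c - 1) * (4 / (x + 1) ^ 2) := by
    rw [← hss]; field_simp; ring
  rw [hgoal] at hsq
  have hexp : c * u ^ (c - 1) * (2 / (x + 1) ^ 2) * (1 - u ^ c)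
      - (1 + u ^ c) * -(c * u ^ (c - 1) * (2 / (x + 1) ^ 2))
      = c * u ^ (c - 1) * (4 / (x + 1) ^ 2) := by ring
  rw [hexp]
  calc 1 * (1 - u ^ c) ^ 2 = (1 - u ^ c) * (1 - u ^ c) := by ring
    _ < c * c * u ^ (c - 1) * (4 / (x + 1) ^ 2) := hsq
    _ = c * u ^ (c - 1) * (4 / (x + 1) ^ 2) * c := by ring
end

section
/- Let d be a positive rational with √d irrational, and let a ∈ ℚ[√d] with 1 < ā < a. Let T be the set of b ∈ ℚ[√d] with 1 < b̄ < b, b̄/b ≥ ā/a, and ln G(b)/ln G(b̄) ≥ ln G(a)/ln G(ā); let P be the set of b ∈ ℚ[√d] with 0 < b̄ < b and b̄/b ≥ ā/a. If x ∈ T and y ∈ P, then ln G(x+y) / ln G(x̄+ȳ) > ln G(a) / ln G(ā), where G(t) = (t−1)/(t+1). -/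
/-!
Every `t > 1` is `coth θ` for a unique `θ > 0`, and then `log G(t) = -2θ` and
`t² - 1 = 1 / sinh² θ`. Put `r = log G(a) / log G(ā) ∈ (0, 1)` and
`D(s) = log G(x + s y) - r log G(x̄ + s ȳ)` for `s ≥ 0`. By hypothesis `D(0) ≤ 0`, and the claim
is `D(1) < 0`; so it suffices that `D' < 0` at every zero of `D`. At a zero, writing `ā = coth α`,
`a = coth (r α)`, `x̄ + s ȳ = coth β`, `x + s y = coth (r β)`, the sign of `D'` comes down to a
hyperbolic inequality: the ratio conditions force `α ≤ β` because `tanh (r t) / tanh t` increases,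
and then `sinh (r t) / sinh t` decreasing together with `sinh (2 r α) < r sinh (2 α)` conclude.
-/

noncomputable section

open Real Set

namespace Real

lemma tanh_pos {x : ℝ} (hx : 0 < x) : 0 < tanh x := by
  rw [tanh_eq_sinh_div_cosh]
  exact div_pos (sinh_pos_iff.2 hx) (cosh_pos x)

lemma sinh_lt_mul_cosh {t : ℝ} (ht : 0 < t) : sinh t < t * cosh t := by
  have hmono : StrictMonoOn (fun t : ℝ => t * cosh t - sinh t) (Ici 0) := by
    refine strictMonoOn_of_deriv_pos (convex_Ici 0) (by fun_prop) fun s hs => ?_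
    rw [interior_Ici, mem_Ioi] at hs
    have hderiv : HasDerivAt (fun t : ℝ => t * cosh t - sinh t)
        (1 * cosh s + s * sinh s - cosh s) s :=
      ((hasDerivAt_id' s).mul (hasDerivAt_cosh s)).sub (hasDerivAt_sinh s)
    rw [hderiv.deriv, one_mul, add_sub_cancel_left]
    exact mul_pos hs (sinh_pos_iff.2 hs)
  simpa using hmono self_mem_Ici ht.le ht

lemma strictMonoOn_sinh_div_self : StrictMonoOn (fun t => sinh t / t) (Ioi 0) := by
  refine strictMonoOn_of_deriv_pos (convex_Ioi 0)
    (continuous_sinh.continuousOn.div continuousOn_id fun s hs => ne_of_gt hs) fun s hs => ?_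
  rw [interior_Ioi, mem_Ioi] at hs
  have hderiv : HasDerivAt (fun t => sinh t / t) ((cosh s * s - sinh s * 1) / s ^ 2) s :=
    (hasDerivAt_sinh s).div (hasDerivAt_id' s) (ne_of_gt hs)
  rw [hderiv.deriv]
  have := sinh_lt_mul_cosh hs
  exact div_pos (by linarith) (by positivity)

lemma sinh_mul_lt_mul_sinh {r s : ℝ} (hr0 : 0 < r) (hr1 : r < 1) (hs : 0 < s) :
    sinh (r * s) < r * sinh s := by
  have h := strictMonoOn_sinh_div_self (mul_pos hr0 hs) hs (mul_lt_of_lt_one_left hs hr1)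
  rw [div_lt_div_iff₀ (mul_pos hr0 hs) hs] at h
  nlinarith

lemma mul_cosh_mul_sinh_lt {s t : ℝ} (hs : 0 < s) (hst : s < t) :
    s * cosh s * sinh t < t * cosh t * sinh s := by
  have h := strictMonoOn_sinh_div_self (sub_pos.2 hst) (add_pos (hs.trans hst) hs) (by linarith)
  rw [div_lt_div_iff₀ (sub_pos.2 hst) (by linarith), sinh_add, sinh_sub] at h
  linarith

lemma strictAntiOn_sinh_mul_div_sinh {r : ℝ} (hr0 : 0 < r) (hr1 : r < 1) :
    StrictAntiOn (fun t => sinh (r * t) / sinh t) (Ioi 0) := by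
  refine strictAntiOn_of_deriv_neg (convex_Ioi 0)
    ((by fun_prop : Continuous fun t => sinh (r * t)).continuousOn.div
      continuous_sinh.continuousOn fun s hs => (sinh_pos_iff.2 hs).ne') fun s hs => ?_
  rw [interior_Ioi, mem_Ioi] at hs
  have hnum : HasDerivAt (fun t => sinh (r * t)) (cosh (r * s) * r) s := by
    simpa using ((hasDerivAt_id' s).const_mul r).sinh
  have hderiv : HasDerivAt (fun t => sinh (r * t) / sinh t)
      ((cosh (r * s) * r * sinh s - sinh (r * s) * cosh s) / sinh s ^ 2) s :=
    hnum.div (hasDerivAt_sinh s) (sinh_pos_iff.2 hs).ne'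
  rw [hderiv.deriv]
  refine div_neg_of_neg_of_pos ?_ (by positivity)
  have := mul_cosh_mul_sinh_lt (mul_pos hr0 hs) (mul_lt_of_lt_one_left hs hr1)
  nlinarith

lemma strictMonoOn_tanh_mul_div_tanh {r : ℝ} (hr0 : 0 < r) (hr1 : r < 1) :
    StrictMonoOn (fun t => tanh (r * t) / tanh t) (Ioi 0) := by
  intro a (ha : 0 < a) b (hb : 0 < b) hab
  have h := strictAntiOn_sinh_mul_div_sinh hr0 hr1 (sub_pos.2 hab) (add_pos hb ha)
    (by linarith)
  rw [div_lt_div_iff₀ (sinh_pos_iff.2 (add_pos hb ha)) (sinh_pos_iff.2 (sub_pos.2 hab))] at h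
  simp only [mul_add, mul_sub, sinh_add, sinh_sub] at h
  simp only [tanh_eq_sinh_div_cosh, div_div_div_eq]
  rw [div_lt_div_iff₀ (by positivity) (by positivity)]
  linarith

lemma tanh_mul_sinh_mul_sq_lt {r α β : ℝ} (hr0 : 0 < r) (hr1 : r < 1) (hα : 0 < α) (hβ : 0 < β)
    (h : tanh (r * α) * tanh β ≤ tanh α * tanh (r * β)) :
    tanh α * sinh (r * β) ^ 2 < r * tanh (r * α) * sinh β ^ 2 := by
  have hαβ : α ≤ β := by
    by_contra! hβα
    have := strictMonoOn_tanh_mul_div_tanh hr0 hr1 hβ hα hβα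
    rw [div_lt_div_iff₀ (tanh_pos hβ) (tanh_pos hα)] at this
    linarith
  have hsinh : sinh (r * β) * sinh α ≤ sinh (r * α) * sinh β := by
    have := (strictAntiOn_sinh_mul_div_sinh hr0 hr1).antitoneOn hα hβ hαβ
    rwa [div_le_div_iff₀ (sinh_pos_iff.2 hβ) (sinh_pos_iff.2 hα)] at this
  have hdouble : sinh (r * α) * cosh (r * α) < r * (sinh α * cosh α) := by
    have := sinh_mul_lt_mul_sinh hr0 hr1 (mul_pos two_pos hα)
    rw [mul_left_comm, sinh_two_mul, sinh_two_mul] at this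
    linarith
  have hsα := sinh_pos_iff.2 hα
  have hsrα := sinh_pos_iff.2 (mul_pos hr0 hα)
  have hsrβ := sinh_pos_iff.2 (mul_pos hr0 hβ)
  have hsβ := sinh_pos_iff.2 hβ
  have hcα := cosh_pos α
  have hcrα := cosh_pos (r * α)
  simp only [tanh_eq_sinh_div_cosh]
  rw [div_mul_eq_mul_div, mul_div_assoc', div_mul_eq_mul_div, div_lt_div_iff₀ hcα hcrα]
  refine lt_of_mul_lt_mul_left ?_ hsα.le
  calc sinh α * (sinh α * sinh (r * β) ^ 2 * cosh (r * α))
      = cosh (r * α) * (sinh (r * β) * sinh α) ^ 2 := by ring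
    _ ≤ cosh (r * α) * (sinh (r * α) * sinh β) ^ 2 := by gcongr
    _ = sinh (r * α) * sinh β ^ 2 * (sinh (r * α) * cosh (r * α)) := by ring
    _ < sinh (r * α) * sinh β ^ 2 * (r * (sinh α * cosh α)) := by gcongr
    _ = sinh α * (r * sinh (r * α) * sinh β ^ 2 * cosh α) := by ring

end Real

lemma Gfun_inv_tanh {θ : ℝ} (hθ : 0 < θ) : Gfun (tanh θ)⁻¹ = exp (-(2 * θ)) := by
  have hs : sinh θ ≠ 0 := (sinh_pos_iff.2 hθ).ne'
  rw [Gfun, tanh_eq_sinh_div_cosh, inv_div, div_sub_one hs, div_add_one hs,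
    div_div_div_cancel_right₀ hs, cosh_sub_sinh, cosh_add_sinh, ← exp_sub]
  ring_nf

lemma log_Gfun_inv_tanh {θ : ℝ} (hθ : 0 < θ) : log (Gfun (tanh θ)⁻¹) = -(2 * θ) := by
  rw [Gfun_inv_tanh hθ, log_exp]

lemma exists_eq_inv_tanh {t : ℝ} (ht : 1 < t) : ∃ θ, 0 < θ ∧ t = (tanh θ)⁻¹ := by
  have ht' : t⁻¹ ∈ Ioo 0 1 := ⟨by positivity, inv_lt_one_of_one_lt₀ ht⟩
  exact ⟨artanh t⁻¹, artanh_pos ht', by rw [tanh_artanh ⟨by linarith [ht'.1], ht'.2⟩, inv_inv]⟩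

lemma inv_tanh_sq_sub_one {θ : ℝ} (hθ : 0 < θ) : (tanh θ)⁻¹ ^ 2 - 1 = (sinh θ ^ 2)⁻¹ := by
  have hs : sinh θ ≠ 0 := (sinh_pos_iff.2 hθ).ne'
  rw [tanh_eq_sinh_div_cosh, inv_div, div_pow, cosh_sq]
  field_simp
  ring

lemma log_Gfun_neg {t : ℝ} (ht : 1 < t) : log (Gfun t) < 0 :=
  log_neg (div_pos (by linarith) (by linarith)) ((div_lt_one (by linarith)).2 (by linarith))

lemma strictMonoOn_log_Gfun : StrictMonoOn (fun t => log (Gfun t)) (Ioi 1) := by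
  intro s (hs : 1 < s) t (ht : 1 < t) hst
  refine log_lt_log (div_pos (by linarith) (by linarith)) ?_
  rw [Gfun, Gfun, div_lt_div_iff₀ (by linarith) (by linarith)]
  linarith

lemma hasDerivAt_log_Gfun {t : ℝ} (ht : 1 < t) :
    HasDerivAt (fun t => log (Gfun t)) (2 / (t ^ 2 - 1)) t := by
  have hG : HasDerivAt Gfun ((1 * (t + 1) - (t - 1) * 1) / (t + 1) ^ 2) t :=
    ((hasDerivAt_id' t).sub_const 1).div ((hasDerivAt_id' t).add_const 1) (by linarith)
  convert hG.log (div_pos (by linarith) (by linarith)).ne' using 1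
  have h1 : t - 1 ≠ 0 := by linarith
  have h2 : t + 1 ≠ 0 := by linarith
  have h3 : t ^ 2 - 1 = (t - 1) * (t + 1) := by ring
  rw [Gfun, h3]
  field_simp
  ring

lemma neg_of_deriv_neg_at_zeros {f f' : ℝ → ℝ} {a b : ℝ} (hab : a < b)
    (hf : ∀ s, a ≤ s → HasDerivAt f (f' s) s) (ha : f a ≤ 0)
    (hzeros : ∀ s, a ≤ s → f s = 0 → f' s < 0) : f b < 0 := by
  -- Working on `[a, b + 1]` makes a zero at `b` an interior maximum.
  have hle : ∀ s ∈ Icc a (b + 1), f s ≤ 0 :=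
    image_le_of_deriv_right_lt_deriv_boundary' (B := 0) (B' := 0)
      (fun s hs => (hf s hs.1).continuousAt.continuousWithinAt)
      (fun s hs => (hf s hs.1).hasDerivWithinAt) ha continuousOn_const
      (fun s _ => hasDerivWithinAt_const s _ 0) (fun s hs => hzeros s hs.1)
  refine (hle b ⟨hab.le, by linarith⟩).lt_of_ne fun hb => (hzeros b hab.le hb).ne ?_
  have hmax : IsLocalMax f b :=
    Filter.mem_of_superset (Ioo_mem_nhds hab (lt_add_one b)) fun s hs => by
      change f s ≤ f b
      rw [hb]
      exact hle s (Ioo_subset_Icc_self hs)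
  exact hmax.hasDerivAt_eq_zero (hf b hab.le)

lemma mul_sq_sub_one_lt_of_log_Gfun_eq {r a abar u v : ℝ} (hr0 : 0 < r) (hr1 : r < 1)
    (ha : 1 < a) (habar : 1 < abar) (hu : 1 < u) (hv : 1 < v)
    (hra : log (Gfun a) = r * log (Gfun abar)) (hru : log (Gfun u) = r * log (Gfun v))
    (h : abar * u ≤ a * v) : a * (v ^ 2 - 1) < r * abar * (u ^ 2 - 1) := by
  obtain ⟨α', hα', rfl⟩ := exists_eq_inv_tanh ha
  obtain ⟨α, hα, rfl⟩ := exists_eq_inv_tanh habar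
  obtain ⟨β', hβ', rfl⟩ := exists_eq_inv_tanh hu
  obtain ⟨β, hβ, rfl⟩ := exists_eq_inv_tanh hv
  rw [log_Gfun_inv_tanh hα', log_Gfun_inv_tanh hα] at hra
  rw [log_Gfun_inv_tanh hβ', log_Gfun_inv_tanh hβ] at hru
  obtain rfl : α' = r * α := by linarith
  obtain rfl : β' = r * β := by linarith
  have htα := tanh_pos hα
  have htα' := tanh_pos hα'
  have htβ := tanh_pos hβ
  have htβ' := tanh_pos hβ'
  rw [← mul_inv, ← mul_inv, inv_le_inv₀ (mul_pos htα htβ') (mul_pos htα' htβ)] at h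
  have hkey := tanh_mul_sinh_mul_sq_lt hr0 hr1 hα hβ (by linarith)
  rw [inv_tanh_sq_sub_one hβ, inv_tanh_sq_sub_one hβ']
  have hsβ := sinh_pos_iff.2 hβ
  have hsβ' := sinh_pos_iff.2 hβ'
  field_simp
  linarith

lemma hasDerivAt_log_Gfun_add_mul {x y s : ℝ} (h : 1 < x + s * y) :
    HasDerivAt (fun s => log (Gfun (x + s * y))) (2 * y / ((x + s * y) ^ 2 - 1)) s := by
  have := (hasDerivAt_log_Gfun h).comp s (((hasDerivAt_id' s).mul_const y).const_add x)
  rwa [one_mul, div_mul_eq_mul_div] at this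

theorem statement17_general (a abar x xbar y ybar : ℝ)
    (ha1 : 1 < abar) (ha2 : abar < a)
    (hx1 : 1 < xbar) (hx2 : xbar < x)
    (hx3 : abar / a ≤ xbar / x)
    (hx4 : Real.log (Gfun a) / Real.log (Gfun abar) ≤
      Real.log (Gfun x) / Real.log (Gfun xbar))
    (hy1 : 0 < ybar) (hy2 : ybar < y)
    (hy3 : abar / a ≤ ybar / y) :
    Real.log (Gfun a) / Real.log (Gfun abar) <
      Real.log (Gfun (x + y)) / Real.log (Gfun (xbar + ybar)) := by
  have ha : 1 < a := ha1.trans ha2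
  set r := log (Gfun a) / log (Gfun abar)
  have hr0 : 0 < r := div_pos_of_neg_of_neg (log_Gfun_neg ha) (log_Gfun_neg ha1)
  have hr1 : r < 1 :=
    (div_lt_one_of_neg (log_Gfun_neg ha1)).2 (strictMonoOn_log_Gfun ha1 ha ha2)
  have hra : log (Gfun a) = r * log (Gfun abar) := (div_mul_cancel₀ _ (log_Gfun_neg ha1).ne).symm
  rw [div_le_div_iff₀ (by linarith) (by linarith)] at hx3 hy3
  have hu (s : ℝ) (hs : 0 ≤ s) : 1 < x + s * y := by nlinarith
  have hv (s : ℝ) (hs : 0 ≤ s) : 1 < xbar + s * ybar := by nlinarith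
  have hzeros (s : ℝ) (hs : 0 ≤ s)
      (hD : log (Gfun (x + s * y)) - r * log (Gfun (xbar + s * ybar)) = 0) :
      2 * y / ((x + s * y) ^ 2 - 1) - r * (2 * ybar / ((xbar + s * ybar) ^ 2 - 1)) < 0 := by
    have hcross := mul_sq_sub_one_lt_of_log_Gfun_eq hr0 hr1 ha ha1 (hu s hs) (hv s hs) hra
      (by linarith) (by nlinarith)
    have hu2 : 0 < (x + s * y) ^ 2 - 1 := by nlinarith [hu s hs]
    have hv2 : 0 < (xbar + s * ybar) ^ 2 - 1 := by nlinarith [hv s hs]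
    rw [sub_neg, mul_div_assoc', div_lt_div_iff₀ hu2 hv2]
    nlinarith [mul_le_mul_of_nonneg_right hy3 hv2.le, mul_lt_mul_of_pos_left hcross hy1]
  have hD1 := neg_of_deriv_neg_at_zeros zero_lt_one
    (fun s hs => (hasDerivAt_log_Gfun_add_mul (hu s hs)).sub
      ((hasDerivAt_log_Gfun_add_mul (hv s hs)).const_mul r)) ?_ hzeros
  · rw [lt_div_iff_of_neg (log_Gfun_neg (by linarith))]
    simpa using hD1
  · simpa [← le_div_iff_of_neg (log_Gfun_neg hx1)] using hx4

/-- **Key step for the logarithmic inequality.** If `x ∈ T` (conditions (i),(ii),(iii)) and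
`y ∈ P` (conditions (i'),(ii)), then `x + y` satisfies the strict inequality
`ln G(x+y)/ln G(x̄+ȳ) > ln G(a)/ln G(ā)`. -/
theorem statement17 (d : ℚ) (hd : 0 < d) (hirr : Irrational (Real.sqrt d))
    (pa qa px qx py qy : ℚ) (a abar x xbar y ybar : ℝ)
    (hae : a = pa + qa * Real.sqrt d) (habar : abar = pa - qa * Real.sqrt d)
    (hxe : x = px + qx * Real.sqrt d) (hxbar : xbar = px - qx * Real.sqrt d)
    (hye : y = py + qy * Real.sqrt d) (hybar : ybar = py - qy * Real.sqrt d)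
    (ha1 : 1 < abar) (ha2 : abar < a)
    (hx1 : 1 < xbar) (hx2 : xbar < x)
    (hx3 : abar / a ≤ xbar / x)
    (hx4 : Real.log (Gfun a) / Real.log (Gfun abar) ≤
      Real.log (Gfun x) / Real.log (Gfun xbar))
    (hy1 : 0 < ybar) (hy2 : ybar < y)
    (hy3 : abar / a ≤ ybar / y) :
    Real.log (Gfun a) / Real.log (Gfun abar) <
      Real.log (Gfun (x + y)) / Real.log (Gfun (xbar + ybar)) :=
  statement17_general a abar x xbar y ybar ha1 ha2 hx1 hx2 hx3 hx4 hy1 hy2 hy3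
end
end

section
/- Let d be a positive rational with √d irrational, and let a ∈ ℚ[√d] with 1 < ā < a. Suppose x, y ∈ ℚ[√d] both satisfy: (i) 1 < x̄ < x; (ii) x̄/x ≥ ā/a; (iii) ln G(x)/ln G(x̄) ≥ ln G(a)/ln G(ā) (and likewise for y), where G(t) = (t−1)/(t+1). Then z = (xy + 1)/(x + y) also satisfies (i), (ii), (iii), where z̄ = (x̄ȳ + 1)/(x̄ + ȳ) is the conjugate of z. -/
noncomputable section

lemma G_pos {t : ℝ} (h : 1 < t) : 0 < Gfun t :=
  div_pos (by linarith) (by linarith)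

lemma G_lt_one {t : ℝ} (h : 1 < t) : Gfun t < 1 := by
  unfold Gfun
  rw [div_lt_one (by linarith)]
  linarith

lemma logG_neg {t : ℝ} (h : 1 < t) : Real.log (Gfun t) < 0 :=
  Real.log_neg (G_pos h) (G_lt_one h)

lemma G_mul {x y : ℝ} (hx : 1 < x) (hy : 1 < y) :
    Gfun ((x * y + 1) / (x + y)) = Gfun x * Gfun y := by
  have h1 : x + y ≠ 0 := by positivity
  have hz : ((x * y + 1) / (x + y) - 1) = (x - 1) * (y - 1) / (x + y) := by
    field_simp; ring
  have hz2 : ((x * y + 1) / (x + y) + 1) = (x + 1) * (y + 1) / (x + y) := by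
    field_simp; ring
  rw [Gfun, Gfun, Gfun, hz, hz2, div_div_div_cancel_right₀ h1, div_mul_div_comm]


lemma key_ineq (a abar x xbar y ybar : ℝ)
    (ha1 : 1 < abar) (ha2 : abar < a)
    (hx1 : 1 < xbar) (hx2 : xbar < x)
    (hy1 : 1 < ybar) (hy2 : ybar < y)
    (hP : abar * x ≤ xbar * a) (hQ : abar * y ≤ ybar * a) :
    abar * (x * y + 1) * (xbar + ybar) ≤ (xbar * ybar + 1) * a * (x + y) := by
  have ha : (0:ℝ) < a := by linarith
  nlinarith [mul_nonneg (mul_nonneg (sub_nonneg.2 hP) (sub_nonneg.2 hQ)) (by linarith : (0:ℝ) ≤ x + y),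
    mul_nonneg (mul_nonneg (by linarith : (0:ℝ) ≤ abar) (sub_nonneg.2 hQ)) (by nlinarith : (0:ℝ) ≤ x^2 - 1),
    mul_nonneg (mul_nonneg (by linarith : (0:ℝ) ≤ abar) (sub_nonneg.2 hP)) (by nlinarith : (0:ℝ) ≤ y^2 - 1),
    mul_nonneg (mul_nonneg (by linarith : (0:ℝ) ≤ a - abar) (by linarith : (0:ℝ) ≤ a + abar)) (by linarith : (0:ℝ) ≤ x + y),
    ha]

/-- **Property 5) for the sets defined by conditions (i),(ii),(iii).** If `x, y ∈ ℚ[√d]`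
both satisfy `1 < x̄ < x`, `x̄/x ≥ ā/a` and `ln G(x)/ln G(x̄) ≥ ln G(a)/ln G(ā)`,
then so does `z = (xy+1)/(x+y)` with conjugate `z̄ = (x̄ȳ+1)/(x̄+ȳ)`. -/
theorem statement18 (d : ℚ) (hd : 0 < d) (hirr : Irrational (Real.sqrt d))
    (pa qa px qx py qy : ℚ) (a abar x xbar y ybar : ℝ)
    (hae : a = pa + qa * Real.sqrt d) (habar : abar = pa - qa * Real.sqrt d)
    (hxe : x = px + qx * Real.sqrt d) (hxbar : xbar = px - qx * Real.sqrt d)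
    (hye : y = py + qy * Real.sqrt d) (hybar : ybar = py - qy * Real.sqrt d)
    (ha1 : 1 < abar) (ha2 : abar < a)
    (hx1 : 1 < xbar) (hx2 : xbar < x)
    (hx3 : abar / a ≤ xbar / x)
    (hx4 : Real.log (Gfun a) / Real.log (Gfun abar) ≤
      Real.log (Gfun x) / Real.log (Gfun xbar))
    (hy1 : 1 < ybar) (hy2 : ybar < y)
    (hy3 : abar / a ≤ ybar / y)
    (hy4 : Real.log (Gfun a) / Real.log (Gfun abar) ≤
      Real.log (Gfun y) / Real.log (Gfun ybar)) :
    (1 < (xbar * ybar + 1) / (xbar + ybar) ∧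
      (xbar * ybar + 1) / (xbar + ybar) < (x * y + 1) / (x + y)) ∧
    abar / a ≤ ((xbar * ybar + 1) / (xbar + ybar)) / ((x * y + 1) / (x + y)) ∧
    Real.log (Gfun a) / Real.log (Gfun abar) ≤
      Real.log (Gfun ((x * y + 1) / (x + y))) /
        Real.log (Gfun ((xbar * ybar + 1) / (xbar + ybar))) := by
  have hx0 : 1 < x := lt_trans hx1 hx2
  have hy0 : 1 < y := lt_trans hy1 hy2
  have ha0 : (0:ℝ) < a := by linarith
  have habar0 : (0:ℝ) < abar := by linarith
  have hxy : (0:ℝ) < x + y := by linarith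
  have hxyb : (0:ℝ) < xbar + ybar := by linarith
  have hz1 : 1 < (xbar * ybar + 1) / (xbar + ybar) := by
    rw [lt_div_iff₀ hxyb]
    nlinarith [mul_pos (sub_pos.2 hx1) (sub_pos.2 hy1)]
  have hzz : (xbar * ybar + 1) / (xbar + ybar) < (x * y + 1) / (x + y) := by
    rw [div_lt_div_iff₀ hxyb hxy]
    nlinarith [mul_pos (sub_pos.2 hx2) (by nlinarith : (0:ℝ) < y * ybar - 1),
      mul_pos (sub_pos.2 hy2) (by nlinarith : (0:ℝ) < x * xbar - 1)]
  have hz0 : 1 < (x * y + 1) / (x + y) := lt_trans hz1 hzz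
  have hzpos : (0:ℝ) < (x * y + 1) / (x + y) := by linarith
  -- condition (ii)
  have hP : abar * x ≤ xbar * a := by
    have := (div_le_div_iff₀ ha0 (by linarith : (0:ℝ) < x)).1 hx3; linarith
  have hQ : abar * y ≤ ybar * a := by
    have := (div_le_div_iff₀ ha0 (by linarith : (0:ℝ) < y)).1 hy3; linarith
  have hii : abar / a ≤ ((xbar * ybar + 1) / (xbar + ybar)) / ((x * y + 1) / (x + y)) := by
    rw [div_le_div_iff₀ ha0 hzpos,
      show abar * ((x * y + 1) / (x + y)) = abar * (x * y + 1) / (x + y) by ring,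
      show (xbar * ybar + 1) / (xbar + ybar) * a = (xbar * ybar + 1) * a / (xbar + ybar) by ring,
      div_le_div_iff₀ hxy hxyb]
    exact key_ineq a abar x xbar y ybar ha1 ha2 hx1 hx2 hy1 hy2 hP hQ
  -- condition (iii)
  have hGz : Gfun ((x * y + 1) / (x + y)) = Gfun x * Gfun y := G_mul hx0 hy0
  have hGzb : Gfun ((xbar * ybar + 1) / (xbar + ybar)) = Gfun xbar * Gfun ybar :=
    G_mul hx1 hy1
  have hLx : Real.log (Gfun x) < 0 := logG_neg hx0
  have hLy : Real.log (Gfun y) < 0 := logG_neg hy0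
  have hLxb : Real.log (Gfun xbar) < 0 := logG_neg hx1
  have hLyb : Real.log (Gfun ybar) < 0 := logG_neg hy1
  set c := Real.log (Gfun a) / Real.log (Gfun abar) with hc
  have h1 : Real.log (Gfun x) ≤ c * Real.log (Gfun xbar) :=
    (le_div_iff_of_neg hLxb).1 hx4
  have h2 : Real.log (Gfun y) ≤ c * Real.log (Gfun ybar) :=
    (le_div_iff_of_neg hLyb).1 hy4
  have hsum : Real.log (Gfun x) + Real.log (Gfun y) ≤
      c * (Real.log (Gfun xbar) + Real.log (Gfun ybar)) := by
    rw [mul_add]; linarith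
  have hiii : c ≤ Real.log (Gfun ((x * y + 1) / (x + y))) /
      Real.log (Gfun ((xbar * ybar + 1) / (xbar + ybar))) := by
    rw [hGz, hGzb, Real.log_mul (ne_of_gt (G_pos hx0)) (ne_of_gt (G_pos hy0)),
      Real.log_mul (ne_of_gt (G_pos hx1)) (ne_of_gt (G_pos hy1))]
    exact (le_div_iff_of_neg (by linarith)).2 hsum
  exact ⟨⟨hz1, hzz⟩, hii, hiii⟩
end
end
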